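/- arXiv:1905.06859 — 11 statements merged into one kernel-verified Lean document; each statement's English description precedes it below -/
import Mathlib

section
/- Let φ : Fin n → ℂ^d be unit vectors such that ⟪φ j, φ i⟫ is a real number for all i and j. Then there exists a unitary operator U on ℂ^d such that, for every j, every coordinate of U (φ j) has imaginary part zero (i.e. U (φ j) lies in the canonical copy of ℝ^d inside ℂ^d). -/
noncomputable section

open Module

/-- If `im ⟪w, v⟫ = 0` for each generator `v`, the same holds on the real span. -/
lemma aux_span_im {d : ℕ} (s : Set (EuclideanSpace ℂ (Fin d)))
    (w : EuclideanSpace ℂ (Fin d)) (h : ∀ v ∈ s, ((inner ℂ w v : ℂ)).im = 0) :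
    ∀ x ∈ Submodule.span ℝ s, ((inner ℂ w x : ℂ)).im = 0 := by
  intro x hx
  let f : EuclideanSpace ℂ (Fin d) →ₗ[ℝ] ℝ :=
    Complex.imLm.comp ((innerSL ℂ w).toLinearMap.restrictScalars ℝ)
  have : Submodule.span ℝ s ≤ LinearMap.ker f := by
    rw [Submodule.span_le]
    intro v hv
    simpa [f] using h v hv
  exact this hx

/-- The real inner product on `ℂ^d` is the real part of the complex one. -/
lemma aux_re_inner {d : ℕ} (x y : EuclideanSpace ℂ (Fin d)) :
    (inner ℝ x y : ℝ) = ((inner ℂ x y : ℂ)).re := by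
  rw [PiLp.inner_apply, PiLp.inner_apply, Complex.re_sum]
  rfl

theorem stmt1 {n d : ℕ} (φ : Fin n → EuclideanSpace ℂ (Fin d))
    (hnorm : ∀ i, ‖φ i‖ = 1)
    (hreal : ∀ i j, ((inner ℂ (φ j) (φ i) : ℂ)).im = 0) :
    ∃ U : EuclideanSpace ℂ (Fin d) ≃ₗᵢ[ℂ] EuclideanSpace ℂ (Fin d),
      ∀ j, ∀ k : Fin d, ((U (φ j)) k).im = 0 := by
  classical
  -- real span of the φ's
  set R : Submodule ℝ (EuclideanSpace ℂ (Fin d)) := Submodule.span ℝ (Set.range φ) with hR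
  -- inner products between elements of R are real
  have hRreal : ∀ x ∈ R, ∀ y ∈ R, ((inner ℂ x y : ℂ)).im = 0 := by
    intro x hx y hy
    refine aux_span_im _ x ?_ y hy
    intro v hv
    obtain ⟨i, rfl⟩ := hv
    have h0 : ((inner ℂ (φ i) x : ℂ)).im = 0 := by
      refine aux_span_im _ (φ i) ?_ x hx
      rintro u ⟨j, rfl⟩
      exact hreal j i
    have hconj : (inner ℂ x (φ i) : ℂ) = starRingEnd ℂ (inner ℂ (φ i) x : ℂ) :=
      (inner_conj_symm _ _).symm
    rw [hconj, Complex.conj_im, h0, neg_zero]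
  haveI : FiniteDimensional ℝ (EuclideanSpace ℂ (Fin d)) := FiniteDimensional.trans ℝ ℂ _
  -- an ℝ-orthonormal basis of R
  let m := finrank ℝ R
  let b0 : OrthonormalBasis (Fin m) ℝ R := stdOrthonormalBasis ℝ R
  let e : Fin m → EuclideanSpace ℂ (Fin d) := fun i => (b0 i : EuclideanSpace ℂ (Fin d))
  have heR : ∀ i, e i ∈ R := fun i => (b0 i).2
  -- e is ℂ-orthonormal
  have he : Orthonormal ℂ e := by
    rw [orthonormal_iff_ite]
    intro i j
    have hre : ((inner ℂ (e i) (e j) : ℂ)).re = if i = j then 1 else 0 := by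
      have h1 := aux_re_inner (e i) (e j)
      have h2 : (inner ℝ (e i) (e j) : ℝ) = (inner ℝ (b0 i) (b0 j) : ℝ) :=
        (Submodule.coe_inner R (b0 i) (b0 j)).symm
      have h3 := orthonormal_iff_ite.mp b0.orthonormal i j
      rw [← h1, h2, h3]
    have him : ((inner ℂ (e i) (e j) : ℂ)).im = 0 := hRreal _ (heR i) _ (heR j)
    apply Complex.ext
    · rw [hre]; split <;> simp
    · rw [him]; split <;> simp
  have he' : Orthonormal ℂ ((↑) : Set.range e → EuclideanSpace ℂ (Fin d)) := he.toSubtypeRange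
  obtain ⟨u, b, hvu, hb⟩ := he'.exists_orthonormalBasis_extension
  -- e spans R over ℝ
  have hspan : R = Submodule.span ℝ (Set.range e) := by
    have htop : Submodule.span ℝ (Set.range b0) = (⊤ : Submodule ℝ R) := b0.toBasis.span_eq
    apply le_antisymm
    · intro x hx
      have hx' : (⟨x, hx⟩ : R) ∈ Submodule.span ℝ (Set.range b0) := by rw [htop]; trivial
      have hmap : x ∈ Submodule.map R.subtype (Submodule.span ℝ (Set.range b0)) :=
        ⟨⟨x, hx⟩, hx', rfl⟩
      rwa [Submodule.map_span, ← Set.range_comp] at hmap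
    · rw [Submodule.span_le]
      rintro x ⟨i, rfl⟩
      exact heR i
  -- each basis vector of b has real inner products with the φ's
  have hkey : ∀ w ∈ u, ∀ j, ((inner ℂ (w : EuclideanSpace ℂ (Fin d)) (φ j) : ℂ)).im = 0 := by
    intro w hw j
    have hφ : φ j ∈ Submodule.span ℝ (Set.range e) := by
      rw [← hspan]; exact Submodule.subset_span ⟨j, rfl⟩
    refine aux_span_im _ w ?_ (φ j) hφ
    rintro v ⟨i, rfl⟩
    have hiu : e i ∈ u := hvu ⟨i, rfl⟩
    have h1 : w = b ⟨w, hw⟩ := by rw [hb]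
    have h2 : e i = b ⟨e i, hiu⟩ := by rw [hb]
    rw [h1, h2]
    have h3 := orthonormal_iff_ite.mp b.orthonormal ⟨w, hw⟩ ⟨e i, hiu⟩
    rw [h3]
    split <;> simp
  -- build the unitary
  have hcard : Fintype.card ↥u = d := by
    have h1 : finrank ℂ (EuclideanSpace ℂ (Fin d)) = u.card :=
      Module.finrank_eq_card_finset_basis b.toBasis
    have h2 : finrank ℂ (EuclideanSpace ℂ (Fin d)) = d := finrank_euclideanSpace_fin
    rw [Fintype.card_coe, ← h1, h2]
  let eqv : ↥u ≃ Fin d := Fintype.equivFinOfCardEq hcard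
  let b' := b.reindex eqv
  refine ⟨b'.repr, ?_⟩
  intro j k
  have hrepr : (b'.repr (φ j)) k = inner ℂ (b' k) (φ j) := b'.repr_apply_apply (φ j) k
  rw [hrepr]
  have hb'k : b' k = ((eqv.symm k : EuclideanSpace ℂ (Fin d))) := by
    rw [OrthonormalBasis.coe_reindex, hb]; rfl
  rw [hb'k]
  exact hkey _ (eqv.symm k).2 j
end
end

section
/- Let φ, ψ : Fin n → ℝ^d. Suppose there exist complex scalars c : Fin n → ℂ with ‖c j‖ = 1 for all j, such that for all i, j one has (⟪φ j, φ i⟫ : ℂ) = conj(c i) · (c j) · (⟪ψ j, ψ i⟫ : ℂ). Then there exist real signs a : Fin n → ℝ with a j = 1 or a j = −1 for every j, such that ⟪φ j, φ i⟫ = (a i) · (a j) · ⟪ψ j, ψ i⟫ for all i, j. -/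
noncomputable section

theorem stmt2 {n d : ℕ} (φ ψ : Fin n → EuclideanSpace ℝ (Fin d))
    (c : Fin n → ℂ) (hc : ∀ j, ‖c j‖ = 1)
    (h : ∀ i j, ((inner ℝ (φ j) (φ i) : ℝ) : ℂ) =
        (starRingEnd ℂ) (c i) * c j * ((inner ℝ (ψ j) (ψ i) : ℝ) : ℂ)) :
    ∃ a : Fin n → ℝ, (∀ j, a j = 1 ∨ a j = -1) ∧
      ∀ i j, (inner ℝ (φ j) (φ i) : ℝ) = a i * a j * (inner ℝ (ψ j) (ψ i) : ℝ) := by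
  classical
  set P : ℂ → Prop := fun z => 0 < z.re ∨ (z.re = 0 ∧ 0 < z.im) with hP
  set a : Fin n → ℝ := fun j => if P (c j) then 1 else -1 with ha
  have hsq : ∀ j, a j * a j = 1 := by
    intro j; by_cases h' : P (c j) <;> simp [ha, h']
  have hnegP : ∀ z : ℂ, z ≠ 0 → (P (-z) ↔ ¬ P z) := by
    intro z hz
    have hz' : z.re ≠ 0 ∨ z.im ≠ 0 := by
      by_contra hcon
      push_neg at hcon
      exact hz (Complex.ext hcon.1 hcon.2)
    simp only [hP, Complex.neg_re, Complex.neg_im]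
    constructor
    · rintro (h1 | ⟨h1, h2⟩) <;> rintro (h3 | ⟨h3, h4⟩) <;> linarith
    · intro h1
      push_neg at h1
      rcases lt_trichotomy z.re 0 with hr | hr | hr
      · left; linarith
      · right
        refine ⟨by linarith, ?_⟩
        have := h1.2 hr
        rcases hz' with h' | h'
        · exact absurd hr h'
        · cases lt_or_gt_of_ne h' with
          | inl h'' => linarith
          | inr h'' => linarith
      · exact absurd hr (not_lt.2 h1.1)
  refine ⟨a, fun j => by by_cases h' : P (c j) <;> simp [ha, h'], ?_⟩
  intro i j
  have hci : c i ≠ 0 := fun h0 => by simpa [h0] using hc i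
  by_cases ht : (inner ℝ (ψ j) (ψ i) : ℝ) = 0
  · have := h i j
    rw [ht] at this
    simp only [Complex.ofReal_zero, mul_zero] at this
    have hφ : (inner ℝ (φ j) (φ i) : ℝ) = 0 := by exact_mod_cast this
    rw [hφ, ht]; ring
  · -- the unit u = conj(c i) * c j is real, hence ±1
    set u : ℂ := (starRingEnd ℂ) (c i) * c j with hu
    have him : u.im = 0 := by
      have h2 := congrArg Complex.im (h i j)
      rw [Complex.ofReal_im, Complex.mul_im] at h2
      simp only [Complex.ofReal_im, Complex.ofReal_re, mul_zero, add_zero,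
        zero_add] at h2
      rcases mul_eq_zero.1 h2.symm with h1 | h1
      · exact h1
      · exact absurd (by exact_mod_cast h1) ht
    have hnorm : ‖u‖ = 1 := by
      rw [hu, norm_mul, RCLike.norm_conj, hc i, hc j, one_mul]
    have hure : |u.re| = 1 := by
      have : u = (u.re : ℂ) := Complex.ext rfl (by simp [him])
      rw [this] at hnorm
      simpa using hnorm
    have hucases : u = 1 ∨ u = -1 := by
      rcases abs_eq (by norm_num : (0:ℝ) ≤ 1) |>.1 hure with h1 | h1
      · left; exact Complex.ext (by simp [h1]) (by simp [him])
      · right; exact Complex.ext (by simp [h1]) (by simp [him])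
    have hmulconj : c i * (starRingEnd ℂ) (c i) = 1 := by
      rw [Complex.mul_conj]
      norm_cast
      rw [Complex.normSq_eq_norm_sq, hc i]
      norm_num
    rcases hucases with h1 | h1
    · -- c j = c i
      have hcc : c j = c i := by
        have h2 := congrArg (fun z => c i * z) h1
        simp only [hu, ← mul_assoc, hmulconj, one_mul, mul_one] at h2
        exact h2
      have haa : a i * a j = 1 := by rw [ha]; simp only [hcc]; exact hsq i
      have h3 := h i j
      rw [show (starRingEnd ℂ) (c i) * c j = u from rfl, h1, one_mul] at h3
      have h4 : (inner ℝ (φ j) (φ i) : ℝ) = (inner ℝ (ψ j) (ψ i) : ℝ) := by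
        exact_mod_cast h3
      rw [h4, haa, one_mul]
    · -- c j = -c i
      have hcc : c j = -c i := by
        have h2 := congrArg (fun z => c i * z) h1
        simp only [hu, ← mul_assoc, hmulconj, one_mul, mul_neg, mul_one] at h2
        exact h2
      have haj : a j = -a i := by
        rw [ha]
        simp only [hcc]
        rcases (hnegP (c i) hci) with ⟨h5, h6⟩
        by_cases h' : P (c i)
        · have h7 : ¬ P (-c i) := fun hp => (h5 hp) h'
          simp [h', h7]
        · simp [h', h6 h']
      have haa : a i * a j = -1 := by
        rw [haj, mul_neg, hsq i]
      have h3 := h i j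
      rw [show (starRingEnd ℂ) (c i) * c j = u from rfl, h1, neg_one_mul] at h3
      have h4 : (inner ℝ (φ j) (φ i) : ℝ) = -(inner ℝ (ψ j) (ψ i) : ℝ) := by
        exact_mod_cast h3
      rw [h4, haa]
      ring
end
end

section
/- Let φ, ψ : Fin n → ℝ^d be sequences of nonzero vectors, and let ι : ℝ^d → ℂ^d be the coordinatewise inclusion. The following are equivalent: (a) there exists an orthogonal operator Q on ℝ^d such that the image under Q of the real span of φ j equals the real span of ψ j for every j; (b) there exists a unitary operator U on ℂ^d such that the image under U of the complex span of ι(φ j) equals the complex span of ι(ψ j) for every j. -/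
noncomputable section

/-- Coordinatewise inclusion of `ℝ^d` into `ℂ^d`. -/
def iotaC {d : ℕ} (v : EuclideanSpace ℝ (Fin d)) : EuclideanSpace ℂ (Fin d) :=
  WithLp.toLp 2 (fun k => (v k : ℂ))

namespace Stmt3Aux

open scoped RealInnerProductSpace

variable {d : ℕ}

lemma iotaC_inner (v w : EuclideanSpace ℝ (Fin d)) :
    (inner ℂ (iotaC v) (iotaC w) : ℂ) = ((inner ℝ v w : ℝ) : ℂ) := by
  rw [PiLp.inner_apply, PiLp.inner_apply]
  push_cast
  refine Finset.sum_congr rfl fun k _ => ?_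
  simp [iotaC, RCLike.inner_apply, Complex.conj_ofReal]

lemma iotaC_eq_zero {v : EuclideanSpace ℝ (Fin d)} (hv : iotaC v = 0) : v = 0 := by
  ext k
  have := congrArg (· k) hv
  simpa [iotaC, Complex.ext_iff] using this

lemma iotaC_smul (t : ℝ) (v : EuclideanSpace ℝ (Fin d)) :
    iotaC (t • v) = (t : ℂ) • iotaC v := by
  ext k
  simp [iotaC]

lemma sign_calc (lam uj A : ℝ) (hlam : lam ≠ 0) (huj : uj ≠ 0) :
    (uj / |uj|) * A * ((lam * uj / |lam * uj|) * (|lam| * A)) = lam * A ^ 2 := by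
  rcases lt_or_gt_of_ne hlam with hl | hl <;> rcases lt_or_gt_of_ne huj with hj | hj
  · rw [abs_of_neg hl, abs_of_neg hj, abs_of_pos (mul_pos_of_neg_of_neg hl hj)]
    field_simp
  · rw [abs_of_neg hl, abs_of_pos hj, abs_of_neg (mul_neg_of_neg_of_pos hl hj)]
    field_simp
  · rw [abs_of_pos hl, abs_of_neg hj, abs_of_neg (mul_neg_of_pos_of_neg hl hj)]
    field_simp
  · rw [abs_of_pos hl, abs_of_pos hj, abs_of_pos (mul_pos hl hj)]
    field_simp

lemma exists_isometry_of_gram {n : ℕ} (a b : Fin n → EuclideanSpace ℝ (Fin d))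
    (h : ∀ j k, ⟪a j, a k⟫ = ⟪b j, b k⟫) :
    ∃ Q : EuclideanSpace ℝ (Fin d) ≃ₗᵢ[ℝ] EuclideanSpace ℝ (Fin d), ∀ j, Q (a j) = b j := by
  classical
  set T : (Fin n → ℝ) →ₗ[ℝ] EuclideanSpace ℝ (Fin d) := Fintype.linearCombination ℝ a with hT
  set T' : (Fin n → ℝ) →ₗ[ℝ] EuclideanSpace ℝ (Fin d) := Fintype.linearCombination ℝ b with hT'
  have hinner : ∀ x y : Fin n → ℝ, ⟪T x, T y⟫ = ⟪T' x, T' y⟫ := by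
    intro x y
    simp only [hT, hT', Fintype.linearCombination_apply, sum_inner, inner_sum,
      real_inner_smul_left, real_inner_smul_right]
    exact Finset.sum_congr rfl fun j _ => Finset.sum_congr rfl fun k _ => by rw [h]
  have hnorm : ∀ x : Fin n → ℝ, ‖T x‖ = ‖T' x‖ := by
    intro x
    rw [← Real.sqrt_sq (norm_nonneg (T x)), ← Real.sqrt_sq (norm_nonneg (T' x)),
      ← real_inner_self_eq_norm_sq, ← real_inner_self_eq_norm_sq, hinner]
  have hker : LinearMap.ker T ≤ LinearMap.ker T' := by
    intro x hx
    simp only [LinearMap.mem_ker] at hx ⊢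
    have := hnorm x
    rw [hx, norm_zero] at this
    exact norm_eq_zero.mp this.symm
  set f : ↥(LinearMap.range T) →ₗ[ℝ] EuclideanSpace ℝ (Fin d) :=
    ((LinearMap.ker T).liftQ T' hker).comp
      (T.quotKerEquivRange.symm : ↥(LinearMap.range T) ≃ₗ[ℝ] _).toLinearMap with hf
  have hfx : ∀ (x : Fin n → ℝ) (hx : T x ∈ LinearMap.range T), f ⟨T x, hx⟩ = T' x := by
    intro x hx
    simp only [hf, LinearMap.comp_apply, LinearEquiv.coe_toLinearMap,
      LinearMap.quotKerEquivRange_symm_apply_image]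
    simp [Submodule.mkQ_apply]
  have hfnorm : ∀ v : ↥(LinearMap.range T), ‖f v‖ = ‖v‖ := by
    rintro ⟨v, x, rfl⟩
    rw [hfx x ⟨x, rfl⟩, Submodule.coe_norm, ← hnorm]
  set fI : ↥(LinearMap.range T) →ₗᵢ[ℝ] EuclideanSpace ℝ (Fin d) := ⟨f, hfnorm⟩ with hfI
  refine ⟨(fI.extend).toLinearIsometryEquiv rfl, fun j => ?_⟩
  have h1 : T (Pi.single j 1) = a j := by
    rw [hT, Fintype.linearCombination_apply_single, one_smul]
  have h2 : T' (Pi.single j 1) = b j := by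
    rw [hT', Fintype.linearCombination_apply_single, one_smul]
  have hmem : a j ∈ LinearMap.range T := ⟨Pi.single j 1, h1⟩
  have : (fI.extend).toLinearIsometryEquiv rfl (a j) = fI.extend (a j) := rfl
  rw [this, show (a j) = ((⟨a j, hmem⟩ : ↥(LinearMap.range T)) : EuclideanSpace ℝ (Fin d)) from rfl,
    LinearIsometry.extend_apply]
  show f ⟨a j, hmem⟩ = b j
  have : (⟨a j, hmem⟩ : ↥(LinearMap.range T)) = ⟨T (Pi.single j 1), LinearMap.mem_range_self T (Pi.single j 1)⟩ := by
    exact Subtype.ext h1.symm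
  rw [this, hfx, h2]

def rePart (z : EuclideanSpace ℂ (Fin d)) : EuclideanSpace ℝ (Fin d) :=
  WithLp.toLp 2 fun k => (z k).re

def imPart (z : EuclideanSpace ℂ (Fin d)) : EuclideanSpace ℝ (Fin d) :=
  WithLp.toLp 2 fun k => (z k).im

lemma exists_unitary_ext (Q : EuclideanSpace ℝ (Fin d) ≃ₗᵢ[ℝ] EuclideanSpace ℝ (Fin d)) :
    ∃ U : EuclideanSpace ℂ (Fin d) ≃ₗᵢ[ℂ] EuclideanSpace ℂ (Fin d),
      ∀ v, U (iotaC v) = iotaC (Q v) := by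
  classical
  set Um : EuclideanSpace ℂ (Fin d) →ₗ[ℂ] EuclideanSpace ℂ (Fin d) :=
    { toFun := fun z => WithLp.toLp 2 fun k => (Q (rePart z) k : ℂ) + (Q (imPart z) k : ℂ) * Complex.I
      map_add' := by
        intro z w
        have hre : rePart (z + w) = rePart z + rePart w := by
          ext i; simp [rePart]
        have him : imPart (z + w) = imPart z + imPart w := by
          ext i; simp [imPart]
        ext k
        simp only [hre, him, map_add]
        show _ = (_ + _ : ℂ)
        simp only [PiLp.add_apply]
        push_cast
        simp only [WithLp.equiv, WithLp.ofLp_toLp]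
        ring
      map_smul' := by
        intro c z
        have hre : rePart (c • z) = c.re • rePart z - c.im • imPart z := by
          ext i
          simp [rePart, imPart, Complex.mul_re]
        have him : imPart (c • z) = c.re • imPart z + c.im • rePart z := by
          ext i
          simp [rePart, imPart, Complex.mul_im, mul_comm]
        ext k
        simp only [hre, him, map_sub, map_add, map_smul, RingHom.id_apply]
        show _ = (c • (_ : EuclideanSpace ℂ (Fin d))) k
        simp only [PiLp.sub_apply, PiLp.add_apply, PiLp.smul_apply, smul_eq_mul]
        rw [show c = (c.re : ℂ) + c.im * Complex.I from (Complex.re_add_im c).symm]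
        push_cast
        ring_nf
        simp [Complex.I_sq]
        ring } with hUm
  have hnorm : ∀ z, ‖Um z‖ = ‖z‖ := by
    intro z
    rw [EuclideanSpace.norm_eq, EuclideanSpace.norm_eq]
    congr 1
    have h1 : ∀ k, ‖Um z k‖ ^ 2 = Q (rePart z) k ^ 2 + Q (imPart z) k ^ 2 := by
      intro k
      rw [← Complex.normSq_eq_norm_sq]
      show Complex.normSq ((Q (rePart z) k : ℂ) + (Q (imPart z) k : ℂ) * Complex.I) = _
      simp [Complex.normSq_apply]
      ring
    have h2 : ∀ k, ‖z k‖ ^ 2 = rePart z k ^ 2 + imPart z k ^ 2 := by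
      intro k
      rw [← Complex.normSq_eq_norm_sq]
      simp [Complex.normSq_apply, rePart, imPart]
      ring
    have hQn : ∀ v : EuclideanSpace ℝ (Fin d), ∑ k, Q v k ^ 2 = ∑ k, v k ^ 2 := by
      intro v
      have := Q.norm_map v
      rw [EuclideanSpace.norm_eq, EuclideanSpace.norm_eq] at this
      have h3 := congrArg (· ^ 2) this
      simp only [Real.sq_sqrt (by positivity : (0:ℝ) ≤ ∑ k, ‖Q v k‖ ^ 2),
        Real.sq_sqrt (by positivity : (0:ℝ) ≤ ∑ k, ‖v k‖ ^ 2)] at h3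
      simpa [Real.norm_eq_abs, sq_abs] using h3
    calc ∑ k, ‖Um z k‖ ^ 2 = ∑ k, (Q (rePart z) k ^ 2 + Q (imPart z) k ^ 2) := by
          simp_rw [h1]
      _ = ∑ k, Q (rePart z) k ^ 2 + ∑ k, Q (imPart z) k ^ 2 := Finset.sum_add_distrib
      _ = ∑ k, rePart z k ^ 2 + ∑ k, imPart z k ^ 2 := by rw [hQn, hQn]
      _ = ∑ k, (rePart z k ^ 2 + imPart z k ^ 2) := Finset.sum_add_distrib.symm
      _ = ∑ k, ‖z k‖ ^ 2 := by simp_rw [h2]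
  set UI : EuclideanSpace ℂ (Fin d) →ₗᵢ[ℂ] EuclideanSpace ℂ (Fin d) := ⟨Um, hnorm⟩
  refine ⟨UI.toLinearIsometryEquiv rfl, fun v => ?_⟩
  show Um (iotaC v) = iotaC (Q v)
  have hre : rePart (iotaC v) = v := by ext i; simp [rePart, iotaC]
  have him : imPart (iotaC v) = 0 := by ext i; simp [imPart, iotaC]
  ext k
  show (Q (rePart (iotaC v)) k : ℂ) + (Q (imPart (iotaC v)) k : ℂ) * Complex.I = _
  rw [hre, him, map_zero]
  simp [iotaC]

end Stmt3Aux

open Stmt3Aux in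
theorem stmt3 {n d : ℕ} (φ ψ : Fin n → EuclideanSpace ℝ (Fin d))
    (hφ : ∀ j, φ j ≠ 0) (hψ : ∀ j, ψ j ≠ 0) :
    (∃ Q : EuclideanSpace ℝ (Fin d) ≃ₗᵢ[ℝ] EuclideanSpace ℝ (Fin d),
        ∀ j, Submodule.map
          (Q.toLinearEquiv : EuclideanSpace ℝ (Fin d) →ₗ[ℝ] EuclideanSpace ℝ (Fin d))
          (ℝ ∙ φ j) = ℝ ∙ ψ j) ↔
    (∃ U : EuclideanSpace ℂ (Fin d) ≃ₗᵢ[ℂ] EuclideanSpace ℂ (Fin d),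
        ∀ j, Submodule.map
          (U.toLinearEquiv : EuclideanSpace ℂ (Fin d) →ₗ[ℂ] EuclideanSpace ℂ (Fin d))
          (ℂ ∙ iotaC (φ j)) = ℂ ∙ iotaC (ψ j)) := by
  classical
  constructor
  · rintro ⟨Q, hQ⟩
    obtain ⟨U, hU⟩ := exists_unitary_ext Q
    refine ⟨U, fun j => ?_⟩
    have hmem : Q (φ j) ∈ (Submodule.span ℝ {ψ j}) := by
      rw [← hQ j]
      exact Submodule.mem_map_of_mem (Submodule.mem_span_singleton_self _)
    obtain ⟨t, ht⟩ := Submodule.mem_span_singleton.mp hmem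
    have ht0 : (t : ℂ) ≠ 0 := by
      intro h
      apply hφ j
      have : t = 0 := by exact_mod_cast h
      subst this
      simp only [zero_smul] at ht
      have := Q.map_eq_zero_iff.mp ht.symm
      exact this
    have hmap : Submodule.map
        (U.toLinearEquiv : EuclideanSpace ℂ (Fin d) →ₗ[ℂ] EuclideanSpace ℂ (Fin d))
        (Submodule.span ℂ {iotaC (φ j)}) = Submodule.span ℂ {U (iotaC (φ j))} := by
      rw [Submodule.map_span, Set.image_singleton]
      rfl
    rw [hmap, hU, ← ht, iotaC_smul]
    exact Submodule.span_singleton_smul_eq (IsUnit.mk0 _ ht0) _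
  · rintro ⟨U, hU⟩
    -- extract phases
    have hch : ∀ j, ∃ c : ℂ, c • iotaC (ψ j) = U (iotaC (φ j)) := by
      intro j
      have : U (iotaC (φ j)) ∈ Submodule.span ℂ {iotaC (ψ j)} := by
        rw [← hU j]
        exact Submodule.mem_map_of_mem (Submodule.mem_span_singleton_self _)
      exact Submodule.mem_span_singleton.mp this
    choose c hc using hch
    have hc0 : ∀ j, c j ≠ 0 := by
      intro j h
      apply hφ j
      have hcj := hc j
      rw [h, zero_smul] at hcj
      exact iotaC_eq_zero (U.map_eq_zero_iff.mp hcj.symm)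
    have key : ∀ j k, ((inner ℝ (φ j) (φ k) : ℝ) : ℂ) =
        (starRingEnd ℂ) (c j) * c k * ((inner ℝ (ψ j) (ψ k) : ℝ) : ℂ) := by
      intro j k
      calc ((inner ℝ (φ j) (φ k) : ℝ) : ℂ) = inner ℂ (iotaC (φ j)) (iotaC (φ k)) :=
            (iotaC_inner _ _).symm
        _ = inner ℂ (U (iotaC (φ j))) (U (iotaC (φ k))) :=
            (U.inner_map_map _ _).symm
        _ = inner ℂ (c j • iotaC (ψ j)) (c k • iotaC (ψ k)) := by rw [hc, hc]
        _ = (starRingEnd ℂ) (c j) * c k * inner ℂ (iotaC (ψ j)) (iotaC (ψ k)) := by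
            rw [inner_smul_left, inner_smul_right]; ring
        _ = (starRingEnd ℂ) (c j) * c k * ((inner ℝ (ψ j) (ψ k) : ℝ) : ℂ) := by
            rw [iotaC_inner]
    -- choose generic real t
    obtain ⟨t, htB⟩ := Infinite.exists_notMem_finset
      (Finset.image (fun j => -(c j).re / (c j).im) Finset.univ)
    set u : Fin n → ℝ := fun j => (c j).re + t * (c j).im with hu
    have hu0 : ∀ j, u j ≠ 0 := by
      intro j h0
      by_cases him : (c j).im = 0
      · apply hc0 j
        have : (c j).re = 0 := by simpa [hu, him] using h0
        exact Complex.ext this him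
      · apply htB
        refine Finset.mem_image.mpr ⟨j, Finset.mem_univ _, ?_⟩
        field_simp
        simp only [hu] at h0
        linarith
    set ε : Fin n → ℝ := fun j => (u j / |u j|) * ‖c j‖ with hε
    have hε0 : ∀ j, ε j ≠ 0 := by
      intro j
      simp only [hε]
      exact mul_ne_zero (div_ne_zero (hu0 j) (abs_ne_zero.mpr (hu0 j)))
        (norm_ne_zero_iff.mpr (hc0 j))
    have hgram : ∀ j k, (inner ℝ (φ j) (φ k) : ℝ) = inner ℝ (ε j • ψ j) (ε k • ψ k) := by
      intro j k
      rw [real_inner_smul_left, real_inner_smul_right]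
      set s : ℝ := (inner ℝ (ψ j) (ψ k) : ℝ) with hs
      set w : ℂ := (starRingEnd ℂ) (c j) * c k with hw
      have hkey := key j k
      rw [← hs, ← hw] at hkey
      have hre : (inner ℝ (φ j) (φ k) : ℝ) = w.re * s := by
        have := congrArg Complex.re hkey
        simpa using this
      have him : w.im * s = 0 := by
        have := congrArg Complex.im hkey
        simpa using this
      by_cases hs0 : s = 0
      · rw [hre, hs0]; ring
      · have hwim : w.im = 0 := by
          rcases mul_eq_zero.mp him with h | h
          · exact h
          · exact absurd h hs0
        have hwre : (w.re : ℂ) = w := by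
          apply Complex.ext <;> simp [hwim]
        -- c k = (w.re / normSq (c j)) * c j
        have hnsq : Complex.normSq (c j) ≠ 0 := (Complex.normSq_pos.mpr (hc0 j)).ne'
        have hck : c k = ((w.re / Complex.normSq (c j) : ℝ) : ℂ) * c j := by
          have h1 : c j * w = (Complex.normSq (c j) : ℂ) * c k := by
            rw [hw, ← Complex.mul_conj]
            ring
          rw [← hwre] at h1
          have h2 : (Complex.normSq (c j) : ℂ) ≠ 0 := by exact_mod_cast hnsq
          field_simp
          rw [mul_comm (c j) _] at h1
          rw [Complex.ofReal_div, div_mul_eq_mul_div, eq_div_iff h2, h1]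
          ring
        set lam : ℝ := w.re / Complex.normSq (c j) with hlam
        have hckre : (c k).re = lam * (c j).re := by
          rw [hck, Complex.mul_re]; simp
        have hckim : (c k).im = lam * (c j).im := by
          rw [hck, Complex.mul_im]; simp
        have huk : u k = lam * u j := by
          simp only [hu, hckre, hckim]; ring
        have hlam0 : lam ≠ 0 := by
          intro h
          exact hu0 k (by rw [huk, h, zero_mul])
        have habsk : ‖c k‖ = |lam| * ‖c j‖ := by
          rw [hck, norm_mul, Complex.norm_real, Real.norm_eq_abs]
        have hwres : w.re = lam * Complex.normSq (c j) := by
          rw [hlam]; field_simp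
        have hsq : ‖c j‖ ^ 2 = Complex.normSq (c j) := Complex.sq_norm _
        have hεjk : ε j * ε k = w.re := by
          have h1 : ε j = (u j / |u j|) * ‖c j‖ := rfl
          have h2 : ε k = (u k / |u k|) * ‖c k‖ := rfl
          rw [h1, h2, huk, habsk, hwres, ← hsq]
          exact sign_calc lam (u j) (‖c j‖) hlam0 (hu0 j)
        rw [hre, ← hεjk]
        ring
    obtain ⟨Q, hQ⟩ := exists_isometry_of_gram φ (fun j => ε j • ψ j) hgram
    refine ⟨Q, fun j => ?_⟩
    have hmap : Submodule.map
        (Q.toLinearEquiv : EuclideanSpace ℝ (Fin d) →ₗ[ℝ] EuclideanSpace ℝ (Fin d))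
        (Submodule.span ℝ {φ j}) = Submodule.span ℝ {Q (φ j)} := by
      rw [Submodule.map_span, Set.image_singleton]
      rfl
    rw [hmap, hQ j]
    exact Submodule.span_singleton_smul_eq (IsUnit.mk0 _ (hε0 j)) _
end
end

section
/- Let n > d ≥ 1 and let ℓ : Fin n → Submodule ℂ (ℂ^d) be a sequence of lines spanning ℂ^d. Let G be a subgroup of the permutations of Fin n that is doubly transitive, and suppose ρ assigns to each σ ∈ G a unitary operator ρ(σ) on ℂ^d such that ρ(1) = id and Submodule.map (ρ σ) (ℓ i) = ℓ (σ i) for all σ ∈ G and i ∈ Fin n. Then ρ is a projective unitary representation: there exists f : G × G → ℂ with ‖f(x,y)‖ = 1 and ρ(x) ∘ ρ(y) = f(x,y) • ρ(x·y) for all x, y ∈ G. -/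
noncomputable section

/-- A set of permutations of `Fin n` is doubly transitive. -/
def DoublyTransitive {n : ℕ} (S : Set (Equiv.Perm (Fin n))) : Prop :=
  ∀ i j k l : Fin n, i ≠ j → k ≠ l → ∃ σ ∈ S, σ i = k ∧ σ j = l

theorem stmt5 {n d : ℕ} (hd : 1 ≤ d) (hdn : d < n)
    (ℓ : Fin n → Submodule ℂ (EuclideanSpace ℂ (Fin d)))
    (hline : ∀ i, Module.finrank ℂ (ℓ i) = 1)
    (hspan : (⨆ i, ℓ i) = ⊤)
    (G : Subgroup (Equiv.Perm (Fin n)))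
    (h2t : DoublyTransitive (G : Set (Equiv.Perm (Fin n))))
    (ρ : G → (EuclideanSpace ℂ (Fin d) ≃ₗᵢ[ℂ] EuclideanSpace ℂ (Fin d)))
    (hρ1 : ρ 1 = LinearIsometryEquiv.refl ℂ (EuclideanSpace ℂ (Fin d)))
    (hρ : ∀ σ : G, ∀ i : Fin n,
      Submodule.map ((ρ σ).toLinearEquiv :
          EuclideanSpace ℂ (Fin d) →ₗ[ℂ] EuclideanSpace ℂ (Fin d)) (ℓ i)
        = ℓ ((σ : Equiv.Perm (Fin n)) i)) :
    ∃ f : G × G → ℂ, ∀ x y : G, ‖f (x, y)‖ = 1 ∧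
      ∀ v : EuclideanSpace ℂ (Fin d), (ρ x) ((ρ y) v) = f (x, y) • (ρ (x * y)) v := by
  classical
  set E := EuclideanSpace ℂ (Fin d)
  -- choose a nonzero vector in each line
  have hv : ∀ i, ∃ w : ℓ i, w ≠ 0 ∧ ∀ u : ℓ i, ∃ c : ℂ, c • w = u := by
    intro i
    exact finrank_eq_one_iff'.mp (hline i)
  choose vv hv0 hvs using hv
  set V : Fin n → E := fun i => (vv i : E) with hV
  have hV0 : ∀ i, V i ≠ 0 := by
    intro i h
    exact hv0 i (Subtype.ext h)
  have hVmem : ∀ i, V i ∈ ℓ i := fun i => (vv i).2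
  -- every element of a line is a multiple of the chosen vector
  have hscalar : ∀ i, ∀ w : E, w ∈ ℓ i → ∃ a : ℂ, w = a • V i := by
    intro i w hw
    obtain ⟨a, ha⟩ := hvs i ⟨w, hw⟩
    exact ⟨a, by simpa [hV] using (congrArg Subtype.val ha).symm⟩
  -- applying ρ σ to a member of ℓ i lands in ℓ (σ i)
  have hmap : ∀ σ : G, ∀ i : Fin n, ∀ w ∈ ℓ i,
      (ρ σ) w ∈ ℓ ((σ : Equiv.Perm (Fin n)) i) := by
    intro σ i w hw
    rw [← hρ σ i]
    exact ⟨w, hw, rfl⟩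
  -- the main claim for a fixed pair x, y
  have main : ∀ x y : G, ∃ c : ℂ, ‖c‖ = 1 ∧
      ∀ v : E, (ρ x) ((ρ y) v) = c • (ρ (x * y)) v := by
    intro x y
    set T : E ≃ₗᵢ[ℂ] E := ((ρ y).trans (ρ x)).trans (ρ (x * y)).symm with hT
    have hTapp : ∀ v, T v = (ρ (x * y)).symm ((ρ x) ((ρ y) v)) := fun v => rfl
    -- T maps each line into itself
    have hTmem : ∀ i, T (V i) ∈ ℓ i := by
      intro i
      have h1 : (ρ y) (V i) ∈ ℓ ((y : Equiv.Perm (Fin n)) i) := hmap y i _ (hVmem i)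
      have h2 : (ρ x) ((ρ y) (V i)) ∈
          ℓ (((x * y : G) : Equiv.Perm (Fin n)) i) := by
        have := hmap x _ _ h1
        simpa [Subgroup.coe_mul, Equiv.Perm.mul_apply] using this
      rw [← hρ (x * y) i] at h2
      obtain ⟨u, hu, huw⟩ := h2
      have : (ρ (x * y)).symm ((ρ x) ((ρ y) (V i))) = u := by
        rw [← huw]
        exact (ρ (x * y)).symm_apply_apply u
      rw [hTapp, this]
      exact hu
    -- eigenvalues
    have hc : ∀ i, ∃ c : ℂ, T (V i) = c • V i := fun i => hscalar i _ (hTmem i)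
    choose c hcspec using hc
    have hcnorm : ∀ i, ‖c i‖ = 1 := by
      intro i
      have h1 : ‖T (V i)‖ = ‖V i‖ := T.norm_map _
      rw [hcspec i, norm_smul] at h1
      have h2 : ‖V i‖ ≠ 0 := norm_ne_zero_iff.mpr (hV0 i)
      field_simp at h1
      exact h1
    -- all eigenvalues coincide
    have hceq : ∀ i j, c i = c j := by
      by_contra hcon
      push_neg at hcon
      obtain ⟨i, j, hij⟩ := hcon
      have hij' : i ≠ j := by rintro rfl; exact hij rfl
      -- ℓ i ⟂ ℓ j
      have horth : inner ℂ (V i) (V j) = (0 : ℂ) := by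
        have h1 : inner ℂ (T (V i)) (T (V j)) = (inner ℂ (V i) (V j) : ℂ) :=
          T.inner_map_map _ _
        rw [hcspec i, hcspec j, inner_smul_left, inner_smul_right] at h1
        by_contra h0
        have h2 : (starRingEnd ℂ) (c i) * c j = 1 := by
          have h1' : ((starRingEnd ℂ) (c i) * c j) * inner ℂ (V i) (V j)
              = 1 * (inner ℂ (V i) (V j) : ℂ) := by
            rw [one_mul, mul_assoc]; exact h1
          exact mul_right_cancel₀ h0 h1' 
        have h3 : (starRingEnd ℂ) (c i) * c i = 1 := by
          rw [mul_comm, Complex.mul_conj]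
          norm_cast
          rw [Complex.normSq_eq_norm_sq]
          have : ‖c i‖ = 1 := hcnorm i
          rw [this]; norm_num
        have h4 : (starRingEnd ℂ) (c i) ≠ 0 := by
          intro h
          simp [h] at h3
        exact hij (mul_left_cancel₀ h4 (h3.trans h2.symm))
      -- propagate orthogonality to all pairs by double transitivity
      have horthall : ∀ k l, k ≠ l → inner ℂ (V k) (V l) = (0 : ℂ) := by
        intro k l hkl
        obtain ⟨σ, hσG, hσi, hσj⟩ := h2t i j k l hij' hkl
        set τ : G := ⟨σ, hσG⟩
        have hk : (ρ τ) (V i) ∈ ℓ k := by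
          have := hmap τ i _ (hVmem i)
          simpa [τ, hσi] using this
        have hl : (ρ τ) (V j) ∈ ℓ l := by
          have := hmap τ j _ (hVmem j)
          simpa [τ, hσj] using this
        obtain ⟨a, ha⟩ := hscalar k _ hk
        obtain ⟨b, hb⟩ := hscalar l _ hl
        have ha0 : a ≠ 0 := by
          intro h
          rw [h, zero_smul] at ha
          exact hV0 i ((ρ τ).map_eq_zero_iff.mp ha)
        have hb0 : b ≠ 0 := by
          intro h
          rw [h, zero_smul] at hb
          exact hV0 j ((ρ τ).map_eq_zero_iff.mp hb)
        have h1 : inner ℂ ((ρ τ) (V i)) ((ρ τ) (V j)) = (inner ℂ (V i) (V j) : ℂ) :=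
          (ρ τ).inner_map_map _ _
        rw [ha, hb, inner_smul_left, inner_smul_right, horth] at h1
        have h2 := (mul_eq_zero.mp h1).resolve_left (by simpa using ha0)
        exact (mul_eq_zero.mp h2).resolve_left hb0
      -- n pairwise orthogonal nonzero vectors in dimension d < n : contradiction
      have hli : LinearIndependent ℂ V :=
        linearIndependent_of_ne_zero_of_inner_eq_zero hV0 horthall
      have hcard : Fintype.card (Fin n) ≤ Module.finrank ℂ E :=
        hli.fintype_card_le_finrank
      rw [Fintype.card_fin] at hcard
      have : Module.finrank ℂ E = d := finrank_euclideanSpace_fin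
      omega
    -- the common eigenvalue
    have hn0 : 0 < n := by omega
    set i0 : Fin n := ⟨0, hn0⟩
    refine ⟨c i0, hcnorm i0, ?_⟩
    -- T = c i0 • id on all of E
    have hker : ∀ v : E, T v = c i0 • v := by
      set L : Submodule ℂ E :=
        LinearMap.ker (T.toLinearEquiv.toLinearMap - c i0 • LinearMap.id) with hL
      have hle : ∀ i, ℓ i ≤ L := by
        intro i w hw
        obtain ⟨a, ha⟩ := hscalar i w hw
        have : T w = c i0 • w := by
          rw [ha, map_smul, hcspec i, hceq i i0, smul_comm]
        simp only [hL, LinearMap.mem_ker, LinearMap.sub_apply, LinearMap.smul_apply,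
          LinearMap.id_apply]
        rw [sub_eq_zero]
        exact this
      have htop : (⊤ : Submodule ℂ E) ≤ L := hspan ▸ iSup_le hle
      intro v
      have hv : v ∈ L := htop Submodule.mem_top
      simp only [hL, LinearMap.mem_ker, LinearMap.sub_apply, LinearMap.smul_apply,
        LinearMap.id_apply] at hv
      rw [sub_eq_zero] at hv
      exact hv
    intro v
    have h1 : (ρ (x * y)) (T v) = (ρ x) ((ρ y) v) := by
      rw [hTapp]
      exact (ρ (x * y)).apply_symm_apply _
    rw [← h1, hker v, map_smul]
  choose f hf1 hf2 using fun p : G × G => main p.1 p.2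
  exact ⟨f, fun x y => ⟨hf1 (x, y), hf2 (x, y)⟩⟩
end
end

section
/- Let ℓ : Fin n → Submodule ℂ (ℂ^d) be a sequence of n > d ≥ 1 lines spanning ℂ^d, and suppose its automorphism group Aut ℓ is triply transitive (for any two triples of pairwise distinct indices there is an automorphism carrying the first triple to the second componentwise). Then: (i) d = 1 or d = n − 1; (ii) there exist unit-norm representatives φ i ∈ ℓ i such that ⟪φ i, φ j⟫ is real for all i, j; and (iii) Aut ℓ consists of all permutations of Fin n. -/
noncomputable section

/-- A permutation `σ` is an automorphism of the sequence of lines `ℓ` if it can be realized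
by a unitary operator on `ℂ^d`. -/
def IsLineAut {n d : ℕ} (ℓ : Fin n → Submodule ℂ (EuclideanSpace ℂ (Fin d)))
    (σ : Equiv.Perm (Fin n)) : Prop :=
  ∃ U : EuclideanSpace ℂ (Fin d) ≃ₗᵢ[ℂ] EuclideanSpace ℂ (Fin d),
    ∀ i, Submodule.map (U.toLinearEquiv : EuclideanSpace ℂ (Fin d) →ₗ[ℂ] EuclideanSpace ℂ (Fin d))
      (ℓ i) = ℓ (σ i)

/-- A set of permutations of `Fin n` is triply transitive. -/
def TriplyTransitive {n : ℕ} (S : Set (Equiv.Perm (Fin n))) : Prop :=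
  ∀ i j k i' j' k' : Fin n, i ≠ j → i ≠ k → j ≠ k → i' ≠ j' → i' ≠ k' → j' ≠ k' →
    ∃ σ ∈ S, σ i = i' ∧ σ j = j' ∧ σ k = k'

open Module Submodule

namespace Stmt6Aux

variable {n d : ℕ}

/-- Abbreviation for the ambient space. -/
abbrev Ed (d : ℕ) := EuclideanSpace ℂ (Fin d)

/-- The linear map sending coefficients to the corresponding linear combination of `ψ`. -/
def lmap (ψ : Fin n → Ed d) : (Fin n → ℂ) →ₗ[ℂ] Ed d where
  toFun c := ∑ i, c i • ψ i
  map_add' a b := by simp [add_smul, Finset.sum_add_distrib]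
  map_smul' r c := by simp [smul_smul, Finset.smul_sum]

lemma lmap_single (ψ : Fin n → Ed d) (i : Fin n) : lmap ψ (Pi.single i 1) = ψ i := by
  simp [lmap, Pi.single_apply, ite_smul]

lemma lmap_inner (ψ ψ' : Fin n → Ed d) (c c' : Fin n → ℂ) :
    (inner ℂ (lmap ψ c) (lmap ψ' c') : ℂ)
      = ∑ i, ∑ j, (starRingEnd ℂ) (c i) * c' j * inner ℂ (ψ i) (ψ' j) := by
  simp only [lmap, LinearMap.coe_mk, AddHom.coe_mk]
  rw [sum_inner]
  refine Finset.sum_congr rfl fun i _ => ?_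
  rw [inner_smul_left, inner_sum, Finset.mul_sum]
  refine Finset.sum_congr rfl fun j _ => ?_
  rw [inner_smul_right]; ring

lemma range_top (ψ : Fin n → Ed d) (hsp : (⨆ i, span ℂ {ψ i}) = ⊤) :
    LinearMap.range (lmap ψ) = ⊤ := by
  rw [eq_top_iff, ← hsp]
  refine iSup_le fun i => ?_
  rw [span_le, Set.singleton_subset_iff]
  exact ⟨Pi.single i 1, lmap_single ψ i⟩

/-- Two spanning families with equal Gram matrices are related by a unitary. -/
lemma exists_unitary (ψ : Fin n → Ed d) (hrange : LinearMap.range (lmap ψ) = ⊤)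
    (σ : Equiv.Perm (Fin n))
    (hgram : ∀ i j, (inner ℂ (ψ (σ i)) (ψ (σ j)) : ℂ) = inner ℂ (ψ i) (ψ j)) :
    ∃ U : Ed d ≃ₗᵢ[ℂ] Ed d, ∀ i, U (ψ i) = ψ (σ i) := by
  set T := lmap (n := n) (d := d) ψ with hT
  set S := lmap (n := n) (d := d) (ψ ∘ σ) with hS
  have key : ∀ c c' : Fin n → ℂ, (inner ℂ (S c) (S c') : ℂ) = inner ℂ (T c) (T c') := by
    intro c c'
    rw [hS, hT, lmap_inner, lmap_inner]
    exact Finset.sum_congr rfl fun i _ => Finset.sum_congr rfl fun j _ => by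
      simp [hgram i j]
  obtain ⟨r, hr⟩ := T.exists_rightInverse_of_surjective hrange
  have hr' : ∀ x, T (r x) = x := fun x => congrFun (congrArg DFunLike.coe hr) x
  set U₀ := S ∘ₗ r with hU₀
  have hinner : ∀ x y, (inner ℂ (U₀ x) (U₀ y) : ℂ) = inner ℂ x y := by
    intro x y
    have := key (r x) (r y)
    simpa [hU₀, hr' x, hr' y] using this
  set Ui := LinearMap.isometryOfInner U₀ hinner with hUi
  refine ⟨Ui.toLinearIsometryEquiv rfl, fun i => ?_⟩
  have hker : ∀ c, T c = 0 → S c = 0 := by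
    intro c hc
    have : (inner ℂ (S c) (S c) : ℂ) = 0 := by rw [key]; simp [hc]
    exact inner_self_eq_zero.mp this
  have h1 : Ui.toLinearIsometryEquiv rfl (ψ i) = U₀ (ψ i) := rfl
  rw [h1]
  have h2 : U₀ (ψ i) = S (r (ψ i)) := rfl
  have h3 : T (r (ψ i) - Pi.single i 1) = 0 := by
    rw [map_sub, hr' (ψ i), hT, lmap_single]; simp
  have h4 := hker _ h3
  rw [map_sub] at h4
  have h5 : S (r (ψ i)) = S (Pi.single i 1) := sub_eq_zero.mp h4
  rw [h2, h5, hS, lmap_single]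
  rfl

/-- Any automorphism acts on unit generators by unimodular phases. -/
lemma aut_phases (ℓ : Fin n → Submodule ℂ (Ed d)) (φ : Fin n → Ed d)
    (hgen : ∀ i, ℓ i = span ℂ {φ i}) (hnorm : ∀ i, ‖φ i‖ = 1)
    (σ : Equiv.Perm (Fin n)) (hσ : IsLineAut ℓ σ) :
    ∃ c : Fin n → ℂ, (∀ i, ‖c i‖ = 1) ∧
      ∀ i j, (inner ℂ (φ i) (φ j) : ℂ)
        = (starRingEnd ℂ) (c i) * c j * inner ℂ (φ (σ i)) (φ (σ j)) := by
  obtain ⟨U, hU⟩ := hσ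
  have hm : ∀ i, U (φ i) ∈ span ℂ {φ (σ i)} := by
    intro i
    rw [← hgen]
    rw [← hU i]
    exact ⟨φ i, by rw [hgen]; exact mem_span_singleton_self _, rfl⟩
  choose c hc using fun i => Submodule.mem_span_singleton.mp (hm i)
  refine ⟨c, fun i => ?_, fun i j => ?_⟩
  · have : ‖c i • φ (σ i)‖ = ‖φ i‖ := by rw [hc i]; exact U.norm_map _
    rwa [norm_smul, hnorm, hnorm, mul_one] at this
  · have h1 : (inner ℂ (U (φ i)) (U (φ j)) : ℂ) = inner ℂ (φ i) (φ j) :=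
      U.inner_map_map _ _
    rw [← h1, ← hc i, ← hc j, inner_smul_left, inner_smul_right]
    ring

/-- Gram rank dichotomy: a spanning equi-inner family with `d < n` forces `d = 1`
or `d = n - 1`. -/
lemma rank_lemma (hd : 1 ≤ d) (hdn : d < n) (ψ : Fin n → Ed d) (γ : ℝ)
    (hnorm : ∀ i, ‖ψ i‖ = 1) (hrange : LinearMap.range (lmap ψ) = ⊤)
    (hγ : ∀ i j, i ≠ j → (inner ℂ (ψ i) (ψ j) : ℂ) = (γ : ℂ)) :
    d = 1 ∨ d = n - 1 := by
  have hn0 : 0 < n := by omega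
  set i₀ : Fin n := ⟨0, hn0⟩ with hi₀
  have hself : ∀ i, (inner ℂ (ψ i) (ψ i) : ℂ) = 1 := by
    intro i; rw [inner_self_eq_norm_sq_to_K, hnorm]; norm_num
  by_cases hγ1 : γ = 1
  · left
    subst hγ1
    have heq : ∀ i j, ψ i = ψ j := by
      intro i j
      rcases eq_or_ne i j with h | h
      · rw [h]
      · have h0 : (inner ℂ (ψ i - ψ j) (ψ i - ψ j) : ℂ) = 0 := by
          rw [inner_sub_sub_self, hself, hself, hγ _ _ h, hγ _ _ (Ne.symm h)]
          norm_num
        have := inner_self_eq_zero.mp h0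
        exact sub_eq_zero.mp this
    have hne : ψ i₀ ≠ 0 := by
      intro h; have := hnorm i₀; rw [h] at this; simp at this
    have htop : span ℂ {ψ i₀} = ⊤ := by
      rw [eq_top_iff, ← hrange]
      rintro x ⟨c, rfl⟩
      simp only [lmap, LinearMap.coe_mk, AddHom.coe_mk]
      refine Submodule.sum_mem _ fun i _ => ?_
      rw [heq i i₀]
      exact Submodule.smul_mem _ _ (mem_span_singleton_self _)
    have := finrank_span_singleton (K := ℂ) hne
    rw [htop, finrank_top, finrank_euclideanSpace_fin] at this
    omega
  · right
    have hγc : (1 - (γ : ℂ)) ≠ 0 := by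
      rw [sub_ne_zero]
      have : (γ:ℂ) ≠ 1 := by exact_mod_cast hγ1
      exact this.symm
    have hker : ∀ c ∈ LinearMap.ker (lmap ψ), ∀ j, c j * (1 - (γ:ℂ)) + γ * ∑ i, c i = 0 := by
      intro c hc j
      have h0 : (inner ℂ (ψ j) (lmap ψ c) : ℂ) = 0 := by
        rw [LinearMap.mem_ker.mp hc]; simp
      have h1 : (inner ℂ (ψ j) (lmap ψ c) : ℂ) = ∑ i, c i * inner ℂ (ψ j) (ψ i) := by
        simp only [lmap, LinearMap.coe_mk, AddHom.coe_mk]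
        rw [inner_sum]
        exact Finset.sum_congr rfl fun i _ => inner_smul_right _ _ _
      have h2 : ∀ i, c i * (inner ℂ (ψ j) (ψ i) : ℂ)
          = c i * γ + (if i = j then c i * (1 - γ) else 0) := by
        intro i
        rcases eq_or_ne i j with h | h
        · subst h; rw [hself]; simp; ring
        · rw [hγ _ _ (Ne.symm h), if_neg h]; ring
      rw [h1] at h0
      rw [Finset.sum_congr rfl fun i _ => h2 i, Finset.sum_add_distrib,
        Finset.sum_ite_eq' Finset.univ j (fun i => c i * (1 - (γ:ℂ)))] at h0
      simp only [Finset.mem_univ, if_true] at h0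
      rw [← Finset.sum_mul] at h0
      linear_combination h0
    have hconst : ∀ c ∈ LinearMap.ker (lmap ψ), ∀ j, c j = c i₀ := by
      intro c hc j
      have h1 := hker c hc j
      have h2 := hker c hc i₀
      have : c j * (1 - (γ:ℂ)) = c i₀ * (1 - (γ:ℂ)) := by linear_combination h1 - h2
      exact mul_right_cancel₀ hγc this
    have hsub : LinearMap.ker (lmap ψ) ≤ span ℂ {(fun _ => 1 : Fin n → ℂ)} := by
      intro c hc
      rw [mem_span_singleton]
      exact ⟨c i₀, by funext j; simp [hconst c hc j]⟩
    have hone : (fun _ => (1:ℂ) : Fin n → ℂ) ≠ 0 := by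
      intro h
      have : (1 : ℂ) = 0 := congrFun h ⟨0, by omega⟩
      simp at this
    have hle : finrank ℂ (LinearMap.ker (lmap ψ)) ≤ 1 := by
      calc finrank ℂ (LinearMap.ker (lmap ψ))
          ≤ finrank ℂ (span ℂ {(fun _ => 1 : Fin n → ℂ)}) := Submodule.finrank_mono hsub
        _ = 1 := finrank_span_singleton (K := ℂ) hone
    have hrn := LinearMap.finrank_range_add_finrank_ker (lmap (n := n) (d := d) ψ)
    rw [hrange, finrank_top, finrank_euclideanSpace_fin, finrank_pi] at hrn
    rw [Fintype.card_fin] at hrn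
    omega

/-- The triple product of a family of vectors. -/
def tripleProd (φ : Fin n → Ed d) (i j k : Fin n) : ℂ :=
  inner ℂ (φ i) (φ j) * inner ℂ (φ j) (φ k) * inner ℂ (φ k) (φ i)

lemma tripleProd_smul (φ : Fin n → Ed d) (z : Fin n → ℂ) (hz : ∀ i, ‖z i‖ = 1) (i j k : Fin n) :
    tripleProd (fun i => z i • φ i) i j k = tripleProd φ i j k := by
  have hu : ∀ i, (starRingEnd ℂ) (z i) * z i = 1 := by
    intro i; rw [Complex.conj_mul', hz]; norm_num
  unfold tripleProd
  simp only [inner_smul_left, inner_smul_right]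
  have h1 : ∀ A B C : ℂ,
      (z j * ((starRingEnd ℂ) (z i) * A)) * (z k * ((starRingEnd ℂ) (z j) * B))
        * (z i * ((starRingEnd ℂ) (z k) * C))
      = ((starRingEnd ℂ) (z i) * z i) * (((starRingEnd ℂ) (z j)) * z j)
        * (((starRingEnd ℂ) (z k)) * z k) * (A * B * C) := by
    intros; ring
  rw [h1, hu, hu, hu]; ring

/-- Endgame: a family of unit generators with constant off-diagonal inner product `γ`
yields all three conclusions. -/
lemma endgame (hd : 1 ≤ d) (hdn : d < n)
    (ℓ : Fin n → Submodule ℂ (Ed d))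
    (hspan : (⨆ i, ℓ i) = ⊤)
    (ψ : Fin n → Ed d) (γ : ℝ)
    (hnorm : ∀ i, ‖ψ i‖ = 1) (hgen : ∀ i, ℓ i = span ℂ {ψ i})
    (hγ : ∀ i j, i ≠ j → (inner ℂ (ψ i) (ψ j) : ℂ) = (γ : ℝ)) :
    (d = 1 ∨ d = n - 1) ∧
    (∃ φ : Fin n → EuclideanSpace ℂ (Fin d), (∀ i, φ i ∈ ℓ i) ∧ (∀ i, ‖φ i‖ = 1) ∧
      ∀ i j, ((inner ℂ (φ i) (φ j) : ℂ)).im = 0) ∧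
    ({σ | IsLineAut ℓ σ} = Set.univ) := by
  have hrange : LinearMap.range (lmap ψ) = ⊤ := by
    refine range_top ψ ?_
    rw [← hspan]
    exact iSup_congr fun i => (hgen i).symm
  refine ⟨rank_lemma hd hdn ψ γ hnorm hrange hγ, ⟨ψ, ?_, hnorm, ?_⟩, ?_⟩
  · intro i; rw [hgen i]; exact mem_span_singleton_self _
  · intro i j
    rcases eq_or_ne i j with h | h
    · subst h; exact inner_self_im (𝕜 := ℂ) _
    · rw [hγ _ _ h]; exact Complex.ofReal_im γ
  · refine Set.eq_univ_of_forall fun σ => ?_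
    have hgram : ∀ i j, (inner ℂ (ψ (σ i)) (ψ (σ j)) : ℂ) = inner ℂ (ψ i) (ψ j) := by
      intro i j
      rcases eq_or_ne i j with h | h
      · subst h
        rw [inner_self_eq_norm_sq_to_K, inner_self_eq_norm_sq_to_K, hnorm, hnorm]
      · rw [hγ _ _ h, hγ _ _ (fun hc => h (σ.injective hc))]
    obtain ⟨U, hU⟩ := exists_unitary ψ hrange σ hgram
    refine ⟨U, fun i => ?_⟩
    rw [hgen i, hgen (σ i), Submodule.map_span, Set.image_singleton]
    congr 1
    rw [show ((U.toLinearEquiv : Ed d →ₗ[ℂ] Ed d) (ψ i)) = U (ψ i) from rfl, hU i]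

end Stmt6Aux

open Stmt6Aux

theorem stmt6 {n d : ℕ} (hd : 1 ≤ d) (hdn : d < n)
    (ℓ : Fin n → Submodule ℂ (EuclideanSpace ℂ (Fin d)))
    (hline : ∀ i, Module.finrank ℂ (ℓ i) = 1)
    (hspan : (⨆ i, ℓ i) = ⊤)
    (h3t : TriplyTransitive {σ | IsLineAut ℓ σ}) :
    (d = 1 ∨ d = n - 1) ∧
    (∃ φ : Fin n → EuclideanSpace ℂ (Fin d), (∀ i, φ i ∈ ℓ i) ∧ (∀ i, ‖φ i‖ = 1) ∧
      ∀ i j, ((inner ℂ (φ i) (φ j) : ℂ)).im = 0) ∧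
    ({σ | IsLineAut ℓ σ} = Set.univ) := by
  classical
  have hn0 : 0 < n := by omega
  -- normalized generators
  have hvex : ∀ i, ∃ v : Ed d, v ∈ ℓ i ∧ v ≠ 0 := by
    intro i
    have hbot : ℓ i ≠ ⊥ := by
      intro h
      have := hline i
      rw [h, finrank_bot] at this
      omega
    obtain ⟨v, hv, hv0⟩ := Submodule.ne_bot_iff _ |>.mp hbot
    exact ⟨v, hv, hv0⟩
  choose v hvmem hvne using hvex
  set φ : Fin n → Ed d := fun i => ((‖v i‖⁻¹ : ℝ) : ℂ) • v i with hφ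
  have hφnorm : ∀ i, ‖φ i‖ = 1 := by
    intro i
    rw [hφ]
    simp only [norm_smul, Complex.norm_real, norm_inv, norm_norm]
    rw [inv_mul_cancel₀ (norm_ne_zero_iff.mpr (hvne i))]
  have hφne : ∀ i, φ i ≠ 0 := by
    intro i h
    have := hφnorm i
    rw [h] at this; simp at this
  have hφmem : ∀ i, φ i ∈ ℓ i := fun i => Submodule.smul_mem _ _ (hvmem i)
  have hgen : ∀ i, ℓ i = span ℂ {φ i} := by
    intro i
    refine (Submodule.eq_of_le_of_finrank_eq ?_ ?_).symm
    · rw [span_le, Set.singleton_subset_iff]; exact hφmem i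
    · rw [finrank_span_singleton (K := ℂ) (hφne i), hline i]
  have hself : ∀ i, (inner ℂ (φ i) (φ i) : ℂ) = 1 := by
    intro i; rw [inner_self_eq_norm_sq_to_K, hφnorm]; norm_num
  by_cases hd1 : d = 1
  · -- trivial case: every line is the whole space
    subst hd1
    have htop : ∀ i, ℓ i = ⊤ := by
      intro i
      refine Submodule.eq_of_le_of_finrank_eq le_top ?_
      rw [hline i, finrank_top, finrank_euclideanSpace_fin]
    set i₀ : Fin n := ⟨0, hn0⟩
    refine endgame hd hdn ℓ hspan (fun _ => φ i₀) 1 (fun _ => hφnorm i₀) ?_ ?_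
    · intro i
      rw [htop i, ← htop i₀, hgen i₀]
    · intro i j _
      rw [hself i₀]; norm_num
  · -- main case: d ≥ 2, hence n ≥ 3
    have hd2 : 2 ≤ d := by omega
    have hn3 : 3 ≤ n := by omega
    set i₀ : Fin n := ⟨0, by omega⟩ with hi₀
    set i₁ : Fin n := ⟨1, by omega⟩ with hi₁
    set i₂ : Fin n := ⟨2, by omega⟩ with hi₂
    have h01 : i₀ ≠ i₁ := by simp [hi₀, hi₁, Fin.ext_iff]
    have h02 : i₀ ≠ i₂ := by simp [hi₀, hi₂, Fin.ext_iff]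
    have h12 : i₁ ≠ i₂ := by simp [hi₁, hi₂, Fin.ext_iff]
    have hthird : ∀ i j : Fin n, ∃ k, k ≠ i ∧ k ≠ j := by
      intro i j
      by_contra h
      push_neg at h
      have hsub : (Finset.univ : Finset (Fin n)) ⊆ {i, j} := by
        intro k _
        rcases eq_or_ne k i with h' | h'
        · simp [h']
        · simp [h k h']
      have := Finset.card_le_card hsub
      have h2 : ({i, j} : Finset (Fin n)).card ≤ 2 :=
        (Finset.card_insert_le _ _).trans (by simp)
      simp [Finset.card_univ] at this
      omega
    -- invariance of pairwise |inner| and triple products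
    have hAinv : ∀ σ : Equiv.Perm (Fin n), IsLineAut ℓ σ → ∀ i j,
        ‖(inner ℂ (φ i) (φ j) : ℂ)‖ = ‖(inner ℂ (φ (σ i)) (φ (σ j)) : ℂ)‖ := by
      intro σ hσ i j
      obtain ⟨c, hc1, hc2⟩ := aut_phases ℓ φ hgen hφnorm σ hσ
      rw [hc2 i j, norm_mul, norm_mul, RCLike.norm_conj, hc1, hc1, one_mul, one_mul]
    have hTinv : ∀ σ : Equiv.Perm (Fin n), IsLineAut ℓ σ → ∀ i j k,
        tripleProd φ i j k = tripleProd φ (σ i) (σ j) (σ k) := by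
      intro σ hσ i j k
      obtain ⟨c, hc1, hc2⟩ := aut_phases ℓ φ hgen hφnorm σ hσ
      have hu : ∀ i, (starRingEnd ℂ) (c i) * c i = 1 := by
        intro i; rw [Complex.conj_mul', hc1]; norm_num
      unfold tripleProd
      rw [hc2 i j, hc2 j k, hc2 k i]
      have h1 : ∀ A B C : ℂ,
          ((starRingEnd ℂ) (c i) * c j * A) * ((starRingEnd ℂ) (c j) * c k * B)
            * ((starRingEnd ℂ) (c k) * c i * C)
          = ((starRingEnd ℂ) (c i) * c i) * (((starRingEnd ℂ) (c j)) * c j)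
            * (((starRingEnd ℂ) (c k)) * c k) * (A * B * C) := by
        intros; ring
      rw [h1, hu, hu, hu]; ring
    have hA : ∀ i j i' j' : Fin n, i ≠ j → i' ≠ j' →
        ‖(inner ℂ (φ i) (φ j) : ℂ)‖ = ‖(inner ℂ (φ i') (φ j') : ℂ)‖ := by
      intro i j i' j' hij hij'
      obtain ⟨k, hki, hkj⟩ := hthird i j
      obtain ⟨k', hki', hkj'⟩ := hthird i' j'
      obtain ⟨σ, hσ, e1, e2, e3⟩ := h3t i j k i' j' k' hij (Ne.symm hki) (Ne.symm hkj)
        hij' (Ne.symm hki') (Ne.symm hkj')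
      have := hAinv σ hσ i j
      rw [e1, e2] at this
      exact this
    have hT : ∀ i j k i' j' k' : Fin n, i ≠ j → i ≠ k → j ≠ k → i' ≠ j' → i' ≠ k' → j' ≠ k' →
        tripleProd φ i j k = tripleProd φ i' j' k' := by
      intro i j k i' j' k' h1 h2 h3 h4 h5 h6
      obtain ⟨σ, hσ, e1, e2, e3⟩ := h3t i j k i' j' k' h1 h2 h3 h4 h5 h6
      have := hTinv σ hσ i j k
      rw [e1, e2, e3] at this
      exact this
    set α : ℝ := ‖(inner ℂ (φ i₀) (φ i₁) : ℂ)‖ with hα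
    have hα0 : α ≠ 0 := by
      intro h0
      have horth : Orthonormal ℂ φ := by
        rw [orthonormal_iff_ite]
        intro i j
        rcases eq_or_ne i j with h | h
        · subst h; rw [if_pos rfl]; exact hself i
        · rw [if_neg h]
          have := hA i j i₀ i₁ h h01
          rw [← hα, h0, norm_eq_zero] at this
          exact this
      have := horth.linearIndependent.fintype_card_le_finrank
      rw [Fintype.card_fin, finrank_euclideanSpace_fin] at this
      omega
    have hαpos : 0 < α := lt_of_le_of_ne (norm_nonneg _) (Ne.symm hα0)
    set c : ℂ := tripleProd φ i₀ i₁ i₂ with hc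
    have hcre : (starRingEnd ℂ) c = c := by
      have h1 : (starRingEnd ℂ) (tripleProd φ i₀ i₁ i₂) = tripleProd φ i₀ i₂ i₁ := by
        unfold tripleProd
        rw [map_mul, map_mul, inner_conj_symm, inner_conj_symm, inner_conj_symm]
        ring
      rw [hc, h1]
      exact hT i₀ i₂ i₁ i₀ i₁ i₂ h02 h01 (Ne.symm h12) h01 h02 h12
    have hcr : ((c.re : ℝ) : ℂ) = c := Complex.conj_eq_iff_re.mp hcre
    have hcnorm : ‖c‖ = α ^ 3 := by
      rw [hc]
      unfold tripleProd
      rw [norm_mul, norm_mul, ← hα, hA i₁ i₂ i₀ i₁ h12 h01, hA i₂ i₀ i₀ i₁ (Ne.symm h02) h01,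
        ← hα]
      ring
    -- phase adjustment
    set w : Fin n → ℂ := fun i => inner ℂ (φ i₀) (φ i) with hw
    have hwnorm : ∀ i, i ≠ i₀ → ‖w i‖ = α := by
      intro i hi
      exact hA i₀ i i₀ i₁ (Ne.symm hi) h01
    have hwne : ∀ i, i ≠ i₀ → w i ≠ 0 := by
      intro i hi h0
      apply hα0
      rw [← hwnorm i hi, h0, norm_zero]
    set z : Fin n → ℂ := fun i => if i = i₀ then 1 else (α : ℂ) / w i with hz
    have hz1 : ∀ i, ‖z i‖ = 1 := by
      intro i
      simp only [hz]
      rcases eq_or_ne i i₀ with h | h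
      · simp [h]
      · rw [if_neg h, norm_div, Complex.norm_real, Real.norm_eq_abs, abs_of_nonneg hαpos.le, hwnorm i h,
          div_self hα0]
    set ψ : Fin n → Ed d := fun i => z i • φ i with hψ
    have hψnorm : ∀ i, ‖ψ i‖ = 1 := by
      intro i; simp only [hψ, norm_smul, hz1, hφnorm, one_mul]
    have hψgen : ∀ i, ℓ i = span ℂ {ψ i} := by
      intro i
      simp only [hψ]
      rw [hgen i]
      have hzu : IsUnit (z i) := isUnit_iff_ne_zero.mpr (by
        intro h0; have := hz1 i; rw [h0, norm_zero] at this; norm_num at this)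
      exact (Submodule.span_singleton_smul_eq hzu _).symm
    have hψ0 : ψ i₀ = φ i₀ := by simp [hψ, hz]
    have hψ0i : ∀ i, i ≠ i₀ → (inner ℂ (ψ i₀) (ψ i) : ℂ) = (α : ℂ) := by
      intro i hi
      rw [hψ0]
      have hwi : (inner ℂ (φ i₀) (φ i) : ℂ) = w i := rfl
      simp only [hψ, inner_smul_right, hz, if_neg hi, hwi]
      rw [div_mul_cancel₀ _ (hwne i hi)]
    have hψi0 : ∀ i, i ≠ i₀ → (inner ℂ (ψ i) (ψ i₀) : ℂ) = (α : ℂ) := by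
      intro i hi
      rw [← inner_conj_symm, hψ0i i hi, Complex.conj_ofReal]
    set β : ℝ := c.re / α ^ 2 with hβ
    have hψij : ∀ i j, i ≠ i₀ → j ≠ i₀ → i ≠ j → (inner ℂ (ψ i) (ψ j) : ℂ) = (β : ℂ) := by
      intro i j hi hj hij
      have htp : tripleProd ψ i j i₀ = c := by
        have : tripleProd ψ i j i₀ = tripleProd (fun i => z i • φ i) i j i₀ := rfl
        rw [this, tripleProd_smul φ z hz1 i j i₀, hc]
        exact hT i j i₀ i₀ i₁ i₂ hij hi hj h01 h02 h12
      have hexp : tripleProd ψ i j i₀ = (inner ℂ (ψ i) (ψ j) : ℂ) * (α : ℂ) * (α : ℂ) := by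
        unfold tripleProd
        rw [hψi0 j hj, hψ0i i hi]
      have hαc : ((α : ℝ) : ℂ) ≠ 0 := by exact_mod_cast hα0
      have : (inner ℂ (ψ i) (ψ j) : ℂ) * (α : ℂ) * (α : ℂ) = c := by rw [← hexp, htp]
      rw [hβ]
      push_cast
      rw [hcr]
      field_simp
      linear_combination this
    have hβabs : |β| = α := by
      have h1 : |c.re| = α ^ 3 := by
        rw [← Real.norm_eq_abs, ← Complex.norm_real, hcr, hcnorm]
      rw [hβ, abs_div, h1, abs_pow, abs_of_nonneg hαpos.le]
      field_simp
    have hβcase : β = α ∨ β = -α := abs_eq hαpos.le |>.mp hβabs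
    rcases hβcase with hβα | hβα
    · -- all off-diagonal inner products equal α
      refine endgame hd hdn ℓ hspan ψ α hψnorm hψgen ?_
      intro i j hij
      rcases eq_or_ne i i₀ with h | h
      · subst h; exact hψ0i j (Ne.symm hij)
      · rcases eq_or_ne j i₀ with h' | h'
        · subst h'; exact hψi0 i h
        · rw [hψij i j h h' hij, hβα]
    · -- flip signs away from i₀ to make all off-diagonal inner products equal -α
      set ψ' : Fin n → Ed d := fun i => if i = i₀ then ψ i₀ else -ψ i with hψ'
      have hψ'norm : ∀ i, ‖ψ' i‖ = 1 := by
        intro i; simp only [hψ']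
        rcases eq_or_ne i i₀ with h | h
        · rw [if_pos h]; exact hψnorm i₀
        · rw [if_neg h, norm_neg]; exact hψnorm i
      have hψ'gen : ∀ i, ℓ i = span ℂ {ψ' i} := by
        intro i
        simp only [hψ']
        rcases eq_or_ne i i₀ with h | h
        · rw [if_pos h, h]; exact hψgen i₀
        · rw [if_neg h, hψgen i]
          have : -ψ i = (-1 : ℂ) • ψ i := by simp
          rw [this, Submodule.span_singleton_smul_eq (by simp : IsUnit (-1 : ℂ)) _]
      refine endgame hd hdn ℓ hspan ψ' (-α) hψ'norm hψ'gen ?_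
      intro i j hij
      simp only [hψ']
      rcases eq_or_ne i i₀ with h | h
      · subst h
        rw [if_pos rfl, if_neg (Ne.symm hij), inner_neg_right, hψ0i j (Ne.symm hij)]
        push_cast; ring
      · rcases eq_or_ne j i₀ with h' | h'
        · subst h'
          rw [if_neg h, if_pos rfl, inner_neg_left, hψi0 i h]
          push_cast; ring
        · rw [if_neg h, if_neg h', inner_neg_left, inner_neg_right, neg_neg,
            hψij i j h h' hij, hβα]
end
end

section
/- In the radicalization setting, the left-translation action of G̃* on the coset space G̃*/G̃₀* is doubly transitive, and the normalizer of H in G̃* equals G̃₀*. -/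
noncomputable section

/-- The subgroup of `r`-th roots of unity in `ℂˣ`. -/
def rou (r : ℕ) : Subgroup ℂˣ where
  carrier := {z | z ^ r = 1}
  one_mem' := one_pow r
  mul_mem' := by
    intro a b ha hb
    simp only [Set.mem_setOf_eq] at *
    rw [mul_pow, ha, hb, one_mul]
  inv_mem' := by
    intro a ha
    simp only [Set.mem_setOf_eq] at *
    rw [inv_pow, ha, inv_one]

/-- The left-translation action of `G` on the cosets `G ⧸ K` is doubly transitive. -/
def DTCosets {G : Type*} [Group G] (K : Subgroup G) : Prop :=
  ∀ a b c e : G ⧸ K, a ≠ b → c ≠ e → ∃ g : G, g • a = c ∧ g • b = e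

/-- The double coset `H b H`, as a set. -/
def dcoset {G : Type*} [Group G] (H : Subgroup G) (b : G) : Set G :=
  {g | ∃ h₁ ∈ H, ∃ h₂ ∈ H, g = h₁ * b * h₂}

/-- `b` is a key for the pair `(G, H)`. -/
def IsKey {G : Type*} [Group G] (H : Subgroup G) (b : G) : Prop :=
  b ∉ (Subgroup.normalizer (H : Set G)) ∧
  DTCosets (Subgroup.normalizer (H : Set G)) ∧
  (∀ a ∈ (Subgroup.normalizer (H : Set G)), ∀ a' ∈ (Subgroup.normalizer (H : Set G)), a * a' * a⁻¹ * a'⁻¹ ∈ H) ∧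
  dcoset H b = dcoset H b⁻¹ ∧
  (∀ a ∈ (Subgroup.normalizer (H : Set G)), a * b * a⁻¹ ∈ dcoset H b) ∧
  (∀ a ∈ (Subgroup.normalizer (H : Set G)), a * b ∈ dcoset H b → a ∈ H)

/-- `(G, H)` is a Higman pair: `H` is a proper subgroup and there exists a key. -/
def IsHigmanPair {G : Type*} [Group G] (H : Subgroup G) : Prop :=
  H ≠ ⊤ ∧ ∃ b : G, IsKey H b

variable {Gs : Type*} [Group Gs]

/-- The subgroup `G̃₀* = G₀* × μ_r` of `G̃* = G* × μ_r`. -/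
def radTilde (G₀ : Subgroup Gs) (r : ℕ) : Subgroup (Gs × rou r) :=
  G₀.prod ⊤

/-- The character `α̃(x, z) = α(x) · z` on `G̃₀* = G₀* × μ_r`. -/
def alphaTilde (G₀ : Subgroup Gs) (α : G₀ →* ℂˣ) (r : ℕ) :
    ↥(radTilde G₀ r) →* ℂˣ where
  toFun p := α ⟨p.1.1, p.2.1⟩ * (p.1.2 : ℂˣ)
  map_one' := by
    show α ⟨1, _⟩ * _ = 1
    rw [show (⟨1, (radTilde G₀ r).one_mem.1⟩ : G₀) = 1 from rfl, map_one, one_mul]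
    rfl
  map_mul' p q := by
    obtain ⟨⟨a, z⟩, ha, -⟩ := p
    obtain ⟨⟨b, w⟩, hb, -⟩ := q
    show α ⟨a * b, mul_mem ha hb⟩ * ((z * w : rou r) : ℂˣ)
      = (α ⟨a, ha⟩ * z) * (α ⟨b, hb⟩ * w)
    rw [show (⟨a * b, mul_mem ha hb⟩ : G₀) = ⟨a, ha⟩ * ⟨b, hb⟩ from rfl, map_mul]
    push_cast
    exact mul_mul_mul_comm _ _ _ _

/-- The subgroup `H = ker α̃` of `G̃* = G* × μ_r`; the pair `(G* × μ_r, H)` is the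
radicalization of `(G*, G₀*, α)`. -/
def radH (G₀ : Subgroup Gs) (α : G₀ →* ℂˣ) (r : ℕ) : Subgroup (Gs × rou r) :=
  ((alphaTilde G₀ α r).ker).map (radTilde G₀ r).subtype

namespace StmtAux

lemma mem_radTilde_iff (G₀ : Subgroup Gs) (r : ℕ) (p : Gs × rou r) :
    p ∈ radTilde G₀ r ↔ p.1 ∈ G₀ := by
  simp [radTilde, Subgroup.mem_prod]

lemma mk_eq_mk (G₀ : Subgroup Gs) (r : ℕ) (p q : Gs × rou r) :
    (QuotientGroup.mk p : _ ⧸ radTilde G₀ r) = QuotientGroup.mk q ↔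
      (QuotientGroup.mk p.1 : Gs ⧸ G₀) = QuotientGroup.mk q.1 := by
  rw [QuotientGroup.eq, QuotientGroup.eq, mem_radTilde_iff]
  rfl

lemma dt_radTilde (G₀ : Subgroup Gs) (hdt : DTCosets G₀) (r : ℕ) :
    DTCosets (radTilde G₀ r) := by
  intro a b c e hab hce
  obtain ⟨pa, rfl⟩ := QuotientGroup.mk_surjective a
  obtain ⟨pb, rfl⟩ := QuotientGroup.mk_surjective b
  obtain ⟨pc, rfl⟩ := QuotientGroup.mk_surjective c
  obtain ⟨pe, rfl⟩ := QuotientGroup.mk_surjective e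
  have hab' : (QuotientGroup.mk pa.1 : Gs ⧸ G₀) ≠ QuotientGroup.mk pb.1 :=
    fun h => hab ((mk_eq_mk G₀ r pa pb).mpr h)
  have hce' : (QuotientGroup.mk pc.1 : Gs ⧸ G₀) ≠ QuotientGroup.mk pe.1 :=
    fun h => hce ((mk_eq_mk G₀ r pc pe).mpr h)
  obtain ⟨g, hg1, hg2⟩ := hdt _ _ _ _ hab' hce'
  refine ⟨(g, 1), ?_, ?_⟩
  · show (QuotientGroup.mk ((g, 1) * pa) : _ ⧸ radTilde G₀ r) = QuotientGroup.mk pc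
    rw [mk_eq_mk]
    exact hg1
  · show (QuotientGroup.mk ((g, 1) * pb) : _ ⧸ radTilde G₀ r) = QuotientGroup.mk pe
    rw [mk_eq_mk]
    exact hg2

lemma mem_radH_iff (G₀ : Subgroup Gs) (α : G₀ →* ℂˣ) (r : ℕ) (p : Gs × rou r) :
    p ∈ radH G₀ α r ↔ ∃ h : p.1 ∈ G₀, α ⟨p.1, h⟩ * (p.2 : ℂˣ) = 1 := by
  rw [radH, Subgroup.mem_map]
  constructor
  · rintro ⟨⟨q, hq⟩, hker, rfl⟩
    exact ⟨hq.1, hker⟩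
  · rintro ⟨hx, heq⟩
    exact ⟨⟨p, Subgroup.mem_prod.mpr ⟨hx, trivial⟩⟩, heq, rfl⟩

lemma normalizer_eq_self (G₀ : Subgroup Gs) (hidx : 3 ≤ G₀.index)
    (hdt : DTCosets G₀) : Subgroup.normalizer (G₀ : Set Gs) = G₀ := by
  refine le_antisymm ?_ Subgroup.le_normalizer
  intro g hg
  by_contra hgG
  have h1g : (QuotientGroup.mk 1 : Gs ⧸ G₀) ≠ QuotientGroup.mk g := by
    rw [Ne, QuotientGroup.eq]
    simpa using hgG
  obtain ⟨c, hc1, hcg⟩ : ∃ c : Gs ⧸ G₀,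
      c ≠ QuotientGroup.mk 1 ∧ c ≠ QuotientGroup.mk g := by
    by_contra hcon
    push_neg at hcon
    have hsurj : Function.Surjective
        (fun i : Fin 2 => if i = 0 then (QuotientGroup.mk 1 : Gs ⧸ G₀)
          else QuotientGroup.mk g) := by
      intro c
      by_cases h : c = QuotientGroup.mk 1
      · exact ⟨0, by simp [h]⟩
      · exact ⟨1, by simp [(hcon c h)]⟩
    have := Nat.card_le_card_of_surjective _ hsurj
    simp only [Nat.card_eq_fintype_card, Fintype.card_fin] at this
    have : G₀.index ≤ 2 := this
    omega
  obtain ⟨k, hk1, hkg⟩ := hdt _ _ _ _ h1g hc1.symm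
  have hkG₀ : k ∈ G₀ := by
    have : (QuotientGroup.mk (k * 1) : Gs ⧸ G₀) = QuotientGroup.mk 1 := hk1
    rw [QuotientGroup.eq] at this
    simpa using inv_mem this
  have hfix : (QuotientGroup.mk (k * g) : Gs ⧸ G₀) = QuotientGroup.mk g := by
    rw [QuotientGroup.eq]
    have : g⁻¹ * k⁻¹ * (g⁻¹)⁻¹ ∈ G₀ :=
      (Subgroup.mem_normalizer_iff.mp (inv_mem hg) k⁻¹).mp (inv_mem hkG₀)
    rw [inv_inv] at this
    simpa [mul_assoc] using this
  have : (QuotientGroup.mk g : Gs ⧸ G₀) = c := by rw [← hkg]; exact hfix.symm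
  exact hcg this.symm

end StmtAux

/-- Lemma 5.2: in the radicalization setting, `G̃*` acts doubly transitively on
`G̃*/G̃₀*` and the normalizer of `H` in `G̃*` is `G̃₀*`. -/
theorem stmt7 {Gs : Type*} [Group Gs] [Finite Gs] (G₀ : Subgroup Gs)
    (hidx : 3 ≤ G₀.index) (hdt : DTCosets G₀) (α : ↥G₀ →* ℂˣ) :
    DTCosets (radTilde G₀ (2 * Nat.card α.range)) ∧
    Subgroup.normalizer ((radH G₀ α (2 * Nat.card α.range)) : Set (Gs × rou (2 * Nat.card α.range)))
      = radTilde G₀ (2 * Nat.card α.range) := by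
  set r := 2 * Nat.card α.range with hr
  have hrange : ∀ x : G₀, (α x : ℂˣ) ∈ rou r := by
    intro x
    have hfin : Finite α.range := Set.Finite.to_subtype (Set.finite_range α)
    have : (⟨α x, ⟨x, rfl⟩⟩ : α.range) ^ Nat.card α.range = 1 := pow_card_eq_one'
    have h1 : (α x : ℂˣ) ^ Nat.card α.range = 1 := by
      have := congrArg (Subtype.val) this
      push_cast at this
      simpa using this
    show (α x : ℂˣ) ^ r = 1
    rw [hr, mul_comm, pow_mul, h1, one_pow]
  refine ⟨StmtAux.dt_radTilde G₀ hdt r, ?_⟩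
  have hnorm := StmtAux.normalizer_eq_self G₀ hidx hdt
  refine le_antisymm ?_ ?_
  · -- normalizer ≤ radTilde
    intro p hp
    rw [StmtAux.mem_radTilde_iff]
    rw [Subgroup.mem_normalizer_iff] at hp
    rw [← hnorm, Subgroup.mem_normalizer_iff]
    intro x
    constructor
    · intro hx
      have hmem : (x, ⟨(α ⟨x, hx⟩)⁻¹, inv_mem (hrange _)⟩) ∈ radH G₀ α r :=
        (StmtAux.mem_radH_iff G₀ α r _).mpr ⟨hx, mul_inv_cancel _⟩
      have := (hp _).mp hmem
      obtain ⟨h1, -⟩ := (StmtAux.mem_radH_iff G₀ α r _).mp this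
      simpa using h1
    · intro hx
      set y := p.1 * x * p.1⁻¹ with hy
      have hmem : (y, ⟨(α ⟨y, hx⟩)⁻¹, inv_mem (hrange _)⟩) ∈ radH G₀ α r :=
        (StmtAux.mem_radH_iff G₀ α r _).mpr ⟨hx, mul_inv_cancel _⟩
      set h := ((y, ⟨(α ⟨y, hx⟩)⁻¹, inv_mem (hrange _)⟩) : Gs × rou r)
      have hconj : p * (p⁻¹ * h * p) * p⁻¹ = h := by group
      have h2 : p⁻¹ * h * p ∈ radH G₀ α r := by
        have := (hp (p⁻¹ * h * p)).mpr
        rw [hconj] at this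
        exact this hmem
      obtain ⟨h1, -⟩ := (StmtAux.mem_radH_iff G₀ α r _).mp h2
      have : (p⁻¹ * h * p).1 = x := by
        show p.1⁻¹ * y * p.1 = x
        rw [hy]; group
      rwa [this] at h1
  · -- radTilde ≤ normalizer
    intro p hp
    rw [StmtAux.mem_radTilde_iff] at hp
    rw [Subgroup.mem_normalizer_iff]
    intro h
    rw [StmtAux.mem_radH_iff, StmtAux.mem_radH_iff]
    constructor
    · rintro ⟨hx, heq⟩
      refine ⟨?_, ?_⟩
      · show p.1 * h.1 * p.1⁻¹ ∈ G₀
        exact mul_mem (mul_mem hp hx) (inv_mem hp)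
      · show α ⟨p.1 * h.1 * p.1⁻¹, _⟩ * ((p.2 * h.2 * p.2⁻¹ : rou r) : ℂˣ) = 1
        have hsub : (⟨p.1 * h.1 * p.1⁻¹, mul_mem (mul_mem hp hx) (inv_mem hp)⟩ : G₀)
            = ⟨p.1, hp⟩ * ⟨h.1, hx⟩ * ⟨p.1, hp⟩⁻¹ := rfl
        rw [hsub, map_mul, map_mul, map_inv]
        push_cast
        rw [show α ⟨p.1, hp⟩ * α ⟨h.1, hx⟩ * (α ⟨p.1, hp⟩)⁻¹ = α ⟨h.1, hx⟩ by rw [mul_right_comm]; simp]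
        rw [show (p.2 : ℂˣ) * h.2 * (p.2 : ℂˣ)⁻¹ = h.2 by rw [mul_right_comm]; simp]
        exact heq
    · rintro ⟨hx, heq⟩
      have hx' : h.1 ∈ G₀ := by
        have : p.1 * h.1 * p.1⁻¹ ∈ G₀ := hx
        have := mul_mem (mul_mem (inv_mem hp) this) hp
        simpa [mul_assoc] using this
      refine ⟨hx', ?_⟩
      have heq' : α ⟨(p * h * p⁻¹).1, hx⟩ * (((p * h * p⁻¹).2 : rou r) : ℂˣ) = 1 := heq
      have hsub : (⟨(p * h * p⁻¹).1, hx⟩ : G₀)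
          = ⟨p.1, hp⟩ * ⟨h.1, hx'⟩ * ⟨p.1, hp⟩⁻¹ := rfl
      rw [hsub, map_mul, map_mul, map_inv] at heq'
      have h2 : ((p * h * p⁻¹).2 : ℂˣ) = h.2 := by
        show (p.2 : ℂˣ) * h.2 * (p.2 : ℂˣ)⁻¹ = h.2
        rw [mul_right_comm]; simp
      rw [h2] at heq'
      rw [show α ⟨p.1, hp⟩ * α ⟨h.1, hx'⟩ * (α ⟨p.1, hp⟩)⁻¹ = α ⟨h.1, hx'⟩ by rw [mul_right_comm]; simp] at heq'
      exact heq'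
end
end

section
/- In the radicalization setting, assume (G̃*, H) is a Higman pair. Let x ∈ G* with x ∉ G₀*, let ξ, η ∈ G₀* satisfy x⁻¹ = ξ·x·η, and let z ∈ μ_r satisfy z² = α(ξ·η). Then b = (x, z) is a key for (G̃*, H): b ∉ G̃₀*, HbH = Hb⁻¹H as subsets of G̃*, a·b·a⁻¹ ∈ HbH for every a ∈ G̃₀*, and every a ∈ G̃₀* with a·b ∈ HbH lies in H. -/
noncomputable section

variable {Gs : Type*} [Group Gs]

section AuxLemmas

variable {G₀ : Subgroup Gs} {α : ↥G₀ →* ℂˣ} {r : ℕ}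

lemma aux_mem_radH {p : Gs × rou r} :
    p ∈ radH G₀ α r ↔ ∃ h : p.1 ∈ G₀, α ⟨p.1, h⟩ * (p.2 : ℂˣ) = 1 := by
  constructor
  · rintro ⟨⟨q, hq⟩, hker, rfl⟩
    exact ⟨hq.1, hker⟩
  · rintro ⟨h, hval⟩
    exact ⟨⟨p, h, trivial⟩, hval, rfl⟩

lemma aux_hmem (hr : ∀ g : ↥G₀, (α g : ℂˣ) ∈ rou r) (g : ↥G₀) :
    ((g : Gs), (⟨(α g)⁻¹, (rou r).inv_mem (hr g)⟩ : rou r)) ∈ radH G₀ α r := by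
  rw [aux_mem_radH]
  refine ⟨g.2, ?_⟩
  show α ⟨(g : Gs), g.2⟩ * (α g)⁻¹ = 1
  rw [Subtype.coe_eta, mul_inv_cancel]

lemma aux_mem_dcoset (hr : ∀ g : ↥G₀, (α g : ℂˣ) ∈ rou r) {b g : Gs × rou r} :
    g ∈ dcoset (radH G₀ α r) b ↔
      ∃ c d : ↥G₀, g.1 = (c : Gs) * b.1 * (d : Gs) ∧
        (g.2 : ℂˣ) = (α c)⁻¹ * (b.2 : ℂˣ) * (α d)⁻¹ := by
  constructor
  · rintro ⟨h₁, hh₁, h₂, hh₂, rfl⟩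
    rw [aux_mem_radH] at hh₁ hh₂
    obtain ⟨m₁, e₁⟩ := hh₁
    obtain ⟨m₂, e₂⟩ := hh₂
    refine ⟨⟨h₁.1, m₁⟩, ⟨h₂.1, m₂⟩, rfl, ?_⟩
    have v₁ : (h₁.2 : ℂˣ) = (α ⟨h₁.1, m₁⟩)⁻¹ := by
      rw [eq_inv_iff_mul_eq_one, mul_comm]; exact e₁
    have v₂ : (h₂.2 : ℂˣ) = (α ⟨h₂.1, m₂⟩)⁻¹ := by
      rw [eq_inv_iff_mul_eq_one, mul_comm]; exact e₂
    show ((h₁.2 * b.2 * h₂.2 : rou r) : ℂˣ) = _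
    push_cast
    rw [v₁, v₂]
  · rintro ⟨c, d, h1, h2⟩
    refine ⟨((c : Gs), ⟨(α c)⁻¹, (rou r).inv_mem (hr c)⟩), aux_hmem hr c,
      ((d : Gs), ⟨(α d)⁻¹, (rou r).inv_mem (hr d)⟩), aux_hmem hr d, ?_⟩
    refine Prod.ext h1 (Subtype.ext ?_)
    show (g.2 : ℂˣ) = (α c)⁻¹ * (b.2 : ℂˣ) * (α d)⁻¹
    exact h2

lemma aux_le_normalizer (hr : ∀ g : ↥G₀, (α g : ℂˣ) ∈ rou r) :
    radTilde G₀ r ≤ Subgroup.normalizer (radH G₀ α r : Set (Gs × rou r)) := by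
  have key : ∀ a ∈ radTilde G₀ r, ∀ h ∈ radH G₀ α r,
      a * h * a⁻¹ ∈ radH G₀ α r := by
    intro a ha h hh
    rw [aux_mem_radH] at hh ⊢
    obtain ⟨hg, hval⟩ := hh
    have m1 : (a * h * a⁻¹).1 ∈ G₀ := mul_mem (mul_mem ha.1 hg) (inv_mem ha.1)
    refine ⟨m1, ?_⟩
    have e1 : (⟨(a * h * a⁻¹).1, m1⟩ : ↥G₀)
        = ⟨a.1, ha.1⟩ * ⟨h.1, hg⟩ * (⟨a.1, ha.1⟩ : ↥G₀)⁻¹ := by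
      apply Subtype.ext
      rfl
    rw [e1, map_mul, map_mul, map_inv]
    have e2 : ((a * h * a⁻¹).2 : ℂˣ) = (a.2 : ℂˣ) * (h.2 : ℂˣ) * (a.2 : ℂˣ)⁻¹ := by
      show ((a.2 * h.2 * a.2⁻¹ : rou r) : ℂˣ) = _
      push_cast
      rfl
    rw [e2]
    have : ∀ u w : ℂˣ, u * w * u⁻¹ = w := fun u w => by
      rw [mul_comm u w, mul_inv_cancel_right]
    rw [this, this]
    exact hval
  intro a ha
  rw [Subgroup.mem_normalizer_iff]
  intro h
  constructor
  · intro hh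
    exact key a ha h hh
  · intro hh
    have := key a⁻¹ (inv_mem ha) _ hh
    simpa [mul_assoc] using this

lemma aux_dcoset_symm {G : Type*} [Group G] {H : Subgroup G} {b : G}
    (hb : b⁻¹ ∈ dcoset H b) : dcoset H b = dcoset H b⁻¹ := by
  obtain ⟨h₁, hh₁, h₂, hh₂, heq⟩ := hb
  ext g
  constructor
  · rintro ⟨k₁, hk₁, k₂, hk₂, rfl⟩
    refine ⟨k₁ * h₁⁻¹, mul_mem hk₁ (inv_mem hh₁),
      h₂⁻¹ * k₂, mul_mem (inv_mem hh₂) hk₂, ?_⟩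
    rw [heq]; group
  · rintro ⟨k₁, hk₁, k₂, hk₂, rfl⟩
    refine ⟨k₁ * h₁, mul_mem hk₁ hh₁, h₂ * k₂, mul_mem hh₂ hk₂, ?_⟩
    rw [heq]; group

end AuxLemmas


-- Identities in a commutative group, stated for `ℂˣ`.
lemma aux_cg1 (A B w : ℂˣ) : (A * B)⁻¹ * w = A⁻¹ * w * B⁻¹ := by
  rw [mul_inv, mul_assoc, mul_comm B⁻¹ w, ← mul_assoc]

lemma aux_cg5 (S E C T D : ℂˣ) :
    S⁻¹ * E⁻¹ * C * S * (T * D * T⁻¹) = E⁻¹ * (C * D) := by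
  have h1 : S⁻¹ * E⁻¹ * C * S = E⁻¹ * C := by
    rw [mul_comm S⁻¹ E⁻¹, mul_assoc E⁻¹ S⁻¹ C, mul_comm S⁻¹ C, ← mul_assoc,
      mul_assoc (E⁻¹ * C) S⁻¹ S, inv_mul_cancel, mul_one]
  rw [mul_inv_cancel_comm, h1, mul_assoc]

/-- The main key-finder argument, with an abstract exponent `r`. -/
lemma aux_key_finder {Gs : Type*} [Group Gs] {G₀ : Subgroup Gs}
    {α : ↥G₀ →* ℂˣ} {r : ℕ} (hr : ∀ g : ↥G₀, (α g : ℂˣ) ∈ rou r)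
    (hdt : DTCosets G₀) (hHP : IsHigmanPair (radH G₀ α r))
    {x : Gs} (hx : x ∉ G₀) {ξ η : ↥G₀}
    (hxi : x⁻¹ = (ξ : Gs) * x * (η : Gs))
    {z : ↥(rou r)} (hz : (z : ℂˣ) ^ 2 = α (ξ * η)) :
    (x, z) ∉ radTilde G₀ r ∧
    dcoset (radH G₀ α r) (x, z) = dcoset (radH G₀ α r) (x, z)⁻¹ ∧
    (∀ a ∈ radTilde G₀ r,
      a * (x, z) * a⁻¹ ∈ dcoset (radH G₀ α r) (x, z)) ∧
    (∀ a ∈ radTilde G₀ r,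
      a * (x, z) ∈ dcoset (radH G₀ α r) (x, z) → a ∈ radH G₀ α r) := by
  -- Part 1
  have part1 : (x, z) ∉ radTilde G₀ r := fun h => hx h.1
  -- Part 2
  have part2 : dcoset (radH G₀ α r) (x, z) = dcoset (radH G₀ α r) (x, z)⁻¹ := by
    apply aux_dcoset_symm
    rw [aux_mem_dcoset hr]
    refine ⟨ξ, η, hxi, ?_⟩
    show ((z : ℂˣ))⁻¹ = (α ξ)⁻¹ * (z : ℂˣ) * (α η)⁻¹
    have hz2 : (α ξ) * (α η) = (z : ℂˣ) * (z : ℂˣ) := by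
      rw [← map_mul, ← hz, sq]
    rw [← aux_cg1, hz2, mul_inv, mul_assoc, inv_mul_cancel, mul_one]
  -- Part 3
  have part3 : ∀ a ∈ radTilde G₀ r,
      a * (x, z) * a⁻¹ ∈ dcoset (radH G₀ α r) (x, z) := by
    intro a ha
    rw [aux_mem_dcoset hr]
    refine ⟨⟨a.1, ha.1⟩, (⟨a.1, ha.1⟩ : ↥G₀)⁻¹, rfl, ?_⟩
    show ((a.2 * z * a.2⁻¹ : rou r) : ℂˣ) = _
    rw [map_inv]
    push_cast
    rw [mul_inv_cancel_comm, inv_inv, mul_comm ((α ⟨a.1, ha.1⟩)⁻¹) (z : ℂˣ),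
      mul_assoc, inv_mul_cancel, mul_one]
  -- Part 4: uses the Higman pair hypothesis
  have part4 : ∀ a ∈ radTilde G₀ r,
      a * (x, z) ∈ dcoset (radH G₀ α r) (x, z) → a ∈ radH G₀ α r := by
    obtain ⟨-, b₀, hb₀n, -, -, -, -, hH5⟩ := hHP
    -- the first coordinate of the given key lies outside G₀
    have hx₀ : b₀.1 ∉ G₀ := by
      intro hmem
      exact hb₀n (aux_le_normalizer hr ⟨hmem, trivial⟩)
    -- the basic relation coming from (H5) for b₀
    have Q₀ : ∀ c d e : ↥G₀, (c : Gs) * b₀.1 * (d : Gs) = (e : Gs) * b₀.1 →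
        α c * α d = α e := by
      intro c d e hcd
      have hw : ((α c * α d)⁻¹ : ℂˣ) ∈ rou r :=
        (rou r).inv_mem ((rou r).mul_mem (hr c) (hr d))
      set a : Gs × rou r := ((e : Gs), ⟨(α c * α d)⁻¹, hw⟩) with hadef
      have haT : a ∈ radTilde G₀ r := ⟨e.2, trivial⟩
      have hmem : a * b₀ ∈ dcoset (radH G₀ α r) b₀ := by
        rw [aux_mem_dcoset hr]
        refine ⟨c, d, ?_, ?_⟩
        · show (e : Gs) * b₀.1 = _
          rw [← hcd]
        · show (α c * α d)⁻¹ * (b₀.2 : ℂˣ) = (α c)⁻¹ * (b₀.2 : ℂˣ) * (α d)⁻¹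
          exact aux_cg1 _ _ _
      have hmm := hH5 a (aux_le_normalizer hr haT) hmem
      rw [aux_mem_radH] at hmm
      obtain ⟨hg, hval⟩ := hmm
      have he : α ⟨a.1, hg⟩ = α e := congrArg α (Subtype.ext rfl)
      rw [he] at hval
      have hval' : α e * (α c * α d)⁻¹ = 1 := hval
      rw [mul_inv_eq_one] at hval'
      exact hval'.symm
    -- write x = s * b₀.1 * t with s, t ∈ G₀, using double transitivity
    obtain ⟨s, t, hst⟩ : ∃ s t : ↥G₀, x = (s : Gs) * b₀.1 * (t : Gs) := by
      have h1 : ((1 : Gs) : Gs ⧸ G₀) ≠ (b₀.1 : Gs ⧸ G₀) := by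
        intro h
        rw [QuotientGroup.eq] at h
        simp only [inv_one, one_mul] at h
        exact hx₀ h
      have h2 : ((1 : Gs) : Gs ⧸ G₀) ≠ (x : Gs ⧸ G₀) := by
        intro h
        rw [QuotientGroup.eq] at h
        simp only [inv_one, one_mul] at h
        exact hx h
      obtain ⟨g, hg1, hg2⟩ := hdt ((1 : Gs) : Gs ⧸ G₀) (b₀.1 : Gs ⧸ G₀)
        ((1 : Gs) : Gs ⧸ G₀) (x : Gs ⧸ G₀) h1 h2
      rw [MulAction.Quotient.smul_mk] at hg1 hg2
      have hgG₀ : g ∈ G₀ := by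
        have h3 := hg1.symm
        rw [QuotientGroup.eq] at h3
        simpa using h3
      have h4 : ((g • b₀.1 : Gs) : Gs ⧸ G₀) = (x : Gs ⧸ G₀) := hg2
      rw [QuotientGroup.eq] at h4
      refine ⟨⟨g, hgG₀⟩, ⟨(g • b₀.1)⁻¹ * x, h4⟩, ?_⟩
      show x = g * b₀.1 * ((g • b₀.1)⁻¹ * x)
      rw [smul_eq_mul]
      group
    -- transfer the relation from b₀.1 to x
    have Qx : ∀ c d e : ↥G₀, (c : Gs) * x * (d : Gs) = (e : Gs) * x →
        α c * α d = α e := by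
      intro c d e h
      have key : ((s⁻¹ * e⁻¹ * c * s : ↥G₀) : Gs) * b₀.1
          * ((t * d * t⁻¹ : ↥G₀) : Gs) = ((1 : ↥G₀) : Gs) * b₀.1 := by
        push_cast
        rw [hst] at h
        calc (s : Gs)⁻¹ * (e : Gs)⁻¹ * (c : Gs) * (s : Gs) * b₀.1
              * ((t : Gs) * (d : Gs) * (t : Gs)⁻¹)
            = (s : Gs)⁻¹ * (e : Gs)⁻¹
              * ((c : Gs) * ((s : Gs) * b₀.1 * (t : Gs)) * (d : Gs))
              * (t : Gs)⁻¹ := by group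
          _ = (s : Gs)⁻¹ * (e : Gs)⁻¹
              * ((e : Gs) * ((s : Gs) * b₀.1 * (t : Gs))) * (t : Gs)⁻¹ := by
              rw [h]
          _ = 1 * b₀.1 := by group
      have hq := Q₀ _ _ _ key
      simp only [map_mul, map_inv, map_one] at hq
      rw [aux_cg5] at hq
      exact (inv_mul_eq_one.mp hq).symm
    intro a ha hmem
    rw [aux_mem_dcoset hr] at hmem
    obtain ⟨c, d, h1, h2⟩ := hmem
    have h1' : (c : Gs) * x * (d : Gs) = ((⟨a.1, ha.1⟩ : ↥G₀) : Gs) * x :=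
      h1.symm
    have hcd := Qx c d ⟨a.1, ha.1⟩ h1'
    rw [aux_mem_radH]
    refine ⟨ha.1, ?_⟩
    have h2' : (a.2 : ℂˣ) * (z : ℂˣ) = (α c)⁻¹ * (z : ℂˣ) * (α d)⁻¹ := h2
    have h2'' : (a.2 : ℂˣ) = (α c * α d)⁻¹ := by
      have e := eq_mul_inv_iff_mul_eq.mpr h2'
      rw [e, mul_assoc ((α c)⁻¹ * (z : ℂˣ)), mul_mul_mul_comm, mul_inv_cancel,
        mul_one, ← mul_inv]
    show α ⟨a.1, ha.1⟩ * (a.2 : ℂˣ) = 1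
    rw [h2'', ← hcd, mul_inv_cancel]
  exact ⟨part1, part2, part3, part4⟩

/-- Key finder: in the radicalization setting, if `(G̃*, H)` is a Higman pair,
`x ∈ G* ∖ G₀*`, `ξ, η ∈ G₀*` satisfy `x⁻¹ = ξ x η`, and `z ∈ μ_r` satisfies
`z² = α(ξη)`, then `b = (x, z)` is a key for `(G̃*, H)`. -/
theorem stmt8 {Gs : Type*} [Group Gs] [Finite Gs] (G₀ : Subgroup Gs)
    (hidx : 3 ≤ G₀.index) (hdt : DTCosets G₀) (α : ↥G₀ →* ℂˣ)
    (hHP : IsHigmanPair (radH G₀ α (2 * Nat.card α.range)))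
    (x : Gs) (hx : x ∉ G₀) (ξ η : ↥G₀)
    (hxi : x⁻¹ = (ξ : Gs) * x * (η : Gs))
    (z : ↥(rou (2 * Nat.card α.range)))
    (hz : (z : ℂˣ) ^ 2 = α (ξ * η)) :
    (x, z) ∉ radTilde G₀ (2 * Nat.card α.range) ∧
    dcoset (radH G₀ α (2 * Nat.card α.range)) (x, z)
      = dcoset (radH G₀ α (2 * Nat.card α.range)) (x, z)⁻¹ ∧
    (∀ a ∈ radTilde G₀ (2 * Nat.card α.range),
      a * (x, z) * a⁻¹ ∈ dcoset (radH G₀ α (2 * Nat.card α.range)) (x, z)) ∧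
    (∀ a ∈ radTilde G₀ (2 * Nat.card α.range),
      a * (x, z) ∈ dcoset (radH G₀ α (2 * Nat.card α.range)) (x, z) →
        a ∈ radH G₀ α (2 * Nat.card α.range)) := by
  have hfin : Finite ↥α.range := Finite.of_surjective _ α.rangeRestrict_surjective
  have hr : ∀ g : ↥G₀, (α g : ℂˣ) ∈ rou (2 * Nat.card α.range) := by
    intro g
    have h0 : (⟨α g, ⟨g, rfl⟩⟩ : α.range) ^ Nat.card α.range = 1 := pow_card_eq_one'
    have h1 : (α g) ^ Nat.card α.range = 1 := by
      have h2 := congrArg (Subtype.val) h0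
      simpa using h2
    show (α g) ^ (2 * Nat.card α.range) = 1
    rw [pow_mul', h1, one_pow]
  exact aux_key_finder hr hdt hHP hx hxi hz
end
end

section
/- In the radicalization setting, assume (G̃*, H) is a Higman pair with key b = (x, z) where x ∈ G* ∖ G₀* and z ∈ μ_r. Then for every w ∈ μ_r, the cardinality of the set b·H·b⁻¹ ∩ H·(1,w)·b·H (a subset of G̃*) equals the cardinality of the set {ζ ∈ G₀* : there exist ξ, η ∈ G₀* with x·ζ·x⁻¹ = ξ·x·η and α(ξ)·α(η)·α(ζ)⁻¹·z⁻¹ = w}. -/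
noncomputable section

variable {Gs : Type*} [Group Gs]

private lemma radAux_iff {M : Type*} [CommGroup M] (a b c z w : M) :
    a⁻¹ = b⁻¹ * w * z * c⁻¹ ↔ b * c * a⁻¹ * z⁻¹ = w := by
  have h2 : b * c * (b⁻¹ * w * z * c⁻¹) * z⁻¹ = w := by
    simp [mul_assoc, mul_comm, mul_left_comm]
  constructor
  · intro h; rw [h]; exact h2
  · intro h; exact mul_left_cancel (mul_right_cancel (h.trans h2.symm))

private lemma mem_radH_iff {Gs : Type*} [Group Gs] (G₀ : Subgroup Gs) (α : ↥G₀ →* ℂˣ)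
    (r : ℕ) (a : Gs) (u : ↥(rou r)) :
    (a, u) ∈ radH G₀ α r ↔ ∃ ha : a ∈ G₀, α ⟨a, ha⟩ * (u : ℂˣ) = 1 := by
  constructor
  · rintro ⟨⟨⟨a', u'⟩, hp⟩, hker, heq⟩
    simp only [Subgroup.coe_subtype] at heq
    obtain ⟨h1, h2⟩ := Prod.mk.injEq .. ▸ heq
    subst h1; subst h2
    exact ⟨hp.1, hker⟩
  · rintro ⟨ha, h1⟩
    exact ⟨⟨(a, u), ⟨ha, trivial⟩⟩, h1, rfl⟩

/-- Roux parameters for radicalization: if `(G̃*, H)` is a Higman pair with key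
`b = (x, z)`, then for every `w ∈ μ_r` the cardinality of `bHb⁻¹ ∩ H·(1,w)·b·H`
equals the number of `ζ ∈ G₀*` admitting `ξ, η ∈ G₀*` with `x ζ x⁻¹ = ξ x η` and
`α(ξ)·α(η)·α(ζ)⁻¹·z⁻¹ = w`. -/
theorem stmt10 {Gs : Type*} [Group Gs] [Finite Gs] (G₀ : Subgroup Gs)
    (hidx : 3 ≤ G₀.index) (hdt : DTCosets G₀) (α : ↥G₀ →* ℂˣ)
    (x : Gs) (hx : x ∉ G₀) (z : ↥(rou (2 * Nat.card α.range)))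
    (hkey : IsKey (radH G₀ α (2 * Nat.card α.range)) (x, z))
    (w : ↥(rou (2 * Nat.card α.range))) :
    Nat.card {g : Gs × ↥(rou (2 * Nat.card α.range)) |
        (∃ h ∈ radH G₀ α (2 * Nat.card α.range), g = (x, z) * h * (x, z)⁻¹) ∧
        (∃ h₁ ∈ radH G₀ α (2 * Nat.card α.range),
          ∃ h₂ ∈ radH G₀ α (2 * Nat.card α.range),
            g = h₁ * ((1 : Gs), w) * (x, z) * h₂)} =
    Nat.card {ζ : ↥G₀ | ∃ ξ η : ↥G₀,
        x * (ζ : Gs) * x⁻¹ = (ξ : Gs) * x * (η : Gs) ∧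
        α ξ * α η * (α ζ)⁻¹ * (z : ℂˣ)⁻¹ = (w : ℂˣ)} := by
  classical
  have hfin : Finite α.range := (Set.finite_range α).to_subtype
  have hpow : ∀ ζ : ↥G₀, ((α ζ)⁻¹ : ℂˣ) ∈ rou (2 * Nat.card α.range) := by
    intro ζ
    show ((α ζ)⁻¹ : ℂˣ) ^ (2 * Nat.card α.range) = 1
    have h1 : (⟨α ζ, ζ, rfl⟩ : α.range) ^ Nat.card α.range = 1 := pow_card_eq_one'
    have h2 : (α ζ) ^ Nat.card α.range = 1 := congrArg Subtype.val h1
    rw [inv_pow, pow_mul', h2, one_pow, inv_one]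
  symm
  apply Nat.card_congr
  refine Equiv.ofBijective
    (fun ζp => ⟨(x * (ζp.1 : Gs) * x⁻¹, ⟨(α ζp.1)⁻¹, hpow ζp.1⟩), ?_, ?_⟩) ⟨?_, ?_⟩
  · -- first condition: conjugate of an element of H
    refine ⟨((ζp.1 : Gs), ⟨(α ζp.1)⁻¹, hpow ζp.1⟩), ?_, ?_⟩
    · exact (mem_radH_iff G₀ α (2 * Nat.card α.range) _ _).2 ⟨ζp.1.2, by rw [Subtype.coe_eta]; exact mul_inv_cancel _⟩
    · refine Prod.ext rfl ?_
      show (⟨(α ζp.1)⁻¹, hpow ζp.1⟩ : ↥(rou (2 * Nat.card α.range))) = z * ⟨(α ζp.1)⁻¹, hpow ζp.1⟩ * z⁻¹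
      rw [mul_comm z, mul_assoc, mul_inv_cancel, mul_one]
  · -- second condition: in H (1,w) b H
    obtain ⟨ζ, hζ⟩ := ζp
    obtain ⟨ξ, η, hxe, hα⟩ := hζ
    refine ⟨((ξ : Gs), ⟨(α ξ)⁻¹, hpow ξ⟩), ?_, ((η : Gs), ⟨(α η)⁻¹, hpow η⟩), ?_, ?_⟩
    · exact (mem_radH_iff G₀ α (2 * Nat.card α.range) _ _).2 ⟨ξ.2, by rw [Subtype.coe_eta]; exact mul_inv_cancel _⟩
    · exact (mem_radH_iff G₀ α (2 * Nat.card α.range) _ _).2 ⟨η.2, by rw [Subtype.coe_eta]; exact mul_inv_cancel _⟩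
    · refine Prod.ext ?_ ?_
      · show x * (ζ : Gs) * x⁻¹ = (ξ : Gs) * 1 * x * (η : Gs)
        rw [mul_one]; exact hxe
      · show (⟨(α ζ)⁻¹, hpow ζ⟩ : ↥(rou (2 * Nat.card α.range)))
          = ⟨(α ξ)⁻¹, hpow ξ⟩ * w * z * ⟨(α η)⁻¹, hpow η⟩
        apply Subtype.ext
        push_cast
        exact (radAux_iff (α ζ) (α ξ) (α η) (z : ℂˣ) (w : ℂˣ)).2 hα
  · -- injective
    rintro ⟨ζ, hζ⟩ ⟨ζ', hζ'⟩ h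
    have h1 : x * (ζ : Gs) * x⁻¹ = x * (ζ' : Gs) * x⁻¹ := congrArg (fun p => p.1.1) h
    have h2 : (ζ : Gs) = (ζ' : Gs) := by
      have := mul_right_cancel h1
      exact mul_left_cancel this
    exact Subtype.ext (Subtype.ext h2)
  · -- surjective
    rintro ⟨g, ⟨⟨a, u⟩, hH, hg1⟩, ⟨c, v⟩, hH1, ⟨d, s⟩, hH2, hg2⟩
    obtain ⟨ha, hu⟩ := (mem_radH_iff G₀ α (2 * Nat.card α.range) _ _).1 hH
    obtain ⟨hc, hv⟩ := (mem_radH_iff G₀ α (2 * Nat.card α.range) _ _).1 hH1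
    obtain ⟨hd, hs⟩ := (mem_radH_iff G₀ α (2 * Nat.card α.range) _ _).1 hH2
    have hg1' : g = (x * a * x⁻¹, z * u * z⁻¹) := hg1
    have hg2' : g = (c * 1 * x * d, v * w * z * s) := hg2
    have hu' : (u : ℂˣ) = (α ⟨a, ha⟩)⁻¹ := by
      rw [eq_inv_iff_mul_eq_one, mul_comm]; exact hu
    have hv' : (v : ℂˣ) = (α ⟨c, hc⟩)⁻¹ := by
      rw [eq_inv_iff_mul_eq_one, mul_comm]; exact hv
    have hs' : (s : ℂˣ) = (α ⟨d, hd⟩)⁻¹ := by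
      rw [eq_inv_iff_mul_eq_one, mul_comm]; exact hs
    have hcomp1 : x * a * x⁻¹ = c * x * d := by
      have := (congrArg Prod.fst hg1').symm.trans (congrArg Prod.fst hg2')
      rwa [mul_one] at this
    have hcomp2 : z * u * z⁻¹ = v * w * z * s :=
      (congrArg Prod.snd hg1').symm.trans (congrArg Prod.snd hg2')
    have hzu : z * u * z⁻¹ = u := by
      rw [mul_comm z, mul_assoc, mul_inv_cancel, mul_one]
    have hα : α ⟨c, hc⟩ * α ⟨d, hd⟩ * (α ⟨a, ha⟩)⁻¹ * (z : ℂˣ)⁻¹ = (w : ℂˣ) := by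
      apply (radAux_iff (α ⟨a, ha⟩) (α ⟨c, hc⟩) (α ⟨d, hd⟩) (z : ℂˣ) (w : ℂˣ)).1
      have h2 : (u : ℂˣ) = (v : ℂˣ) * w * z * s := by
        have := hzu.symm.trans hcomp2
        exact_mod_cast congrArg Subtype.val this
      rw [← hu', ← hv', ← hs']
      exact h2
    refine ⟨⟨⟨a, ha⟩, ⟨c, hc⟩, ⟨d, hd⟩, hcomp1, hα⟩, ?_⟩
    apply Subtype.ext
    show (x * a * x⁻¹, (⟨(α ⟨a, ha⟩)⁻¹, hpow _⟩ : ↥(rou (2 * Nat.card α.range)))) = g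
    rw [hg1']
    refine Prod.ext rfl ?_
    apply Subtype.ext
    show (α ⟨a, ha⟩)⁻¹ = ((z * u * z⁻¹ : ↥(rou (2 * Nat.card α.range))) : ℂˣ)
    rw [hzu, hu']
end
end

section
/- Let F be a finite field, let m ≥ 2, and suppose (m, |F|) is none of (2,2), (2,3), (3,2). Let G₀ be the subgroup of SL(m, F) consisting of all matrices A with A i 0 = 0 for every i ≠ 0 (the stabilizer of the line spanned by the first standard basis vector under left multiplication on column vectors). Then the commutator subgroup of G₀ equals {A ∈ G₀ : A 0 0 = 1}. Equivalently, every group homomorphism G₀ →* ℂˣ factors through the map A ↦ A 0 0 ∈ Fˣ. -/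
noncomputable section

/-- The stabilizer in `SL(m, F)` of the line spanned by the first standard basis vector:
matrices whose first column vanishes away from the top entry. -/
def lineStab (F : Type*) [Field F] (m : ℕ) [NeZero m] :
    Subgroup (Matrix.SpecialLinearGroup (Fin m) F) where
  carrier := {A | ∀ i : Fin m, i ≠ 0 → (A : Matrix (Fin m) (Fin m) F) i 0 = 0}
  one_mem' := by
    intro i hi
    show (1 : Matrix (Fin m) (Fin m) F) i 0 = 0
    exact Matrix.one_apply_ne hi
  mul_mem' := by
    intro A B hA hB i hi
    show ((A * B : Matrix.SpecialLinearGroup (Fin m) F) : Matrix (Fin m) (Fin m) F) i 0 = 0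
    rw [Matrix.SpecialLinearGroup.coe_mul, Matrix.mul_apply]
    apply Finset.sum_eq_zero
    intro k _
    rcases eq_or_ne k 0 with hk | hk
    · subst hk; rw [hA i hi, zero_mul]
    · rw [hB k hk, mul_zero]
  inv_mem' := by
    intro A hA i hi
    have hmul : ((A⁻¹ : Matrix.SpecialLinearGroup (Fin m) F) : Matrix (Fin m) (Fin m) F)
        * (A : Matrix (Fin m) (Fin m) F) = 1 := by
      rw [← Matrix.SpecialLinearGroup.coe_mul, inv_mul_cancel]
      rfl
    have key : ∀ j : Fin m,
        ((A⁻¹ : Matrix.SpecialLinearGroup (Fin m) F) : Matrix (Fin m) (Fin m) F) j 0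
          * (A : Matrix (Fin m) (Fin m) F) 0 0 = (1 : Matrix (Fin m) (Fin m) F) j 0 := by
      intro j
      rw [← hmul, Matrix.mul_apply]
      rw [Finset.sum_eq_single 0]
      · intro k _ hk; rw [hA k hk, mul_zero]
      · intro h; exact absurd (Finset.mem_univ 0) h
    have h00 : (A : Matrix (Fin m) (Fin m) F) 0 0 ≠ 0 := by
      have := key 0
      rw [Matrix.one_apply_eq] at this
      exact right_ne_zero_of_mul_eq_one this
    have := key i
    rw [Matrix.one_apply_ne hi] at this
    exact (mul_eq_zero.mp this).resolve_right h00

namespace LineStabAux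

open Matrix
open scoped commutatorElement

variable {F : Type*} [Field F] {m : ℕ} [NeZero m]

/-- The matrix of an element of the line stabilizer. -/
def mat (g : ↥(lineStab F m)) : Matrix (Fin m) (Fin m) F :=
  ((g : Matrix.SpecialLinearGroup (Fin m) F) : Matrix (Fin m) (Fin m) F)

lemma mat_mul (g h : ↥(lineStab F m)) : mat (g * h) = mat g * mat h := rfl

lemma mat_one : mat (1 : ↥(lineStab F m)) = 1 := rfl

lemma mat_inj {g h : ↥(lineStab F m)} (hgh : mat g = mat h) : g = h :=
  Subtype.ext (Subtype.ext hgh)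

lemma mat_det (g : ↥(lineStab F m)) : (mat g).det = 1 := g.1.2

lemma mat_col (g : ↥(lineStab F m)) {i : Fin m} (hi : i ≠ 0) : mat g i 0 = 0 := g.2 i hi

/-- Constructor for elements of the line stabilizer. -/
def mk (M : Matrix (Fin m) (Fin m) F) (hdet : M.det = 1)
    (hcol : ∀ i : Fin m, i ≠ 0 → M i 0 = 0) : ↥(lineStab F m) :=
  ⟨⟨M, hdet⟩, hcol⟩

@[simp] lemma mat_mk (M : Matrix (Fin m) (Fin m) F) (hdet) (hcol) :
    mat (mk M hdet hcol) = M := rfl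

lemma inv_eq (g h : ↥(lineStab F m)) (hgh : mat g * mat h = 1) : g⁻¹ = h := by
  rw [← mat_mul, ← mat_one] at hgh
  exact (inv_eq_of_mul_eq_one_right (mat_inj hgh)).symm ▸ rfl

omit [NeZero m] in
lemma stdBasisMatrix_neg (a b : Fin m) (d : F) :
    Matrix.single a b (-d) = -Matrix.single a b d := by
  rw [← neg_one_smul F (Matrix.single a b d), smul_single]; simp

/-- Transvection elements of the line stabilizer. -/
def tEl (i j : Fin m) (hij : i ≠ j) (hj : j ≠ 0) (c : F) : ↥(lineStab F m) :=
  mk (transvection i j c) (det_transvection_of_ne i j hij c) (by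
    intro i' hi'
    simp [transvection, Matrix.single, one_apply, hi', Ne.symm hj]
    exact fun _ h => absurd h hj)

@[simp] lemma mat_tEl (i j : Fin m) (hij : i ≠ j) (hj : j ≠ 0) (c : F) :
    mat (tEl i j hij hj c) = transvection i j c := rfl

lemma tEl_inv (i j : Fin m) (hij : i ≠ j) (hj : j ≠ 0) (c : F) :
    (tEl i j hij hj c)⁻¹ = tEl i j hij hj (-c) := by
  apply inv_eq
  rw [mat_tEl, mat_tEl, transvection_mul_transvection_same _ _ hij, add_neg_cancel,
    transvection_zero]

lemma mem_commutator_of_commutator {g h x : ↥(lineStab F m)}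
    (hx : x = ⁅g, h⁆) : x ∈ commutator ↥(lineStab F m) := by
  rw [hx, commutator_def]
  exact Subgroup.commutator_mem_commutator (Subgroup.mem_top _) (Subgroup.mem_top _)

/-- Case 1 : a commutator of two transvections. -/
lemma tEl_mem_of_third (i j k : Fin m) (hij : i ≠ j) (hj : j ≠ 0)
    (hk0 : k ≠ 0) (hki : k ≠ i) (hkj : k ≠ j) (c : F) :
    tEl i j hij hj c ∈ commutator ↥(lineStab F m) := by
  apply mem_commutator_of_commutator
    (g := tEl i k (Ne.symm hki) hk0 c) (h := tEl k j hkj hj 1)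
  apply mat_inj
  rw [commutatorElement_def, tEl_inv, tEl_inv]
  rw [mat_mul, mat_mul, mat_mul]
  simp only [mat_tEl]
  simp [transvection, Matrix.mul_add, Matrix.add_mul, Matrix.single_mul_single_same,
    Matrix.single_mul_single_of_ne, hij, hki, hkj, hij.symm, hki.symm, hkj.symm,
    stdBasisMatrix_neg]
  abel

/-- Diagonal elements of the line stabilizer. -/
def dEl (d : Fin m → F) (hd : ∏ i, d i = 1) : ↥(lineStab F m) :=
  mk (diagonal d) (by simp [det_diagonal, hd]) (fun i hi => diagonal_apply_ne d hi)

@[simp] lemma mat_dEl (d : Fin m → F) (hd) : mat (dEl d hd) = diagonal d := rfl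

omit [NeZero m] in
lemma dEl_ne_zero {d : Fin m → F} (hd : ∏ i, d i = 1) (k : Fin m) : d k ≠ 0 := by
  have := hd ▸ (one_ne_zero : (1 : F) ≠ 0)
  exact Finset.prod_ne_zero_iff.mp this k (Finset.mem_univ k)

omit [NeZero m] in
lemma prod_inv {d : Fin m → F} (hd : ∏ i, d i = 1) : ∏ i, (d i)⁻¹ = 1 := by
  rw [Finset.prod_inv_distrib, hd, inv_one]

omit [NeZero m] in
lemma diagonal_mul_inv_self {d : Fin m → F} (hd : ∏ i, d i = 1) :
    diagonal d * diagonal (fun k => (d k)⁻¹) = 1 := by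
  have h1 : (fun i => d i * (d i)⁻¹) = fun _ => (1 : F) :=
    funext fun k => mul_inv_cancel₀ (dEl_ne_zero hd k)
  rw [diagonal_mul_diagonal, h1]
  exact diagonal_one

lemma dEl_inv (d : Fin m → F) (hd : ∏ i, d i = 1) :
    (dEl d hd)⁻¹ = dEl (fun k => (d k)⁻¹) (prod_inv hd) := by
  apply inv_eq
  rw [mat_dEl, mat_dEl, diagonal_mul_inv_self hd]

omit [NeZero m] in
lemma diagonal_mul_std (d : Fin m → F) (i j : Fin m) (b : F) :
    diagonal d * Matrix.single i j b = Matrix.single i j (d i * b) := by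
  ext a b'
  rw [diagonal_mul]
  simp only [Matrix.single, of_apply]
  split_ifs with h
  · rw [h.1]
  · rw [mul_zero]

omit [NeZero m] in
lemma std_mul_diagonal (d : Fin m → F) (i j : Fin m) (b : F) :
    Matrix.single i j b * diagonal d = Matrix.single i j (b * d j) := by
  ext a b'
  rw [mul_diagonal]
  simp only [Matrix.single, of_apply]
  split_ifs with h
  · rw [h.2]
  · rw [zero_mul]

/-- commutator of a diagonal element and a transvection -/
lemma diag_conj_mem (d : Fin m → F) (hd : ∏ i, d i = 1) (i j : Fin m)
    (hij : i ≠ j) (hj : j ≠ 0) (b : F) :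
    tEl i j hij hj (d i * b * (d j)⁻¹ - b) ∈ commutator ↥(lineStab F m) := by
  apply mem_commutator_of_commutator (g := dEl d hd) (h := tEl i j hij hj b)
  apply mat_inj
  symm
  rw [commutatorElement_def, tEl_inv, dEl_inv]
  rw [mat_mul, mat_mul, mat_mul]
  simp only [mat_tEl, mat_dEl]
  have e1 : diagonal d * (1 + Matrix.single i j b) * (diagonal fun k => (d k)⁻¹)
      = 1 + Matrix.single i j (d i * b * (d j)⁻¹) := by
    rw [Matrix.mul_add, Matrix.mul_one, Matrix.add_mul, diagonal_mul_inv_self hd,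
      diagonal_mul_std, std_mul_diagonal]
  rw [transvection, transvection, e1, Matrix.add_mul, Matrix.one_mul, Matrix.mul_add,
    Matrix.mul_one]
  simp only [transvection, sub_eq_add_neg, single_add, stdBasisMatrix_neg,
    Matrix.mul_neg, Matrix.single_mul_single_of_ne _ _ _ _ (Ne.symm hij), neg_zero, add_zero]
  abel
omit [NeZero m] in
lemma prod_update_pair (a b : Fin m) (hab : a ≠ b) (x y : F) :
    ∏ k, Function.update (Function.update (fun _ => (1 : F)) a x) b y k = x * y := by
  rw [Finset.prod_update_of_mem (Finset.mem_univ b),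
    Finset.prod_update_of_mem (by simp [hab] : a ∈ Finset.univ \ {b})]
  simp [mul_comm]

omit [NeZero m] in
lemma exists_ne_zero_ne_one [Fintype F] (h : 3 ≤ Fintype.card F) : ∃ μ : F, μ ≠ 0 ∧ μ ≠ 1 := by
  classical
  have hns : ¬ (Finset.univ : Finset F) ⊆ {0, 1} := by
    intro hsub
    have h1 := Finset.card_le_card hsub
    have h2 : ({0, 1} : Finset F).card ≤ 2 :=
      le_trans (Finset.card_insert_le _ _) (by simp)
    rw [Finset.card_univ] at h1
    omega
  obtain ⟨μ, _, hμ⟩ := Finset.not_subset.mp hns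
  simp only [Finset.mem_insert, Finset.mem_singleton, not_or] at hμ
  exact ⟨μ, hμ.1, hμ.2⟩

omit [NeZero m] in
lemma exists_sq_ne_one [Fintype F] (h : 4 ≤ Fintype.card F) : ∃ μ : F, μ ≠ 0 ∧ μ * μ ≠ 1 := by
  classical
  have hns : ¬ (Finset.univ : Finset F) ⊆ {0, 1, -1} := by
    intro hsub
    have h1 := Finset.card_le_card hsub
    have h2 : ({0, 1, -1} : Finset F).card ≤ 3 :=
      le_trans (Finset.card_insert_le _ _)
        (by have := Finset.card_insert_le (1 : F) ({-1} : Finset F); simp only [Finset.card_singleton] at this; omega)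
    rw [Finset.card_univ] at h1
    omega
  obtain ⟨μ, _, hμ⟩ := Finset.not_subset.mp hns
  simp only [Finset.mem_insert, Finset.mem_singleton, not_or] at hμ
  obtain ⟨h0, h1, h2⟩ := hμ
  refine ⟨μ, h0, fun hsq => ?_⟩
  have hz : (μ - 1) * (μ + 1) = 0 := by linear_combination hsq
  rcases mul_eq_zero.mp hz with hz | hz
  · exact h1 (sub_eq_zero.mp hz)
  · exact h2 (eq_neg_of_add_eq_zero_left hz)

/-- Every transvection with nonzero column index lies in the commutator subgroup. -/
lemma tEl_mem [Fintype F] (hm : 2 ≤ m)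
    (hexc : (m, Fintype.card F) ∉ ({(2, 2), (2, 3), (3, 2)} : Set (ℕ × ℕ)))
    (i j : Fin m) (hij : i ≠ j) (hj : j ≠ 0) (c : F) :
    tEl i j hij hj c ∈ commutator ↥(lineStab F m) := by
  simp only [Set.mem_insert_iff, Set.mem_singleton_iff, not_or, Prod.mk.injEq, not_and] at hexc
  obtain ⟨hexc1, hexc2, hexc3⟩ := hexc
  by_cases hk : ∃ k : Fin m, k ≠ 0 ∧ k ≠ i ∧ k ≠ j
  · obtain ⟨k, h0, h1, h2⟩ := hk
    exact tEl_mem_of_third i j k hij hj h0 h1 h2 c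
  push_neg at hk
  have hcases : ∀ k : Fin m, k = 0 ∨ k = i ∨ k = j := by
    intro k
    by_cases h0 : k = 0
    · exact Or.inl h0
    by_cases h1 : k = i
    · exact Or.inr (Or.inl h1)
    · exact Or.inr (Or.inr (hk k h0 h1))
  have hF2 : 2 ≤ Fintype.card F := Fintype.one_lt_card
  rcases eq_or_ne i 0 with rfl | hi0
  · -- i = 0 : here m = 2, so the field has at least 4 elements
    have hm2 : m = 2 := by
      have hsub : (Finset.univ : Finset (Fin m)) ⊆ {0, j} := by
        intro k _
        rcases hcases k with h | h | h <;> simp [h]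
      have h1 := Finset.card_le_card hsub
      have h2 : ({0, j} : Finset (Fin m)).card ≤ 2 :=
        le_trans (Finset.card_insert_le _ _) (by simp)
      rw [Finset.card_univ, Fintype.card_fin] at h1
      omega
    have hF4 : 4 ≤ Fintype.card F := by
      rcases Nat.lt_or_ge (Fintype.card F) 4 with h | h
      · interval_cases h' : Fintype.card F
        · exact absurd rfl (hexc1 hm2)
        · exact absurd rfl (hexc2 hm2)
      · exact h
    obtain ⟨μ, hμ0, hμsq⟩ := exists_sq_ne_one hF4
    set d : Fin m → F := Function.update (Function.update (fun _ => (1 : F)) 0 μ) j μ⁻¹ with hd_def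
    have hd : ∏ k, d k = 1 := by
      rw [hd_def, prod_update_pair 0 j (Ne.symm hj) μ μ⁻¹, mul_inv_cancel₀ hμ0]
    have hdi : d 0 = μ := by
      rw [hd_def, Function.update_of_ne (Ne.symm hj), Function.update_self]
    have hdj : d j = μ⁻¹ := by rw [hd_def, Function.update_self]
    have hne : μ * μ - 1 ≠ 0 := sub_ne_zero.mpr hμsq
    have hval : d 0 * (c * (μ * μ - 1)⁻¹) * (d j)⁻¹ - (c * (μ * μ - 1)⁻¹) = c := by
      rw [hdi, hdj, inv_inv]
      calc _ = c * (μ * μ - 1) * (μ * μ - 1)⁻¹ := by ring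
        _ = c := by rw [mul_assoc, mul_inv_cancel₀ hne, mul_one]
    have := diag_conj_mem d hd 0 j hij hj (c * (μ * μ - 1)⁻¹)
    rwa [hval] at this
  · -- i ≠ 0 : here the field has at least 3 elements
    have hF3 : 3 ≤ Fintype.card F := by
      rcases Nat.lt_or_ge (Fintype.card F) 3 with h | h
      · exfalso
        have hcard2 : Fintype.card F = 2 := by omega
        have hm3 : m = 3 := by
          have hsub : (Finset.univ : Finset (Fin m)) ⊆ {0, i, j} := by
            intro k _
            rcases hcases k with h | h | h <;> simp [h]
          have h1 := Finset.card_le_card hsub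
          have h2 : ({0, i, j} : Finset (Fin m)).card ≤ 3 :=
            le_trans (Finset.card_insert_le _ _)
              (by have := Finset.card_insert_le i ({j} : Finset (Fin m)); simp only [Finset.card_singleton] at this; omega)
          have h3 : ({0, i, j} : Finset (Fin m)).card = 3 := by
            rw [Finset.card_insert_of_notMem (by simp [Ne.symm hi0, Ne.symm hj]),
              Finset.card_insert_of_notMem (by simp [hij]), Finset.card_singleton]
          rw [Finset.card_univ, Fintype.card_fin] at h1
          have h4 : 3 ≤ m := by
            have := Finset.card_le_card (Finset.subset_univ ({0, i, j} : Finset (Fin m)))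
            rw [Finset.card_univ, Fintype.card_fin] at this
            omega
          omega
        exact hexc3 hm3 hcard2
      · exact h
    obtain ⟨μ, hμ0, hμ1⟩ := exists_ne_zero_ne_one hF3
    set d : Fin m → F := Function.update (Function.update (fun _ => (1 : F)) i μ) 0 μ⁻¹
      with hd_def
    have hd : ∏ k, d k = 1 := by
      rw [hd_def, prod_update_pair i 0 hi0 μ μ⁻¹, mul_inv_cancel₀ hμ0]
    have hdi : d i = μ := by
      rw [hd_def, Function.update_of_ne hi0, Function.update_self]
    have hdj : d j = 1 := by
      rw [hd_def, Function.update_of_ne hj, Function.update_of_ne (Ne.symm hij)]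
    have hne : μ - 1 ≠ 0 := sub_ne_zero.mpr hμ1
    have hval : d i * (c * (μ - 1)⁻¹) * (d j)⁻¹ - (c * (μ - 1)⁻¹) = c := by
      rw [hdi, hdj, inv_one]
      field_simp
    have := diag_conj_mem d hd i j hij hj (c * (μ - 1)⁻¹)
    rwa [hval] at this

/- ### The "Weyl element" computations giving two-position diagonal matrices -/

omit [NeZero m] in
lemma W_eq (p q : Fin m) (hpq : p ≠ q) (c : F) (hc : c ≠ 0) :
    transvection p q c * transvection q p (-c⁻¹) * transvection p q c
      = 1 - Matrix.single p p 1 - Matrix.single q q 1 + Matrix.single p q c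
          - Matrix.single q p c⁻¹ := by
  simp [transvection, Matrix.mul_add, Matrix.add_mul, Matrix.single_mul_single_same,
    Matrix.single_mul_single_of_ne, hpq, hpq.symm, stdBasisMatrix_neg,
    inv_mul_cancel₀ hc, mul_inv_cancel₀ hc]
  abel

omit [NeZero m] in
lemma diagPair_eq (p q : Fin m) (hpq : p ≠ q) (c : F) :
    diagonal (Function.update (Function.update (fun _ => (1 : F)) p c) q c⁻¹)
      = 1 - Matrix.single p p 1 - Matrix.single q q 1
        + Matrix.single p p c + Matrix.single q q c⁻¹ := by
  ext a b
  rcases eq_or_ne a b with rfl | hab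
  · rcases eq_or_ne a p with rfl | hap <;> rcases eq_or_ne a q with rfl | haq <;>
      simp_all [Function.update_apply, Matrix.single, one_apply, Ne.symm, eq_comm]
  · have h1 : ¬(p = a ∧ p = b) := by rintro ⟨rfl, rfl⟩; exact hab rfl
    have h2 : ¬(q = a ∧ q = b) := by rintro ⟨rfl, rfl⟩; exact hab rfl
    simp [diagonal_apply_ne _ hab, Matrix.single, one_apply, hab, h1, h2]

omit [NeZero m] in
lemma WW_eq (p q : Fin m) (hpq : p ≠ q) (c : F) (hc : c ≠ 0) :
    (1 - Matrix.single p p 1 - Matrix.single q q 1 + Matrix.single p q c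
          - Matrix.single q p c⁻¹) *
    (1 - Matrix.single p p 1 - Matrix.single q q 1 + Matrix.single p q (-1)
          - Matrix.single q p (-1)) =
      diagonal (Function.update (Function.update (fun _ => (1 : F)) p c) q c⁻¹) := by
  rw [diagPair_eq p q hpq c]
  simp [Matrix.mul_sub, Matrix.sub_mul, Matrix.mul_add, Matrix.add_mul,
    Matrix.single_mul_single_same, Matrix.single_mul_single_of_ne, hpq, hpq.symm,
    stdBasisMatrix_neg]
  abel

/-- Two-position diagonal elements lie in the commutator subgroup. -/
lemma pair_mem [Fintype F] (hm : 2 ≤ m)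
    (hexc : (m, Fintype.card F) ∉ ({(2, 2), (2, 3), (3, 2)} : Set (ℕ × ℕ)))
    (p q : Fin m) (hp : p ≠ 0) (hq : q ≠ 0) (hpq : p ≠ q) (c : F) (hc : c ≠ 0)
    (hd : ∏ k, Function.update (Function.update (fun _ => (1 : F)) p c) q c⁻¹ k = 1) :
    dEl (Function.update (Function.update (fun _ => (1 : F)) p c) q c⁻¹) hd
      ∈ commutator ↥(lineStab F m) := by
  have key : dEl (Function.update (Function.update (fun _ => (1 : F)) p c) q c⁻¹) hd
      = (tEl p q hpq hq c * tEl q p (Ne.symm hpq) hp (-c⁻¹) * tEl p q hpq hq c)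
        * (tEl p q hpq hq (-1) * tEl q p (Ne.symm hpq) hp 1 * tEl p q hpq hq (-1)) := by
    apply mat_inj
    rw [mat_mul, mat_mul, mat_mul, mat_mul, mat_mul]
    simp only [mat_tEl, mat_dEl]
    have hW1 := W_eq p q hpq c hc
    have hW2 := W_eq p q hpq (-1 : F) (by norm_num)
    norm_num at hW2
    rw [hW1, hW2]
    have := WW_eq p q hpq c hc
    norm_num at this
    rw [this]
  rw [key]
  have h1 := tEl_mem hm hexc p q hpq hq c
  have h2 := tEl_mem hm hexc q p (Ne.symm hpq) hp (-c⁻¹)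
  have h3 := tEl_mem hm hexc p q hpq hq (-1)
  have h4 := tEl_mem hm hexc q p (Ne.symm hpq) hp 1
  exact mul_mem (mul_mem (mul_mem h1 h2) h1) (mul_mem (mul_mem h3 h4) h3)

omit [NeZero m] in
lemma prod_update_pair' (f : Fin m → F) (a b : Fin m) (hab : a ≠ b) (x y : F) :
    (∏ k, Function.update (Function.update f a x) b y k) * (f a * f b)
      = (x * y) * ∏ k, f k := by
  have hmem : a ∈ Finset.univ \ {b} := by simp [hab]
  rw [Finset.prod_update_of_mem (Finset.mem_univ b),
    Finset.prod_update_of_mem hmem,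
    Finset.prod_eq_mul_prod_sdiff_singleton_of_mem (Finset.mem_univ b) f,
    Finset.prod_eq_mul_prod_sdiff_singleton_of_mem hmem f]
  ring

/-- Every diagonal element with trivial top-left entry lies in the commutator subgroup. -/
lemma diag_mem [Fintype F] (hm : 2 ≤ m)
    (hexc : (m, Fintype.card F) ∉ ({(2, 2), (2, 3), (3, 2)} : Set (ℕ × ℕ))) :
    ∀ s : Finset (Fin m), (0 : Fin m) ∉ s →
      ∀ (d : Fin m → F) (hd : ∏ k, d k = 1), (∀ k ∉ s, d k = 1) →
        dEl d hd ∈ commutator ↥(lineStab F m) := by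
  intro s
  induction s using Finset.induction_on with
  | empty =>
    intro _ d hd hsupp
    have hone : d = fun _ => 1 := funext fun k => hsupp k (by simp)
    have : dEl d hd = 1 := by
      apply mat_inj
      rw [mat_dEl, mat_one, hone]
      exact diagonal_one
    rw [this]
    exact one_mem _
  | @insert a s ha IH =>
    intro h0 d hd hsupp
    have ha0 : a ≠ 0 := fun h => h0 (h ▸ Finset.mem_insert_self a s)
    have h0s : (0 : Fin m) ∉ s := fun h => h0 (Finset.mem_insert_of_mem h)
    have hda : d a ≠ 0 := dEl_ne_zero hd a
    rcases Finset.eq_empty_or_nonempty s with rfl | ⟨b, hb⟩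
    · -- `d` is supported at `a` only, so `d = 1`
      have hda1 : d a = 1 := by
        have := hd
        rw [Finset.prod_eq_single a (fun k _ hk => hsupp k (by simp [hk]))
          (fun h => absurd (Finset.mem_univ a) h)] at this
        exact this
      have hone : d = fun _ => 1 := funext fun k => by
        rcases eq_or_ne k a with rfl | hk
        · exact hda1
        · exact hsupp k (by simp [hk])
      have : dEl d hd = 1 := by
        apply mat_inj
        rw [mat_dEl, mat_one, hone]
        exact diagonal_one
      rw [this]
      exact one_mem _
    · have hb0 : b ≠ 0 := fun h => h0s (h ▸ hb)
      have hba : b ≠ a := fun h => ha (h ▸ hb)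
      set d' : Fin m → F := Function.update (Function.update d a 1) b (d a * d b)
        with hd'_def
      have hdb : d b ≠ 0 := dEl_ne_zero hd b
      have hd' : ∏ k, d' k = 1 := by
        have h := prod_update_pair' d a b (Ne.symm hba) 1 (d a * d b)
        rw [hd, mul_one] at h
        have h2 : (∏ k, d' k) * (d a * d b) = 1 * (d a * d b) := by
          rw [hd'_def]; linear_combination h
        exact mul_right_cancel₀ (mul_ne_zero hda hdb) h2
      have hsupp' : ∀ k ∉ s, d' k = 1 := by
        intro k hk
        rcases eq_or_ne k a with rfl | hka
        · rw [hd'_def, Function.update_of_ne (Ne.symm hba), Function.update_self]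
        · have hkb : k ≠ b := fun h => hk (h ▸ hb)
          rw [hd'_def, Function.update_of_ne hkb, Function.update_of_ne hka]
          exact hsupp k (by simp [hka, hk])
      have hk_pair : ∏ k, Function.update (Function.update (fun _ => (1 : F)) a (d a)) b
          (d a)⁻¹ k = 1 := by
        rw [prod_update_pair a b (Ne.symm hba) (d a) (d a)⁻¹, mul_inv_cancel₀ hda]
      have hpm := pair_mem hm hexc a b ha0 hb0 (Ne.symm hba) (d a) hda hk_pair
      have hIH := IH h0s d' hd' hsupp'
      have key : dEl d hd = dEl d' hd'
          * dEl (Function.update (Function.update (fun _ => (1 : F)) a (d a)) b (d a)⁻¹)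
              hk_pair := by
        apply mat_inj
        rw [mat_mul, mat_dEl, mat_dEl, mat_dEl, diagonal_mul_diagonal,
          diagonal_eq_diagonal_iff]
        intro k
        show d k = d' k * Function.update (Function.update (fun _ => (1 : F)) a (d a)) b
          (d a)⁻¹ k
        rcases eq_or_ne k a with hka' | hka
        case _ =>
          rw [hd'_def, hka', Function.update_of_ne (Ne.symm hba), Function.update_self,
            Function.update_of_ne (Ne.symm hba), Function.update_self, one_mul]
        rcases eq_or_ne k b with hkb' | hkb
        case _ =>
          rw [hd'_def, hkb', Function.update_self, Function.update_self, mul_comm (d a) (d b),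
            mul_assoc, mul_inv_cancel₀ hda, mul_one]
        · rw [hd'_def, Function.update_of_ne hkb, Function.update_of_ne hka,
            Function.update_of_ne hkb, Function.update_of_ne hka, mul_one]
      rw [key]
      exact mul_mem hIH hpm

/-- Elements that agree with `1` outside of row `0` and have `1` in position `(0,0)` lie in
the commutator subgroup. -/
lemma row_mem [Fintype F] (hm : 2 ≤ m)
    (hexc : (m, Fintype.card F) ∉ ({(2, 2), (2, 3), (3, 2)} : Set (ℕ × ℕ))) :
    ∀ s : Finset (Fin m), (0 : Fin m) ∉ s →
      ∀ g : ↥(lineStab F m),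
        (∀ i : Fin m, i ≠ 0 → ∀ j, mat g i j = (1 : Matrix (Fin m) (Fin m) F) i j) →
        mat g 0 0 = 1 →
        (∀ j ∉ s, j ≠ 0 → mat g 0 j = 0) →
        g ∈ commutator ↥(lineStab F m) := by
  intro s
  induction s using Finset.induction_on with
  | empty =>
    intro _ g hrows h00 hsupp
    have hmat : mat g = 1 := by
      ext i j
      rcases eq_or_ne i 0 with rfl | hi
      · rcases eq_or_ne j 0 with rfl | hj
        · rw [h00, one_apply_eq]
        · rw [hsupp j (by simp) hj, one_apply_ne (Ne.symm hj)]
      · rw [hrows i hi j]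
    have : g = 1 := mat_inj (hmat.trans mat_one.symm)
    rw [this]
    exact one_mem _
  | @insert a s ha IH =>
    intro h0 g hrows h00 hsupp
    have ha0 : a ≠ 0 := fun h => h0 (h ▸ Finset.mem_insert_self a s)
    have h0s : (0 : Fin m) ∉ s := fun h => h0 (Finset.mem_insert_of_mem h)
    set c : F := mat g 0 a with hc_def
    set t : ↥(lineStab F m) := tEl 0 a (Ne.symm ha0) ha0 (-c) with ht_def
    set g' : ↥(lineStab F m) := t * g with hg'_def
    have hmat' : mat g' = transvection 0 a (-c) * mat g := by
      rw [hg'_def, mat_mul, ht_def, mat_tEl]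
    have hrows' : ∀ i : Fin m, i ≠ 0 → ∀ j, mat g' i j = (1 : Matrix (Fin m) (Fin m) F) i j := by
      intro i hi j
      rw [hmat', transvection_mul_apply_of_ne _ _ _ _ hi, hrows i hi j]
    have h00' : mat g' 0 0 = 1 := by
      rw [hmat', transvection_mul_apply_same, hrows a ha0 0, one_apply_ne ha0, mul_zero,
        add_zero, h00]
    have hsupp' : ∀ j ∉ s, j ≠ 0 → mat g' 0 j = 0 := by
      intro j hj hj0
      rcases eq_or_ne j a with rfl | hja
      · rw [hmat', transvection_mul_apply_same, hrows j ha0 j, one_apply_eq, mul_one,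
          ← hc_def]
        exact add_neg_cancel c
      · rw [hmat', transvection_mul_apply_same, hrows a ha0 j, one_apply_ne fun h => hja (h.symm),
          mul_zero, add_zero]
        exact hsupp j (by simp [hja, hj]) hj0
    have hg' := IH h0s g' hrows' h00' hsupp'
    have hginv : g = t⁻¹ * g' := by rw [hg'_def, ← mul_assoc, inv_mul_cancel, one_mul]
    rw [hginv]
    exact mul_mem (inv_mem (tEl_mem hm hexc 0 a (Ne.symm ha0) ha0 (-c))) hg'

/- ### Lifting `n × n` matrices to block matrices `1 ⊕ M` -/

def blockEquiv (n : ℕ) : Fin n ⊕ Unit ≃ Fin (n + 1) where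
  toFun := Sum.elim Fin.succ fun _ => 0
  invFun i := if h : i = 0 then Sum.inr () else Sum.inl (i.pred h)
  left_inv := by rintro (i | ⟨⟩) <;> simp [Fin.succ_ne_zero]
  right_inv i := by
    rcases eq_or_ne i 0 with rfl | h
    · simp
    · simp [h]

lemma blockEquiv_symm_zero (n : ℕ) : (blockEquiv n).symm 0 = Sum.inr () := by
  rw [Equiv.symm_apply_eq]; rfl

lemma blockEquiv_symm_succ {n : ℕ} (i : Fin n) : (blockEquiv n).symm i.succ = Sum.inl i := by
  rw [Equiv.symm_apply_eq]; rfl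

def liftBlock {n : ℕ} (M : Matrix (Fin n) (Fin n) F) : Matrix (Fin (n + 1)) (Fin (n + 1)) F :=
  (Matrix.fromBlocks M 0 0 1).submatrix (blockEquiv n).symm (blockEquiv n).symm

omit [NeZero m] in
lemma liftBlock_succ_succ {n : ℕ} (M : Matrix (Fin n) (Fin n) F) (i j : Fin n) :
    liftBlock M i.succ j.succ = M i j := by
  rw [liftBlock, submatrix_apply, blockEquiv_symm_succ, blockEquiv_symm_succ,
    fromBlocks_apply₁₁]

omit [NeZero m] in
lemma liftBlock_zero_row {n : ℕ} (M : Matrix (Fin n) (Fin n) F) (j : Fin (n + 1)) :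
    liftBlock M 0 j = (1 : Matrix (Fin (n + 1)) (Fin (n + 1)) F) 0 j := by
  rw [liftBlock, submatrix_apply, blockEquiv_symm_zero]
  rcases Fin.eq_zero_or_eq_succ j with rfl | ⟨j', rfl⟩
  · rw [blockEquiv_symm_zero, fromBlocks_apply₂₂, one_apply_eq, one_apply_eq]
  · rw [blockEquiv_symm_succ, fromBlocks_apply₂₁, one_apply_ne (Fin.succ_ne_zero j').symm]
    rfl

omit [NeZero m] in
lemma liftBlock_col {n : ℕ} (M : Matrix (Fin n) (Fin n) F) (i : Fin (n + 1)) (hi : i ≠ 0) :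
    liftBlock M i 0 = 0 := by
  obtain ⟨i', rfl⟩ := Fin.eq_succ_of_ne_zero hi
  rw [liftBlock, submatrix_apply, blockEquiv_symm_zero, blockEquiv_symm_succ,
    fromBlocks_apply₁₂]
  rfl

omit [NeZero m] in
lemma liftBlock_mul {n : ℕ} (M N : Matrix (Fin n) (Fin n) F) :
    liftBlock (M * N) = liftBlock M * liftBlock N := by
  rw [liftBlock, liftBlock, liftBlock, submatrix_mul_equiv, fromBlocks_multiply]
  simp

omit [NeZero m] in
lemma liftBlock_det {n : ℕ} (M : Matrix (Fin n) (Fin n) F) :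
    (liftBlock M).det = M.det := by
  rw [liftBlock, det_submatrix_equiv_self, det_fromBlocks_zero₂₁]
  simp

omit [NeZero m] in
lemma liftBlock_diagonal {n : ℕ} (D : Fin n → F) :
    liftBlock (diagonal D) = diagonal (fun i : Fin (n + 1) =>
      if h : i = 0 then 1 else D (i.pred h)) := by
  ext a b
  rcases eq_or_ne a b with rfl | hab
  · rcases Fin.eq_zero_or_eq_succ a with rfl | ⟨a', rfl⟩
    · rw [liftBlock, submatrix_apply, blockEquiv_symm_zero, fromBlocks_apply₂₂,
        diagonal_apply_eq]
      simp
    · rw [liftBlock, submatrix_apply, blockEquiv_symm_succ, fromBlocks_apply₁₁,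
        diagonal_apply_eq, diagonal_apply_eq]
      simp [Fin.succ_ne_zero]
  · rw [diagonal_apply_ne _ hab, liftBlock, submatrix_apply]
    rcases Fin.eq_zero_or_eq_succ a with rfl | ⟨a', rfl⟩ <;>
      rcases Fin.eq_zero_or_eq_succ b with rfl | ⟨b', rfl⟩
    · exact absurd rfl hab
    · rw [blockEquiv_symm_zero, blockEquiv_symm_succ, fromBlocks_apply₂₁]; rfl
    · rw [blockEquiv_symm_zero, blockEquiv_symm_succ, fromBlocks_apply₁₂]; rfl
    · rw [blockEquiv_symm_succ, blockEquiv_symm_succ, fromBlocks_apply₁₁,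
        diagonal_apply_ne]
      exact fun h => hab (by rw [h])

/-- Elements whose row `0` agrees with the identity lie in the commutator subgroup. -/
lemma block_mem [Fintype F] (hm : 2 ≤ m)
    (hexc : (m, Fintype.card F) ∉ ({(2, 2), (2, 3), (3, 2)} : Set (ℕ × ℕ)))
    (g : ↥(lineStab F m))
    (hrow : ∀ j : Fin m, mat g 0 j = (1 : Matrix (Fin m) (Fin m) F) 0 j) :
    g ∈ commutator ↥(lineStab F m) := by
  obtain ⟨n, rfl⟩ : ∃ n, m = n + 1 := ⟨m - 1, (Nat.succ_pred_eq_of_ne_zero (NeZero.ne m)).symm⟩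
  set M : Matrix (Fin n) (Fin n) F := (mat g).submatrix Fin.succ Fin.succ with hM_def
  have hmatg : mat g = liftBlock M := by
    ext a b
    rcases Fin.eq_zero_or_eq_succ a with rfl | ⟨a', rfl⟩
    · rw [hrow b, liftBlock_zero_row]
    · rcases Fin.eq_zero_or_eq_succ b with rfl | ⟨b', rfl⟩
      · rw [mat_col g (Fin.succ_ne_zero a'), liftBlock_col _ _ (Fin.succ_ne_zero a')]
      · rw [liftBlock_succ_succ, hM_def, submatrix_apply]
  have hdetM : M.det = 1 := by
    rw [← liftBlock_det, ← hmatg, mat_det]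
  -- the key induction using mathlib's transvection machinery
  have key : ∀ N : Matrix (Fin n) (Fin n) F, N.det = M.det →
      ∃ h : ↥(lineStab F (n + 1)), h ∈ commutator ↥(lineStab F (n + 1)) ∧ mat h = liftBlock N := by
    intro N hN
    apply diagonal_transvection_induction
      (P := fun N => ∃ h : ↥(lineStab F (n + 1)),
        h ∈ commutator ↥(lineStab F (n + 1)) ∧ mat h = liftBlock N) N
    · -- diagonal matrices of determinant 1
      intro D hD
      rw [hN, hdetM] at hD
      set d : Fin (n + 1) → F := fun i => if h : i = 0 then 1 else D (i.pred h) with hd_def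
      have hd : ∏ k, d k = 1 := by
        rw [hd_def, Fin.prod_univ_succ]
        simpa [Fin.succ_ne_zero] using hD ▸ (det_diagonal (d := D)).symm
      refine ⟨dEl d hd, ?_, by rw [mat_dEl, liftBlock_diagonal]⟩
      apply diag_mem hm hexc (Finset.univ.erase 0) (Finset.notMem_erase 0 _) d hd
      intro k hk
      have hk0 : k = 0 := by
        by_contra h
        exact hk (Finset.mem_erase.mpr ⟨h, Finset.mem_univ k⟩)
      rw [hd_def, hk0]
      simp
    · -- transvections
      intro t
      refine ⟨tEl t.i.succ t.j.succ (fun h => t.hij (Fin.succ_injective n h))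
        (Fin.succ_ne_zero t.j) t.c, tEl_mem hm hexc _ _ _ _ _, ?_⟩
      rw [mat_tEl]
      have h1 : liftBlock t.toMatrix
          = ((t.sumInl Unit).reindexEquiv (blockEquiv n)).toMatrix := by
        rw [TransvectionStruct.toMatrix_reindexEquiv, reindexAlgEquiv_apply,
          TransvectionStruct.toMatrix_sumInl, reindex_apply, liftBlock]
      rw [h1]
      rfl
    · -- products
      rintro A B ⟨gA, hgA, hA⟩ ⟨gB, hgB, hB⟩
      exact ⟨gA * gB, mul_mem hgA hgB, by rw [mat_mul, hA, hB, liftBlock_mul]⟩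
  obtain ⟨h, hmem, hmat⟩ := key M rfl
  have : g = h := mat_inj (by rw [hmatg, hmat])
  rw [this]
  exact hmem

/-- The main direction: every element with top-left entry `1` is in the commutator subgroup. -/
lemma main_mem [Fintype F] (hm : 2 ≤ m)
    (hexc : (m, Fintype.card F) ∉ ({(2, 2), (2, 3), (3, 2)} : Set (ℕ × ℕ)))
    (A : ↥(lineStab F m)) (hA : mat A 0 0 = 1) :
    A ∈ commutator ↥(lineStab F m) := by
  obtain ⟨n, rfl⟩ : ∃ n, m = n + 1 := ⟨m - 1, (Nat.succ_pred_eq_of_ne_zero (NeZero.ne m)).symm⟩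
  -- B : the matrix A with row 0 replaced by the first standard basis row
  set B : Matrix (Fin (n + 1)) (Fin (n + 1)) F :=
    Matrix.updateRow (mat A) 0 ((1 : Matrix (Fin (n + 1)) (Fin (n + 1)) F) 0) with hB_def
  have hBrow : ∀ j, B 0 j = (1 : Matrix (Fin (n + 1)) (Fin (n + 1)) F) 0 j := by
    intro j; rw [hB_def, updateRow_self]
  have hBne : ∀ i : Fin (n + 1), i ≠ 0 → ∀ j, B i j = mat A i j := by
    intro i hi j; rw [hB_def, updateRow_ne hi]
  have hBcol : ∀ i : Fin (n + 1), i ≠ 0 → B i 0 = 0 := by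
    intro i hi; rw [hBne i hi, mat_col A hi]
  have hsub : B.submatrix Fin.succ Fin.succ = (mat A).submatrix Fin.succ Fin.succ := by
    ext a b
    rw [submatrix_apply, submatrix_apply, hBne _ (Fin.succ_ne_zero a)]
  have hdet : ∀ C : Matrix (Fin (n + 1)) (Fin (n + 1)) F,
      C 0 0 = 1 → (∀ i : Fin (n + 1), i ≠ 0 → C i 0 = 0) →
      C.det = (C.submatrix Fin.succ Fin.succ).det := by
    intro C h1 h2
    rw [det_succ_column_zero, Finset.sum_eq_single 0]
    · rw [h1, Fin.val_zero, pow_zero, one_mul, one_mul, Fin.succAbove_zero]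
    · intro k _ hk
      rw [h2 k hk, mul_zero, zero_mul]
    · intro h; exact absurd (Finset.mem_univ 0) h
  have hdetB : B.det = 1 := by
    rw [hdet B (by rw [hBrow 0, one_apply_eq]) hBcol, hsub,
      ← hdet (mat A) hA (fun i hi => mat_col A hi), mat_det]
  set b : ↥(lineStab F (n + 1)) := mk B hdetB hBcol with hb_def
  have hbmem : b ∈ commutator ↥(lineStab F (n + 1)) :=
    block_mem hm hexc b (by intro j; rw [hb_def, mat_mk]; exact hBrow j)
  -- facts about b⁻¹
  have hbinv_mul : mat b * mat b⁻¹ = 1 := by rw [← mat_mul, mul_inv_cancel, mat_one]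
  have hbinv_row : ∀ j, mat b⁻¹ 0 j = (1 : Matrix (Fin (n + 1)) (Fin (n + 1)) F) 0 j := by
    intro j
    have := congrFun (congrFun hbinv_mul 0) j
    rw [mul_apply, Finset.sum_eq_single 0] at this
    · rw [← this, hb_def, mat_mk, hBrow 0, one_apply_eq, one_mul]
    · intro k _ hk
      rw [hb_def, mat_mk, hBrow k, one_apply_ne (Ne.symm hk), zero_mul]
    · intro h; exact absurd (Finset.mem_univ 0) h
  -- g = A * b⁻¹ has identity rows off 0 and 1 in the corner
  set g : ↥(lineStab F (n + 1)) := A * b⁻¹ with hg_def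
  have hgrows : ∀ i : Fin (n + 1), i ≠ 0 → ∀ j,
      mat g i j = (1 : Matrix (Fin (n + 1)) (Fin (n + 1)) F) i j := by
    intro i hi j
    have h1 : mat g i j = ∑ k, mat A i k * mat b⁻¹ k j := by
      rw [hg_def, mat_mul, mul_apply]
    have h2 : (mat b * mat b⁻¹) i j = ∑ k, mat A i k * mat b⁻¹ k j := by
      rw [mul_apply]
      exact Finset.sum_congr rfl fun k _ => by rw [hb_def, mat_mk, hBne i hi]
    rw [h1, ← h2, hbinv_mul]
  have hg00 : mat g 0 0 = 1 := by
    rw [hg_def, mat_mul, mul_apply, Finset.sum_eq_single 0]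
    · rw [hA, hbinv_row 0, one_apply_eq, one_mul]
    · intro k _ hk
      rw [mat_col (b⁻¹) hk, mul_zero]
    · intro h; exact absurd (Finset.mem_univ 0) h
  have hgmem : g ∈ commutator ↥(lineStab F (n + 1)) := by
    apply row_mem hm hexc (Finset.univ.erase 0) (Finset.notMem_erase 0 _) g hgrows hg00
    intro j hj hj0
    exact absurd (Finset.mem_erase.mpr ⟨hj0, Finset.mem_univ j⟩) hj
  have hfin : A = g * b := by rw [hg_def, inv_mul_cancel_right]
  rw [hfin]
  exact mul_mem hgmem hbmem

/- ### The easy direction -/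

lemma e00_mul (g h : ↥(lineStab F m)) :
    mat (g * h) 0 0 = mat g 0 0 * mat h 0 0 := by
  rw [mat_mul, mul_apply, Finset.sum_eq_single 0]
  · intro k _ hk
    rw [mat_col h hk, mul_zero]
  · intro h; exact absurd (Finset.mem_univ 0) h

lemma e00_commutator (g h : ↥(lineStab F m)) : mat ⁅g, h⁆ 0 0 = 1 := by
  have hg : mat g 0 0 * mat g⁻¹ 0 0 = 1 := by
    rw [← e00_mul, mul_inv_cancel, mat_one, one_apply_eq]
  have hh : mat h 0 0 * mat h⁻¹ 0 0 = 1 := by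
    rw [← e00_mul, mul_inv_cancel, mat_one, one_apply_eq]
  rw [commutatorElement_def, e00_mul, e00_mul, e00_mul]
  calc mat g 0 0 * mat h 0 0 * mat g⁻¹ 0 0 * mat h⁻¹ 0 0
      = (mat g 0 0 * mat g⁻¹ 0 0) * (mat h 0 0 * mat h⁻¹ 0 0) := by ring
    _ = 1 := by rw [hg, hh, one_mul]

/-- The subgroup of elements with top-left entry `1`. -/
def K (F : Type*) [Field F] (m : ℕ) [NeZero m] : Subgroup ↥(lineStab F m) where
  carrier := {A | mat A 0 0 = 1}
  one_mem' := by
    show mat (1 : ↥(lineStab F m)) 0 0 = 1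
    rw [mat_one, one_apply_eq]
  mul_mem' := by
    intro a b ha hb
    show mat (a * b) 0 0 = 1
    rw [e00_mul, ha, hb, one_mul]
  inv_mem' := by
    intro a ha
    show mat a⁻¹ 0 0 = 1
    have h1 : mat a 0 0 * mat a⁻¹ 0 0 = 1 := by
      rw [← e00_mul, mul_inv_cancel, mat_one, one_apply_eq]
    rw [show mat a 0 0 = 1 from ha, one_mul] at h1
    exact h1

lemma commutator_le_K : commutator ↥(lineStab F m) ≤ K F m := by
  rw [commutator_def]
  exact Subgroup.commutator_le.mpr fun g _ h _ => e00_commutator g h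

end LineStabAux

theorem stmt11 {F : Type*} [Field F] [Fintype F] {m : ℕ} [NeZero m] (hm : 2 ≤ m)
    (hexc : (m, Fintype.card F) ∉ ({(2, 2), (2, 3), (3, 2)} : Set (ℕ × ℕ))) :
    (commutator ↥(lineStab F m) : Set ↥(lineStab F m)) =
      {A : ↥(lineStab F m) |
        ((A : Matrix.SpecialLinearGroup (Fin m) F) : Matrix (Fin m) (Fin m) F) 0 0 = 1} := by
  ext A
  simp only [SetLike.mem_coe, Set.mem_setOf_eq]
  constructor
  · intro h
    exact LineStabAux.commutator_le_K h
  · intro h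
    exact LineStabAux.main_mem hm hexc A h
end
end

section
/- Let F be a finite field, m ≥ 3, and let α' : Fˣ →* ℂˣ be a nontrivial group homomorphism. Let G₀ be the subgroup of SL(m, F) consisting of all matrices A with A i 0 = 0 for every i ≠ 0. Then there exist x ∈ SL(m, F) with x ∉ G₀ and ξ ∈ G₀ such that x·ξ·x⁻¹ ∈ G₀ and α'((x·ξ·x⁻¹) 0 0) ≠ α'(ξ 0 0). (Here the (0,0) entries of elements of G₀ are nonzero, hence units of F.) -/
/-!
Pick `a ∈ Fˣ` with `α' a ≠ 1`, let `ξ = diag(a, 1, a⁻¹, 1, …)` and let `x` be the permutation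
matrix of the 3-cycle on the coordinates `0, 1, 2`; it has determinant 1 because the cycle is
even. Conjugating a diagonal matrix by a permutation matrix permutes its diagonal, so
`x ξ x⁻¹ = diag(1, a⁻¹, a, 1, …)` again stabilizes the line `F e₀`, but its corner entry is `1`
instead of `a`, while `x` itself moves `e₀` to `e₁`.
-/

noncomputable section

namespace Matrix

variable {n R : Type*} [Fintype n] [DecidableEq n]

theorem permMatrix_mul_diagonal_mul_permMatrix_inv [NonAssocSemiring R] (σ : Equiv.Perm n)
    (d : n → R) : σ.permMatrix R * diagonal d * σ⁻¹.permMatrix R = diagonal (d ∘ σ) := by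
  rw [PEquiv.toMatrix_toPEquiv_mul, PEquiv.mul_toMatrix_toPEquiv, submatrix_submatrix]
  exact submatrix_diagonal_equiv d σ

namespace SpecialLinearGroup

variable [CommRing R]

def ofPerm (σ : Equiv.Perm n) (hσ : Equiv.Perm.sign σ = 1) : SpecialLinearGroup n R :=
  ⟨σ.permMatrix R, by rw [det_permutation, hσ, Units.val_one, Int.cast_one]⟩

theorem coe_ofPerm_inv (σ : Equiv.Perm n) (hσ : Equiv.Perm.sign σ = 1) :
    ((ofPerm σ hσ)⁻¹ : SpecialLinearGroup n R) = (σ⁻¹.permMatrix R : Matrix n n R) := by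
  have hσ' : Equiv.Perm.sign σ⁻¹ = 1 := by rw [Equiv.Perm.sign_inv, hσ]
  rw [inv_eq_of_mul_eq_one_right (b := ofPerm σ⁻¹ hσ')]
  · rfl
  · refine Subtype.ext ?_
    rw [coe_mul, ofPerm, ofPerm, ← permMatrix_mul, inv_mul_cancel, permMatrix_one]
    rfl

theorem coe_ofPerm_mul_mul_inv {σ : Equiv.Perm n} (hσ : Equiv.Perm.sign σ = 1)
    {A : SpecialLinearGroup n R} {d : n → R} (hA : (A : Matrix n n R) = diagonal d) :
    ((ofPerm σ hσ * A * (ofPerm σ hσ)⁻¹ : SpecialLinearGroup n R) : Matrix n n R) =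
      diagonal (d ∘ σ) := by
  rw [coe_mul, coe_mul, coe_ofPerm_inv, hA]
  exact permMatrix_mul_diagonal_mul_permMatrix_inv σ d

end SpecialLinearGroup

end Matrix

open Matrix

section lineStab

variable {F : Type*} [Field F] {m : ℕ} [NeZero m]

theorem mem_lineStab_of_isDiag {A : SpecialLinearGroup (Fin m) F}
    (hA : (A : Matrix (Fin m) (Fin m) F).IsDiag) : A ∈ lineStab F m :=
  fun _ hi => hA hi

theorem ofPerm_notMem_lineStab {σ : Equiv.Perm (Fin m)} (hσ : Equiv.Perm.sign σ = 1)
    (h0 : σ 0 ≠ 0) : SpecialLinearGroup.ofPerm σ hσ ∉ lineStab F m := by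
  intro h
  have hi : σ.symm 0 ≠ 0 := fun h' => h0 (by simpa using congrArg σ h'.symm)
  simpa [SpecialLinearGroup.ofPerm] using h _ hi

theorem exists_conj_mem_lineStab_topLeft_eq_one (hm : 3 ≤ m) {a : F} (ha : a ≠ 0) :
    ∃ x ∉ lineStab F m, ∃ ξ ∈ lineStab F m, x * ξ * x⁻¹ ∈ lineStab F m ∧
      (ξ : Matrix (Fin m) (Fin m) F) 0 0 = a ∧
        ((x * ξ * x⁻¹ : SpecialLinearGroup (Fin m) F) : Matrix (Fin m) (Fin m) F) 0 0 = 1 := by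
  let i₁ : Fin m := ⟨1, by omega⟩
  let i₂ : Fin m := ⟨2, by omega⟩
  have h01 : (0 : Fin m) ≠ i₁ := by simp [i₁, Fin.ext_iff]
  have h02 : (0 : Fin m) ≠ i₂ := by simp [i₂, Fin.ext_iff]
  have h12 : i₁ ≠ i₂ := by simp [i₁, i₂, Fin.ext_iff]
  have hξ := SpecialLinearGroup.diag2n_coe h02 a ha
  let σ := Equiv.swap i₁ 0 * Equiv.swap i₁ i₂
  have hσ : Equiv.Perm.sign σ = 1 :=
    (Equiv.Perm.isThreeCycle_swap_mul_swap_same h01.symm h12 h02).sign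
  have hσ0 : σ 0 = i₁ := by simp [σ, Equiv.swap_apply_of_ne_of_ne h01 h02]
  have hconj := SpecialLinearGroup.coe_ofPerm_mul_mul_inv hσ hξ
  refine ⟨_, ofPerm_notMem_lineStab hσ (hσ0 ▸ h01.symm), _,
    mem_lineStab_of_isDiag (hξ ▸ isDiag_diagonal _),
    mem_lineStab_of_isDiag (hconj ▸ isDiag_diagonal _), ?_, ?_⟩
  · simp [hξ]
  · simp [hconj, hσ0, h01.symm, h12]

end lineStab

theorem stmt12_general {F : Type*} [Field F] {m : ℕ} [NeZero m] (hm : 3 ≤ m)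
    (α' : Fˣ →* ℂˣ) (hα' : α' ≠ 1) :
    ∃ x : Matrix.SpecialLinearGroup (Fin m) F, x ∉ lineStab F m ∧
      ∃ ξ ∈ lineStab F m, x * ξ * x⁻¹ ∈ lineStab F m ∧
        ∃ (h1 : ((x * ξ * x⁻¹ : Matrix.SpecialLinearGroup (Fin m) F) :
              Matrix (Fin m) (Fin m) F) 0 0 ≠ 0)
          (h2 : ((ξ : Matrix.SpecialLinearGroup (Fin m) F) :
              Matrix (Fin m) (Fin m) F) 0 0 ≠ 0),
          α' (Units.mk0 _ h1) ≠ α' (Units.mk0 _ h2) := by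
  obtain ⟨a, ha⟩ := DFunLike.ne_iff.mp hα'
  obtain ⟨x, hx, ξ, hξ, hconj, hξ00, hconj00⟩ :=
    exists_conj_mem_lineStab_topLeft_eq_one hm a.ne_zero
  have h1 : ((x * ξ * x⁻¹ : SpecialLinearGroup (Fin m) F) : Matrix (Fin m) (Fin m) F) 0 0 ≠ 0 :=
    by simp [hconj00]
  have h2 : (ξ : Matrix (Fin m) (Fin m) F) 0 0 ≠ 0 := by simp [hξ00]
  refine ⟨x, hx, ξ, hξ, hconj, h1, h2, ?_⟩
  rwa [show Units.mk0 _ h1 = 1 from Units.ext hconj00,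
    show Units.mk0 _ h2 = a from Units.ext hξ00, map_one, ne_comm]

/-- For `m ≥ 3` and a nontrivial character `α'` of `Fˣ`, there is a conjugation witness
showing (via the Higman pair detector) that the character `A ↦ α'(A 0 0)` of the point
stabilizer yields no Higman pair by radicalization. -/
theorem stmt12 {F : Type*} [Field F] [Fintype F] {m : ℕ} [NeZero m] (hm : 3 ≤ m)
    (α' : Fˣ →* ℂˣ) (hα' : α' ≠ 1) :
    ∃ x : Matrix.SpecialLinearGroup (Fin m) F, x ∉ lineStab F m ∧
      ∃ ξ ∈ lineStab F m, x * ξ * x⁻¹ ∈ lineStab F m ∧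
        ∃ (h1 : ((x * ξ * x⁻¹ : Matrix.SpecialLinearGroup (Fin m) F) :
              Matrix (Fin m) (Fin m) F) 0 0 ≠ 0)
          (h2 : ((ξ : Matrix.SpecialLinearGroup (Fin m) F) :
              Matrix (Fin m) (Fin m) F) 0 0 ≠ 0),
          α' (Units.mk0 _ h1) ≠ α' (Units.mk0 _ h2) :=
  stmt12_general hm α' hα'
end
end

section
/- Let q be a prime power with q ≡ 3 (mod 4) and set n = q + 1. Let Γ be the cyclic group of order 4 with generator g (e.g. Multiplicative (ZMod 4)). Then there exists an n×n roux B for Γ whose parameters satisfy c_1 = c_{g²} = 0 and c_g = c_{g³} = (q − 1)/2; that is, B satisfies (R1)–(R3) and B * B = (n−1) • 1 + ((q−1)/2) • (g • B) + ((q−1)/2) • (g³ • B). -/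
noncomputable section

/-- Entrywise multiplication of a matrix over the group algebra `ℂ[Γ]` by a group element. -/
def grpSmul {n : ℕ} {Γ : Type*} [Monoid Γ] (h : Γ)
    (B : Matrix (Fin n) (Fin n) (MonoidAlgebra ℂ Γ)) :
    Matrix (Fin n) (Fin n) (MonoidAlgebra ℂ Γ) :=
  fun i j => MonoidAlgebra.of ℂ Γ h * B i j

namespace Roux13

open Finset

abbrev Γ4 := Multiplicative (ZMod 4)

/-- `ee a` is the group element `g^a` inside the group algebra. -/
def ee (a : ZMod 4) : MonoidAlgebra ℂ Γ4 :=
  MonoidAlgebra.of ℂ Γ4 (Multiplicative.ofAdd a)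

lemma ee_mul (a b : ZMod 4) : ee a * ee b = ee (a + b) := by
  simp [ee, ← map_mul, ← ofAdd_add]

lemma ee_zero : ee 0 = 1 := by
  simp [ee, ofAdd_zero, MonoidAlgebra.one_def]

variable {F : Type*} [Field F] [Fintype F] [DecidableEq F]

/-- exponent map: `1` on nonzero squares, `3` on nonsquares. -/
def φ (u : F) : ZMod 4 := ((2 - quadraticChar F u : ℤ) : ZMod 4)

lemma chi_neg_one (hF4 : Fintype.card F % 4 = 3) : quadraticChar F (-1) = -1 :=
  quadraticChar_neg_one_iff_not_isSquare.mpr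
    (fun h => (FiniteField.isSquare_neg_one_iff.mp h) hF4)

lemma chi_neg (hF4 : Fintype.card F % 4 = 3) (u : F) :
    quadraticChar F (-u) = - quadraticChar F u := by
  rw [show -u = -1 * u by ring, map_mul, chi_neg_one hF4, neg_one_mul]

lemma chi_inv (u : F) : quadraticChar F u⁻¹ = quadraticChar F u := by
  rcases eq_or_ne u 0 with rfl | hu
  · simp
  · have h1 : quadraticChar F u⁻¹ * quadraticChar F u = 1 := by
      rw [← map_mul, inv_mul_cancel₀ hu, map_one]
    have h2 : quadraticChar F u * quadraticChar F u = 1 := by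
      have := quadraticChar_sq_one hu
      rwa [sq] at this
    calc quadraticChar F u⁻¹ = quadraticChar F u⁻¹ * (quadraticChar F u * quadraticChar F u) := by
          rw [h2, mul_one]
      _ = (quadraticChar F u⁻¹ * quadraticChar F u) * quadraticChar F u := by ring
      _ = quadraticChar F u := by rw [h1, one_mul]

lemma φ_neg (hF4 : Fintype.card F % 4 = 3) (u : F) (hu : u ≠ 0) : φ (-u) = - φ u := by
  unfold φ
  rw [chi_neg hF4, show -((2 - quadraticChar F u : ℤ) : ZMod 4)
      = ((-(2 - quadraticChar F u) : ℤ) : ZMod 4) from by push_cast; ring]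
  rw [ZMod.intCast_eq_intCast_iff]
  have : (2 : ℤ) - -quadraticChar F u - -(2 - quadraticChar F u) = 4 := by ring
  rw [Int.ModEq]
  omega

lemma key1 (hF2 : ringChar F ≠ 2) (a : F) (ha : a ≠ 0) :
    ∑ x : F, quadraticChar F x * quadraticChar F (x + a) = -1 := by
  have h0 : ∑ x ∈ univ.erase (0:F), quadraticChar F x * quadraticChar F (x + a)
      = ∑ x : F, quadraticChar F x * quadraticChar F (x + a) :=
    Finset.sum_erase _ (by simp)
  rw [← h0]
  have hbij : ∑ x ∈ univ.erase (0:F), quadraticChar F x * quadraticChar F (x + a)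
      = ∑ y ∈ univ.erase (1:F), quadraticChar F y := by
    refine Finset.sum_nbij' (fun x => 1 + a * x⁻¹) (fun y => a * (y - 1)⁻¹) ?_ ?_ ?_ ?_ ?_
    · intro x hx
      simp only [Finset.mem_erase, Finset.mem_univ, and_true] at hx ⊢
      intro h
      have : a * x⁻¹ = 0 := by linear_combination h
      rcases mul_eq_zero.mp this with h' | h'
      · exact ha h'
      · exact hx (inv_eq_zero.mp h')
    · intro y hy
      simp only [Finset.mem_erase, Finset.mem_univ, and_true] at hy ⊢
      exact mul_ne_zero ha (inv_ne_zero (sub_ne_zero.mpr hy))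
    · intro x hx
      simp only [Finset.mem_erase, Finset.mem_univ, and_true] at hx
      field_simp
      simp [ha]
    · intro y hy
      simp only [Finset.mem_erase, Finset.mem_univ, and_true] at hy
      have h1 : y - 1 ≠ 0 := sub_ne_zero.mpr hy
      field_simp
      ring
    · intro x hx
      simp only [Finset.mem_erase, Finset.mem_univ, and_true] at hx
      have h : 1 + a * x⁻¹ = x⁻¹ * (x + a) := by field_simp
      rw [h, map_mul, chi_inv]
  rw [hbij]
  have := Finset.add_sum_erase univ (fun y => quadraticChar F y) (Finset.mem_univ (1:F))
  rw [quadraticChar_sum_zero hF2] at this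
  simp only [map_one] at this
  linarith

lemma key2 (hF2 : ringChar F ≠ 2) (hF4 : Fintype.card F % 4 = 3) (x y : F) (hxy : x ≠ y) :
    ∑ z : F, quadraticChar F (z - x) * quadraticChar F (y - z) = 1 := by
  have h1 : ∀ z : F, quadraticChar F (y - z) = - quadraticChar F (z - y) := by
    intro z
    rw [show y - z = -(z - y) by ring, chi_neg hF4]
  have h2 : ∑ z : F, quadraticChar F (z - x) * quadraticChar F (z - y)
      = ∑ w : F, quadraticChar F w * quadraticChar F (w + (x - y)) := by
    refine Fintype.sum_equiv (Equiv.subRight x) _ _ ?_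
    intro z
    simp only [Equiv.subRight_apply]
    ring_nf
  calc ∑ z : F, quadraticChar F (z - x) * quadraticChar F (y - z)
      = - ∑ z : F, quadraticChar F (z - x) * quadraticChar F (z - y) := by
        rw [← Finset.sum_neg_distrib]
        exact Finset.sum_congr rfl fun z _ => by rw [h1 z]; ring
    _ = 1 := by rw [h2, key1 hF2 (x - y) (sub_ne_zero.mpr hxy)]; norm_num

lemma lin (u : F) (hu : u ≠ 0) (c : ZMod 4) :
    ee (c + φ u) = (((1 + quadraticChar F u : ℤ) : ℂ)/2) • ee (c+1)
      + (((1 - quadraticChar F u : ℤ) : ℂ)/2) • ee (c+3) := by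
  rcases quadraticChar_dichotomy hu with h | h <;>
    · rw [show φ u = _ from by unfold φ; rw [h], h]
      norm_num

lemma lin2 (a b : F) (ha : a ≠ 0) (hb : b ≠ 0) :
    ee (φ a + φ b)
      = (((1 + quadraticChar F a * quadraticChar F b : ℤ) : ℂ)/2) • ee 2
      + (((1 - quadraticChar F a * quadraticChar F b : ℤ) : ℂ)/2) • ee 0 := by
  have h40 : (4 : ZMod 4) = 0 := by decide
  have h62 : (6 : ZMod 4) = 2 := by decide
  rcases quadraticChar_dichotomy ha with h1 | h1 <;>
    rcases quadraticChar_dichotomy hb with h2 | h2 <;>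
    · rw [show φ a = _ from by unfold φ; rw [h1], show φ b = _ from by unfold φ; rw [h2]]
      rw [h1, h2]
      try rw [show ((2:ℤ) - 1 : ℤ) = 1 from by norm_num]
      try rw [show ((2:ℤ) - (-1) : ℤ) = 3 from by norm_num]
      push_cast
      first
      | (rw [show ((1:ZMod 4) + 1) = 2 from by decide]; norm_num)
      | (rw [show ((1:ZMod 4) + 3) = 0 from by decide]; norm_num)
      | (rw [show ((3:ZMod 4) + 1) = 0 from by decide]; norm_num)
      | (rw [show ((3:ZMod 4) + 3) = 2 from by decide]; norm_num)

/-- The Paley-type matrix over `Option F`. -/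
def B0 : Matrix (Option F) (Option F) (MonoidAlgebra ℂ Γ4) :=
  Matrix.of fun i j =>
    match i, j with
    | none, none => 0
    | none, some _ => ee 1
    | some _, none => ee 3
    | some x, some y => if x = y then 0 else ee (φ (y - x))

lemma B0_diag (i : Option F) : B0 i i = 0 := by
  rcases i with _ | x <;> simp [B0]

lemma B0_sym (hF4 : Fintype.card F % 4 = 3) (i j : Option F) (hij : i ≠ j) :
    ∃ h : Γ4, B0 i j = MonoidAlgebra.of ℂ Γ4 h ∧ B0 j i = MonoidAlgebra.of ℂ Γ4 h⁻¹ := by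
  rcases i with _ | x <;> rcases j with _ | y
  · exact absurd rfl hij
  · refine ⟨Multiplicative.ofAdd 1, rfl, ?_⟩
    show ee 3 = _
    rw [show (Multiplicative.ofAdd (1 : ZMod 4))⁻¹ = Multiplicative.ofAdd (3 : ZMod 4) from by decide]
    rfl
  · refine ⟨Multiplicative.ofAdd 3, rfl, ?_⟩
    show ee 1 = _
    rw [show (Multiplicative.ofAdd (3 : ZMod 4))⁻¹ = Multiplicative.ofAdd (1 : ZMod 4) from by decide]
    rfl
  · have hxy : x ≠ y := fun h => hij (by rw [h])
    refine ⟨Multiplicative.ofAdd (φ (y - x)), ?_, ?_⟩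
    · show (if x = y then 0 else ee (φ (y-x))) = _
      rw [if_neg hxy]; rfl
    · show (if y = x then 0 else ee (φ (x-y))) = _
      rw [if_neg (Ne.symm hxy), ← ofAdd_neg,
        show x - y = -(y - x) by ring, φ_neg hF4 _ (sub_ne_zero.mpr (Ne.symm hxy))]
      rfl

lemma coeff_sum_add (hF2 : ringChar F ≠ 2) :
    ∑ u ∈ univ.erase (0:F), (((1 + quadraticChar F u : ℤ) : ℂ)/2)
      = ((Fintype.card F : ℂ) - 1)/2 := by
  rw [← Finset.sum_div]
  congr 1
  push_cast
  rw [Finset.sum_add_distrib]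
  have h1 : ∑ _u ∈ univ.erase (0:F), (1:ℂ) = (Fintype.card F : ℂ) - 1 := by
    rw [Finset.sum_const, Finset.card_erase_of_mem (Finset.mem_univ _), Finset.card_univ]
    simp [Nat.cast_sub Fintype.card_pos]
  have h2 : ∑ u ∈ univ.erase (0:F), ((quadraticChar F u : ℤ) : ℂ) = 0 := by
    rw [Finset.sum_erase _ (by simp), ← Int.cast_sum, quadraticChar_sum_zero hF2, Int.cast_zero]
  push_cast at h2
  rw [h1, h2, add_zero]

lemma coeff_sum_sub (hF2 : ringChar F ≠ 2) :
    ∑ u ∈ univ.erase (0:F), (((1 - quadraticChar F u : ℤ) : ℂ)/2)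
      = ((Fintype.card F : ℂ) - 1)/2 := by
  rw [← Finset.sum_div]
  congr 1
  push_cast
  rw [Finset.sum_sub_distrib]
  have h1 : ∑ _u ∈ univ.erase (0:F), (1:ℂ) = (Fintype.card F : ℂ) - 1 := by
    rw [Finset.sum_const, Finset.card_erase_of_mem (Finset.mem_univ _), Finset.card_univ]
    simp [Nat.cast_sub Fintype.card_pos]
  have h2 : ∑ u ∈ univ.erase (0:F), ((quadraticChar F u : ℤ) : ℂ) = 0 := by
    rw [Finset.sum_erase _ (by simp), ← Int.cast_sum, quadraticChar_sum_zero hF2, Int.cast_zero]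
  push_cast at h2
  rw [h1, h2, sub_zero]

/-- The central sum: over nonzero `u`, `g^c * g^(φ u)` sums to `((q-1)/2) (g^(c+1) + g^(c+3))`. -/
lemma main_sum (hF2 : ringChar F ≠ 2) (c : ZMod 4) :
    ∑ u ∈ univ.erase (0:F), ee (c + φ u)
      = (((Fintype.card F : ℂ) - 1)/2) • ee (c+1) + (((Fintype.card F : ℂ) - 1)/2) • ee (c+3) := by
  rw [Finset.sum_congr rfl (fun u hu => lin u (Finset.ne_of_mem_erase hu) c)]
  rw [Finset.sum_add_distrib, ← Finset.sum_smul, ← Finset.sum_smul,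
    coeff_sum_add hF2, coeff_sum_sub hF2]

lemma B0_mul (hF2 : ringChar F ≠ 2) (hF4 : Fintype.card F % 4 = 3) :
    B0 (F := F) * B0 = (Fintype.card F : ℂ) • 1
      + (((Fintype.card F : ℂ) - 1)/2) • Matrix.of (fun i j => ee 1 * B0 i j)
      + (((Fintype.card F : ℂ) - 1)/2) • Matrix.of (fun i j => ee 3 * B0 i j) := by
  refine Matrix.ext fun i j => ?_
  rw [Matrix.mul_apply]
  simp only [Matrix.add_apply, Matrix.smul_apply, Matrix.of_apply, Matrix.one_apply]
  rcases i with _ | x <;> rcases j with _ | y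
  · -- (none, none)
    rw [Fintype.sum_option]
    have hd : (B0 (F := F)) none none = 0 := rfl
    have h13 : ∀ x : F, (B0 (F := F)) none (some x) * B0 (some x) none = 1 := fun x => by
      show ee 1 * ee 3 = 1
      rw [ee_mul, show (1 + 3 : ZMod 4) = 0 by decide, ee_zero]
    simp only [hd, zero_mul, mul_zero, zero_add, h13, Finset.sum_const, Finset.card_univ,
      if_pos rfl, smul_zero, add_zero]
    rw [Nat.cast_smul_eq_nsmul]
    simp
  · -- (none, some y)
    rw [Fintype.sum_option]
    have hd : (B0 (F := F)) none none = 0 := rfl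
    have hstep : ∀ x : F, (B0 (F := F)) none (some x) * B0 (some x) (some y)
        = if x = y then 0 else ee (1 + φ (y - x)) := fun x => by
      show ee 1 * (if x = y then 0 else ee (φ (y - x))) = _
      rcases eq_or_ne x y with rfl | h
      · simp
      · rw [if_neg h, if_neg h, ee_mul]
    simp only [hd, zero_mul, zero_add, hstep]
    have hre : ∑ x : F, (if x = y then (0 : MonoidAlgebra ℂ Γ4) else ee (1 + φ (y - x)))
        = ∑ u : F, (if u = 0 then 0 else ee (1 + φ u)) := by
      refine Fintype.sum_equiv (Equiv.subLeft y) _ _ ?_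
      intro x
      simp only [Equiv.subLeft_apply]
      rcases eq_or_ne x y with rfl | h
      · simp
      · rw [if_neg h, if_neg (sub_ne_zero.mpr (Ne.symm h))]
    have he0 : ∑ u : F, (if u = 0 then (0 : MonoidAlgebra ℂ Γ4) else ee (1 + φ u))
        = ∑ u ∈ univ.erase (0:F), ee (1 + φ u) := by
      rw [← Finset.sum_erase (s := univ) (a := (0:F))
        (f := fun u => if u = 0 then (0 : MonoidAlgebra ℂ Γ4) else ee (1 + φ u)) (by simp)]
      exact Finset.sum_congr rfl fun u hu => if_neg (Finset.ne_of_mem_erase hu)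
    rw [hre, he0, main_sum hF2 1]
    have hB1 : (B0 (F := F)) none (some y) = ee 1 := rfl
    simp only [hB1, ee_mul, reduceCtorEq, if_false, zero_smul, zero_add]
    rw [show (1 + 1 : ZMod 4) = 2 by decide, show (1 + 3 : ZMod 4) = 0 by decide,
      show (3 + 1 : ZMod 4) = 0 by decide]
    rw [smul_zero, zero_add]
  · -- (some x, none)
    rw [Fintype.sum_option]
    have hd : (B0 (F := F)) none none = 0 := rfl
    have hstep : ∀ z : F, (B0 (F := F)) (some x) (some z) * B0 (some z) none
        = if x = z then 0 else ee (3 + φ (z - x)) := fun z => by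
      show (if x = z then 0 else ee (φ (z - x))) * ee 3 = _
      rcases eq_or_ne x z with rfl | h
      · simp
      · rw [if_neg h, if_neg h, ee_mul, add_comm]
    simp only [hd, mul_zero, zero_add, hstep]
    have hre : ∑ z : F, (if x = z then (0 : MonoidAlgebra ℂ Γ4) else ee (3 + φ (z - x)))
        = ∑ u : F, (if u = 0 then 0 else ee (3 + φ u)) := by
      refine Fintype.sum_equiv (Equiv.subRight x) _ _ ?_
      intro z
      simp only [Equiv.subRight_apply]
      rcases eq_or_ne x z with rfl | h
      · simp
      · rw [if_neg h, if_neg (sub_ne_zero.mpr (Ne.symm h))]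
    have he0 : ∑ u : F, (if u = 0 then (0 : MonoidAlgebra ℂ Γ4) else ee (3 + φ u))
        = ∑ u ∈ univ.erase (0:F), ee (3 + φ u) := by
      rw [← Finset.sum_erase (s := univ) (a := (0:F))
        (f := fun u => if u = 0 then (0 : MonoidAlgebra ℂ Γ4) else ee (3 + φ u)) (by simp)]
      exact Finset.sum_congr rfl fun u hu => if_neg (Finset.ne_of_mem_erase hu)
    rw [hre, he0, main_sum hF2 3]
    have hB1 : (B0 (F := F)) (some x) none = ee 3 := rfl
    simp only [hB1, ee_mul, reduceCtorEq, if_false, zero_smul, zero_add]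
    rw [show (3 + 1 : ZMod 4) = 0 by decide, show (3 + 3 : ZMod 4) = 2 by decide,
      show (1 + 3 : ZMod 4) = 0 by decide]
    rw [smul_zero, zero_add]
  · -- (some x, some y)
    rcases eq_or_ne x y with rfl | hxy
    · -- diagonal
      rw [Fintype.sum_option]
      have h31 : (B0 (F := F)) (some x) none * B0 none (some x) = 1 := by
        show ee 3 * ee 1 = 1
        rw [ee_mul, show (3 + 1 : ZMod 4) = 0 by decide, ee_zero]
      have hstep : ∀ z : F, (B0 (F := F)) (some x) (some z) * B0 (some z) (some x)
          = if x = z then 0 else 1 := fun z => by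
        show (if x = z then 0 else ee (φ (z - x))) * (if z = x then 0 else ee (φ (x - z))) = _
        rcases eq_or_ne x z with rfl | h
        · simp
        · rw [if_neg h, if_neg (Ne.symm h), if_neg h, ee_mul,
            show x - z = -(z - x) by ring, φ_neg hF4 _ (sub_ne_zero.mpr (Ne.symm h)),
            add_neg_cancel, ee_zero]
      simp only [h31, hstep]
      have hsum : ∑ z : F, (if x = z then (0 : MonoidAlgebra ℂ Γ4) else 1)
          = (Fintype.card F - 1) • (1 : MonoidAlgebra ℂ Γ4) := by
        rw [← Finset.sum_erase (s := univ) (a := x)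
          (f := fun z => if x = z then (0 : MonoidAlgebra ℂ Γ4) else 1) (by simp),
          Finset.sum_congr rfl (fun z hz => if_neg (Ne.symm (Finset.ne_of_mem_erase hz))),
          Finset.sum_const, Finset.card_erase_of_mem (Finset.mem_univ _), Finset.card_univ]
      rw [hsum]
      have hBd : (B0 (F := F)) (some x) (some x) = 0 := by simp [B0]
      simp only [hBd, mul_zero, smul_zero, add_zero, if_pos rfl, if_true]
      rw [Nat.cast_smul_eq_nsmul,
        show Fintype.card F • (1 : MonoidAlgebra ℂ Γ4) = ((Fintype.card F - 1) + 1) • 1 from by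
          rw [Nat.sub_add_cancel Fintype.card_pos],
        succ_nsmul, add_comm]
    · -- off-diagonal
      rw [Fintype.sum_option]
      have hq2 : 2 ≤ Fintype.card F := by omega
      have h31 : (B0 (F := F)) (some x) none * B0 none (some y) = 1 := by
        show ee 3 * ee 1 = 1
        rw [ee_mul, show (3 + 1 : ZMod 4) = 0 by decide, ee_zero]
      have hstep : ∀ z : F, (B0 (F := F)) (some x) (some z) * B0 (some z) (some y)
          = if x = z then 0 else if z = y then 0 else ee (φ (z - x) + φ (y - z)) := fun z => by
        show (if x = z then 0 else ee (φ (z - x))) * (if z = y then 0 else ee (φ (y - z))) = _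
        rcases eq_or_ne x z with rfl | h1
        · simp
        · rcases eq_or_ne z y with rfl | h2
          · simp
          · rw [if_neg h1, if_neg h2, if_neg h1, if_neg h2, ee_mul]
      simp only [h31, hstep]
      have hsum1 : ∑ z : F, (if x = z then (0 : MonoidAlgebra ℂ Γ4) else if z = y then 0
            else ee (φ (z - x) + φ (y - z)))
          = ∑ z ∈ (univ.erase x).erase y, ee (φ (z - x) + φ (y - z)) := by
        rw [← Finset.sum_erase (s := univ) (a := x)
            (f := fun z => if x = z then (0 : MonoidAlgebra ℂ Γ4) else if z = y then 0
              else ee (φ (z - x) + φ (y - z))) (by simp),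
          ← Finset.sum_erase (s := univ.erase x) (a := y)
            (f := fun z => if x = z then (0 : MonoidAlgebra ℂ Γ4) else if z = y then 0
              else ee (φ (z - x) + φ (y - z))) (by simp)]
        refine Finset.sum_congr rfl fun z hz => ?_
        have hzy : z ≠ y := Finset.ne_of_mem_erase hz
        have hzx : z ≠ x := Finset.ne_of_mem_erase (Finset.mem_of_mem_erase hz)
        rw [if_neg (Ne.symm hzx), if_neg hzy]
      have hTZ : ∑ z ∈ (univ.erase x).erase y,
          (quadraticChar F (z - x) * quadraticChar F (y - z)) = 1 := by
        rw [Finset.sum_erase _ (by simp), Finset.sum_erase _ (by simp)]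
        exact key2 hF2 hF4 x y hxy
      have hTC : ∑ z ∈ (univ.erase x).erase y,
          ((quadraticChar F (z - x) : ℂ) * (quadraticChar F (y - z) : ℂ)) = 1 := by
        have := congrArg (fun t : ℤ => (t : ℂ)) hTZ
        push_cast at this
        exact this
      have hcards : ((univ.erase x).erase y).card = Fintype.card F - 2 := by
        rw [Finset.card_erase_of_mem
            (Finset.mem_erase.mpr ⟨Ne.symm hxy, Finset.mem_univ _⟩),
          Finset.card_erase_of_mem (Finset.mem_univ _), Finset.card_univ]
        omega
      have hsum2 : ∑ z ∈ (univ.erase x).erase y, ee (φ (z - x) + φ (y - z))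
          = (((Fintype.card F : ℂ) - 1)/2) • ee 2 + (((Fintype.card F : ℂ) - 3)/2) • ee 0 := by
        rw [Finset.sum_congr rfl (fun z hz => lin2 (z - x) (y - z)
          (sub_ne_zero.mpr (Finset.ne_of_mem_erase (Finset.mem_of_mem_erase hz)))
          (sub_ne_zero.mpr (Ne.symm (Finset.ne_of_mem_erase hz))))]
        rw [Finset.sum_add_distrib, ← Finset.sum_smul, ← Finset.sum_smul]
        congr 1
        · congr 1
          rw [← Finset.sum_div]
          congr 1
          push_cast
          rw [Finset.sum_add_distrib, hTC, Finset.sum_const, hcards, nsmul_eq_mul,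
            Nat.cast_sub hq2]
          push_cast
          ring
        · congr 1
          rw [← Finset.sum_div]
          congr 1
          push_cast
          rw [Finset.sum_sub_distrib, hTC, Finset.sum_const, hcards, nsmul_eq_mul,
            Nat.cast_sub hq2]
          push_cast
          ring
      rw [hsum1, hsum2]
      have hBxy : (B0 (F := F)) (some x) (some y) = ee (φ (y - x)) := by
        show (if x = y then 0 else ee (φ (y - x))) = _
        rw [if_neg hxy]
      have hne : (some x : Option F) ≠ some y := by simpa using hxy
      rw [hBxy, if_neg hne, smul_zero, zero_add, ee_mul, ee_mul]
      rcases quadraticChar_dichotomy (sub_ne_zero.mpr (Ne.symm hxy)) with h | h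
      · rw [show φ (y - x) = 1 from by unfold φ; rw [h]; decide,
          show (1 + 1 : ZMod 4) = 2 by decide, show (3 + 1 : ZMod 4) = 0 by decide,
          show (1 : MonoidAlgebra ℂ Γ4) = ee 0 from ee_zero.symm]
        match_scalars <;> ring
      · rw [show φ (y - x) = 3 from by unfold φ; rw [h]; decide,
          show (1 + 3 : ZMod 4) = 0 by decide, show (3 + 3 : ZMod 4) = 2 by decide,
          show (1 : MonoidAlgebra ℂ Γ4) = ee 0 from ee_zero.symm]
        match_scalars <;> ring

end Roux13

/-- For every prime power `q ≡ 3 (mod 4)` there is a `(q+1) × (q+1)` roux for the cyclic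
group of order `4` with parameters `c_1 = c_{g²} = 0`, `c_g = c_{g³} = (q-1)/2`. -/
theorem stmt13 (q : ℕ) (hq : IsPrimePow q) (hq4 : q % 4 = 3) :
    ∃ B : Matrix (Fin (q + 1)) (Fin (q + 1)) (MonoidAlgebra ℂ (Multiplicative (ZMod 4))),
      (∀ i, B i i = 0) ∧
      (∀ i j, i ≠ j → ∃ h : Multiplicative (ZMod 4),
        B i j = MonoidAlgebra.of ℂ (Multiplicative (ZMod 4)) h ∧
        B j i = MonoidAlgebra.of ℂ (Multiplicative (ZMod 4)) h⁻¹) ∧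
      B * B = (q : ℂ) • (1 : Matrix (Fin (q + 1)) (Fin (q + 1)) (MonoidAlgebra ℂ (Multiplicative (ZMod 4)))) +
        (((q - 1) / 2 : ℕ) : ℂ) • grpSmul (Multiplicative.ofAdd (1 : ZMod 4)) B +
        (((q - 1) / 2 : ℕ) : ℂ) • grpSmul (Multiplicative.ofAdd (3 : ZMod 4)) B := by
  obtain ⟨p, n, hp, hn, rfl⟩ := hq
  haveI : Fact p.Prime := ⟨Nat.prime_iff.mpr hp⟩
  set q := p ^ n with hqdef
  letI F := GaloisField p n
  letI : Fintype F := Fintype.ofFinite F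
  letI : DecidableEq F := Classical.decEq F
  have hcard : Fintype.card F = q := by
    rw [← Nat.card_eq_fintype_card]
    exact GaloisField.card p n hn.ne'
  have hq1 : 1 ≤ q := Nat.one_le_iff_ne_zero.mpr (by omega)
  have hodd : q % 2 = 1 := by omega
  have hchar : ringChar F = p := by
    exact ringChar.eq F p
  have hF2 : ringChar F ≠ 2 := by
    rw [hchar]
    rintro rfl
    have h2 : 2 ∣ q := dvd_pow_self 2 hn.ne'
    omega
  have hF4 : Fintype.card F % 4 = 3 := by rw [hcard]; exact hq4
  have e : Fin (q + 1) ≃ Option F :=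
    Fintype.equivOfCardEq (by simp [hcard])
  refine ⟨(Roux13.B0 (F := F)).submatrix e e, ?_, ?_, ?_⟩
  · intro i; exact Roux13.B0_diag (e i)
  · intro i j hij
    exact Roux13.B0_sym hF4 (e i) (e j) (fun h => hij (e.injective h))
  · have hmul := Roux13.B0_mul (F := F) hF2 hF4
    have hcast : (((q - 1) / 2 : ℕ) : ℂ) = ((q : ℂ) - 1)/2 := by
      have h2 : ((q - 1) / 2 : ℕ) * 2 = q - 1 := Nat.div_mul_cancel (by omega)
      have := congrArg (Nat.cast (R := ℂ)) h2
      push_cast [Nat.cast_sub hq1] at this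
      field_simp
      linear_combination this
    rw [Matrix.submatrix_mul_equiv, hmul, hcard, hcast]
    ext i j
    have he : (e i = e j) ↔ i = j := e.injective.eq_iff
    simp only [Matrix.submatrix_apply, Matrix.add_apply, Matrix.smul_apply, Matrix.of_apply,
      grpSmul, Roux13.ee, Matrix.one_apply, he]
end
end
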